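/- arXiv:2209.13438 — 8 statements merged into one kernel-verified Lean document; each statement's English description precedes it below -/
import Mathlib

section
/- Let n and k be positive integers, let p ∈ [0,1] and let y > 0. Let X be a binomial random variable with parameters (n, p) and let Y be a Poisson random variable with parameter y·n/k. Then d_TV(L(X), L(Y)) ≤ min{p, p²·n} + (n/k)·|y − k·p|. -/
/-- Total variation distance between two (countably supported) probability mass
functions, `d_TV(ν₁, ν₂) = (1/2)·Σ_x |ν₁(x) − ν₂(x)|`. -/
noncomputable def dTV {E : Type*} (ν₁ ν₂ : E → ℝ) : ℝ := (1 / 2) * ∑' x, |ν₁ x - ν₂ x|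
/-- The binomial probability mass function with parameters `n` and `p`. -/
noncomputable def binomPMF (n : ℕ) (p : ℝ) : ℕ → ℝ :=
  fun m => (n.choose m : ℝ) * p ^ m * (1 - p) ^ (n - m)
/-- The Poisson probability mass function with parameter `r`. -/
noncomputable def poissonPMF (r : ℝ) : ℕ → ℝ :=
  fun m => Real.exp (-r) * r ^ m / (Nat.factorial m : ℝ)

open Finset

open Finset

noncomputable def psum (l : ℝ) (k : ℕ) : ℝ := ∑ i ∈ Finset.range k, l ^ i / (i.factorial : ℝ)

noncomputable def ptail (l : ℝ) (k : ℕ) : ℝ := ∑' t : ℕ, l ^ (t + k) / ((t + k).factorial : ℝ)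

lemma summable_exp_series (l : ℝ) : Summable (fun i : ℕ => l ^ i / (i.factorial : ℝ)) :=
  Real.summable_pow_div_factorial l

lemma exp_eq_tsum' (l : ℝ) : Real.exp l = ∑' i : ℕ, l ^ i / (i.factorial : ℝ) := by
  rw [Real.exp_eq_exp_ℝ, NormedSpace.exp_eq_tsum_div]

lemma summable_ptail (l : ℝ) (k : ℕ) :
    Summable (fun t : ℕ => l ^ (t + k) / ((t + k).factorial : ℝ)) :=
  (summable_nat_add_iff k).2 (summable_exp_series l)

lemma psum_add_ptail (l : ℝ) (k : ℕ) : psum l k + ptail l k = Real.exp l := by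
  rw [psum, ptail, exp_eq_tsum']
  exact Summable.sum_add_tsum_nat_add k (summable_exp_series l)

lemma ptail_eq (l : ℝ) (k : ℕ) : ptail l k = Real.exp l - psum l k := by
  have := psum_add_ptail l k; linarith

lemma psum_succ (l : ℝ) (k : ℕ) : psum l (k + 1) = psum l k + l ^ k / (k.factorial : ℝ) := by
  rw [psum, psum, Finset.sum_range_succ]

lemma ptail_succ (l : ℝ) (k : ℕ) : ptail l (k + 1) = ptail l k - l ^ k / (k.factorial : ℝ) := by
  rw [ptail_eq, ptail_eq, psum_succ]; ring

lemma ptail_nonneg {l : ℝ} (hl : 0 ≤ l) (k : ℕ) : 0 ≤ ptail l k := by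
  refine tsum_nonneg fun t => ?_
  positivity

lemma psum_nonneg {l : ℝ} (hl : 0 ≤ l) (k : ℕ) : 0 ≤ psum l k := by
  refine Finset.sum_nonneg fun i _ => ?_
  positivity

lemma ptail_mono_mul {l : ℝ} (hl : 0 < l) (k : ℕ) :
    (k : ℝ) * ptail l (k + 1) ≤ l * ptail l k := by
  rw [ptail, ptail, ← tsum_mul_left, ← tsum_mul_left]
  refine Summable.tsum_le_tsum (fun t => ?_) ((summable_ptail l (k+1)).mul_left _)
    ((summable_ptail l k).mul_left _)
  have h1 : l * (l ^ (t + k) / ((t + k).factorial : ℝ)) = l ^ (t + (k+1)) / ((t+k).factorial : ℝ) := by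
    have ht : t + (k+1) = (t+k)+1 := by ring
    rw [ht, pow_succ]; ring
  rw [h1, mul_div_assoc']
  have hfac : ((t + (k+1)).factorial : ℝ) = ((t + k + 1) : ℕ) * ((t+k).factorial : ℝ) := by
    have : t + (k+1) = (t + k) + 1 := by ring
    rw [this, Nat.factorial_succ]
    push_cast; ring
  have hpow : (0:ℝ) < l ^ (t + (k+1)) := pow_pos hl _
  rw [div_le_div_iff₀ (by positivity) (by positivity), hfac]
  have hk : (k:ℝ) ≤ ((t + k + 1 : ℕ) : ℝ) := by push_cast; linarith [Nat.cast_nonneg (α := ℝ) t]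
  have hfn : (0:ℝ) ≤ l ^ (t + (k+1)) * ((t+k).factorial : ℝ) := by positivity
  nlinarith [mul_le_mul_of_nonneg_right hk hfn]


lemma poisson_eq (l : ℝ) (m : ℕ) :
    poissonPMF l m = Real.exp (-l) * (l ^ m / (m.factorial : ℝ)) := by
  rw [poissonPMF]; ring

lemma summable_poisson (l : ℝ) : Summable (poissonPMF l) := by
  have : (poissonPMF l) = fun m => Real.exp (-l) * (l ^ m / (m.factorial : ℝ)) := by
    funext m; exact poisson_eq l m
  rw [this]
  exact (summable_exp_series l).mul_left _

lemma tsum_poisson (l : ℝ) : ∑' m, poissonPMF l m = 1 := by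
  have : ∑' m, poissonPMF l m = Real.exp (-l) * ∑' m, l ^ m / (m.factorial : ℝ) := by
    rw [← tsum_mul_left]; exact tsum_congr (poisson_eq l)
  rw [this, ← exp_eq_tsum', ← Real.exp_add]
  simp

lemma poisson_nonneg {l : ℝ} (hl : 0 ≤ l) (m : ℕ) : 0 ≤ poissonPMF l m := by
  rw [poissonPMF]; positivity

lemma binom_nonneg {p : ℝ} (hp0 : 0 ≤ p) (hp1 : p ≤ 1) (n m : ℕ) : 0 ≤ binomPMF n p m := by
  rw [binomPMF]
  have : (0:ℝ) ≤ 1 - p := by linarith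
  positivity

lemma binom_eq_zero {n m : ℕ} (h : n < m) (p : ℝ) : binomPMF n p m = 0 := by
  rw [binomPMF, Nat.choose_eq_zero_of_lt h]; simp

lemma sum_binom (n : ℕ) (p : ℝ) : ∑ m ∈ range (n + 1), binomPMF n p m = 1 := by
  have h := add_pow p (1 - p) n
  have h2 : p + (1 - p) = 1 := by ring
  rw [h2, one_pow] at h
  rw [h]
  refine Finset.sum_congr rfl fun m _ => ?_
  rw [binomPMF]; ring

lemma summable_binom (n : ℕ) (p : ℝ) : Summable (binomPMF n p) := by
  refine summable_of_ne_finset_zero (s := range (n + 1)) fun m hm => ?_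
  exact binom_eq_zero (by simpa using Nat.lt_of_succ_le (Nat.succ_le_of_lt (by simpa [Nat.lt_succ_iff, not_le] using hm))) p

lemma tsum_binom (n : ℕ) (p : ℝ) : ∑' m, binomPMF n p m = 1 := by
  rw [tsum_eq_sum (s := range (n+1)) fun m hm => binom_eq_zero (by simpa [Nat.lt_succ_iff, not_le] using hm) p]
  exact sum_binom n p

-- dTV lemmas
lemma dTV_comm {E : Type*} (f g : E → ℝ) : dTV f g = dTV g f := by
  rw [dTV, dTV]
  congr 1
  exact tsum_congr fun x => abs_sub_comm _ _

lemma dTV_triangle {E : Type*} (f g h : E → ℝ)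
    (h1 : Summable fun x => |f x - g x|) (h2 : Summable fun x => |g x - h x|) :
    dTV f h ≤ dTV f g + dTV g h := by
  rw [dTV, dTV, dTV, ← mul_add, ← Summable.tsum_add h1 h2]
  have hle : ∀ x, |f x - h x| ≤ |f x - g x| + |g x - h x| := fun x => by
    have := abs_sub_le (f x) (g x) (h x); linarith
  have hs : Summable fun x => |f x - h x| :=
    Summable.of_nonneg_of_le (fun x => abs_nonneg _) hle (h1.add h2)
  have := Summable.tsum_le_tsum hle hs (h1.add h2)
  linarith

lemma dTV_poisson_le {a b : ℝ} (ha : 0 ≤ a) (hab : a ≤ b) :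
    dTV (poissonPMF a) (poissonPMF b) ≤ b - a := by
  set u : ℕ → ℝ := fun m => (Real.exp (-a) - Real.exp (-b)) * (a ^ m / (m.factorial : ℝ)) with hu
  set v : ℕ → ℝ := fun m => Real.exp (-b) * (b ^ m / (m.factorial : ℝ) - a ^ m / (m.factorial : ℝ)) with hv
  have hexp : Real.exp (-b) ≤ Real.exp (-a) := Real.exp_le_exp.2 (by linarith)
  have hterm : ∀ m, |poissonPMF a m - poissonPMF b m| ≤ u m + v m := by
    intro m
    have heq : poissonPMF a m - poissonPMF b m = u m - v m := by
      rw [poisson_eq, poisson_eq, hu, hv]; ring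
    rw [heq]
    have hu0 : 0 ≤ u m := by
      rw [hu]
      have : (0:ℝ) ≤ a ^ m / (m.factorial : ℝ) := by positivity
      nlinarith
    have hv0 : 0 ≤ v m := by
      rw [hv]
      have hpow : a ^ m ≤ b ^ m := pow_le_pow_left₀ ha hab m
      have : (0:ℝ) < (m.factorial : ℝ) := by positivity
      have h2 : a ^ m / (m.factorial : ℝ) ≤ b ^ m / (m.factorial : ℝ) :=
        by gcongr
      nlinarith [Real.exp_nonneg (-b)]
    calc |u m - v m| ≤ |u m| + |v m| := abs_sub _ _
      _ = u m + v m := by rw [abs_of_nonneg hu0, abs_of_nonneg hv0]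
  have hsu : Summable u := (summable_exp_series a).mul_left _
  have hsv : Summable v := ((summable_exp_series b).sub (summable_exp_series a)).mul_left _
  have htu : ∑' m, u m = (Real.exp (-a) - Real.exp (-b)) * Real.exp a := by
    rw [hu, tsum_mul_left, ← exp_eq_tsum']
  have htv : ∑' m, v m = Real.exp (-b) * (Real.exp b - Real.exp a) := by
    rw [hv, tsum_mul_left, Summable.tsum_sub (summable_exp_series b) (summable_exp_series a),
      ← exp_eq_tsum', ← exp_eq_tsum']
  have habs : Summable fun m => |poissonPMF a m - poissonPMF b m| :=
    Summable.of_nonneg_of_le (fun m => abs_nonneg _) hterm (hsu.add hsv)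
  have hts := Summable.tsum_le_tsum hterm habs (hsu.add hsv)
  rw [Summable.tsum_add hsu hsv, htu, htv] at hts
  rw [dTV]
  have key : (Real.exp (-a) - Real.exp (-b)) * Real.exp a + Real.exp (-b) * (Real.exp b - Real.exp a)
      = 2 * (1 - Real.exp (a - b)) := by
    have e1 : Real.exp (-a) * Real.exp a = 1 := by rw [← Real.exp_add]; simp
    have e2 : Real.exp (-b) * Real.exp b = 1 := by rw [← Real.exp_add]; simp
    have e3 : Real.exp (-b) * Real.exp a = Real.exp (a - b) := by rw [← Real.exp_add]; ring_nf
    nlinarith [e1, e2, e3]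
  have hfin : 1 - Real.exp (a - b) ≤ b - a := by
    have := Real.add_one_le_exp (a - b); linarith
  nlinarith [hts, key, hfin]

lemma dTV_poisson_abs {a b : ℝ} (ha : 0 ≤ a) (hb : 0 ≤ b) :
    dTV (poissonPMF a) (poissonPMF b) ≤ |a - b| := by
  rcases le_total a b with h | h
  · calc dTV (poissonPMF a) (poissonPMF b) ≤ b - a := dTV_poisson_le ha h
      _ ≤ |a - b| := by rw [abs_sub_comm]; exact le_abs_self _
  · rw [dTV_comm]
    calc dTV (poissonPMF b) (poissonPMF a) ≤ a - b := dTV_poisson_le hb h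
      _ ≤ |a - b| := le_abs_self _
-- Part E : Stein-Chen solution
noncomputable def hfun (l : ℝ) (k : ℕ) : ℝ := ((k - 1).factorial : ℝ) / l ^ k * psum l k

noncomputable def Hfun (l : ℝ) (k : ℕ) : ℝ := ((k - 1).factorial : ℝ) / l ^ k * ptail l k

noncomputable def gs (l : ℝ) (j : ℕ) : ℕ → ℝ := fun k =>
  if k = 0 then 0 else if k ≤ j then -poissonPMF l j * hfun l k else poissonPMF l j * Hfun l k

lemma psum_one (l : ℝ) : psum l 1 = 1 := by simp [psum]

lemma fact_succ_cast (r : ℕ) : ((r+1).factorial : ℝ) = ((r:ℝ)+1) * (r.factorial : ℝ) := by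
  rw [Nat.factorial_succ]; push_cast; ring

lemma idA {l : ℝ} (hl : l ≠ 0) (r : ℕ) :
    l * hfun l (r+2) - ((r:ℝ)+1) * hfun l (r+1) = 1 := by
  have e1 : (r+2) - 1 = r+1 := rfl
  have e2 : (r+1) - 1 = r := rfl
  rw [hfun, hfun, e1, e2, psum_succ l (r+1), fact_succ_cast]
  have hf : (r.factorial : ℝ) ≠ 0 := by positivity
  have hf1 : ((r+1).factorial : ℝ) ≠ 0 := by positivity
  field_simp
  ring

lemma idB {l : ℝ} (hl : l ≠ 0) (r : ℕ) :
    l * Hfun l (r+2) - ((r:ℝ)+1) * Hfun l (r+1) = -1 := by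
  have e1 : (r+2) - 1 = r+1 := rfl
  have e2 : (r+1) - 1 = r := rfl
  rw [Hfun, Hfun, e1, e2, ptail_succ l (r+1), fact_succ_cast]
  have hf : (r.factorial : ℝ) ≠ 0 := by positivity
  field_simp
  ring

lemma idC {l : ℝ} (hl : l ≠ 0) (r : ℕ) :
    l * Hfun l (r+2) + ((r:ℝ)+1) * hfun l (r+1)
      = ((r+1).factorial : ℝ) / l ^ (r+1) * Real.exp l - 1 := by
  have e1 : (r+2) - 1 = r+1 := rfl
  have e2 : (r+1) - 1 = r := rfl
  rw [Hfun, hfun, e1, e2, ptail_eq, psum_succ l (r+1), fact_succ_cast]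
  have hf : (r.factorial : ℝ) ≠ 0 := by positivity
  field_simp
  ring

lemma poisson_zero (l : ℝ) : poissonPMF l 0 = Real.exp (-l) := by simp [poissonPMF]

lemma exp_neg_mul_exp (l : ℝ) : Real.exp (-l) * Real.exp l = 1 := by
  rw [← Real.exp_add]; simp

lemma stein_single {l : ℝ} (hl : 0 < l) (j m : ℕ) :
    l * gs l j (m+1) - (m:ℝ) * gs l j m
      = (if m = j then 1 else 0) - poissonPMF l j := by
  have hl' : l ≠ 0 := ne_of_gt hl
  cases m with
  | zero =>
    simp only [Nat.cast_zero, zero_mul, sub_zero, zero_add]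
    cases j with
    | zero =>
      have : gs l 0 1 = poissonPMF l 0 * Hfun l 1 := by
        rw [gs]; norm_num
      rw [this, poisson_zero]
      have hH : Hfun l 1 = (Real.exp l - 1) / l := by
        rw [Hfun]
        have : (1:ℕ) - 1 = 0 := rfl
        rw [this, ptail_eq, psum_one]
        simp [Nat.factorial]
        ring
      rw [hH]
      have h1 := exp_neg_mul_exp l
      rw [if_pos rfl]
      field_simp
      linear_combination h1
    | succ jj =>
      have : gs l (jj+1) 1 = -poissonPMF l (jj+1) * hfun l 1 := by
        rw [gs]; simp [Nat.succ_le_succ, Nat.le_add_left]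
      rw [this]
      have hh : hfun l 1 = 1 / l := by
        rw [hfun]
        have : (1:ℕ) - 1 = 0 := rfl
        rw [this, psum_one]
        simp [Nat.factorial]
      rw [hh]
      have : ¬ ((0:ℕ) = jj + 1) := by omega
      rw [if_neg this]
      field_simp
      ring
  | succ r =>
    rcases lt_trichotomy (r+1) j with hc | hc | hc
    · -- r+1 < j : both ≤ j
      have g1 : gs l j (r+2) = -poissonPMF l j * hfun l (r+2) := by
        rw [gs]; rw [if_neg (by omega), if_pos (by omega)]
      have g2 : gs l j (r+1) = -poissonPMF l j * hfun l (r+1) := by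
        rw [gs]; rw [if_neg (by omega), if_pos (by omega)]
      rw [if_neg (by omega)]
      have hA := idA hl' r
      have hcast : ((r+1 : ℕ) : ℝ) = (r:ℝ) + 1 := by push_cast; ring
      rw [g1, g2, hcast]
      linear_combination (-poissonPMF l j) * hA
    · -- r+1 = j
      subst hc
      have g1 : gs l (r+1) (r+2) = poissonPMF l (r+1) * Hfun l (r+2) := by
        rw [gs]; rw [if_neg (by omega), if_neg (by omega)]
      have g2 : gs l (r+1) (r+1) = -poissonPMF l (r+1) * hfun l (r+1) := by
        rw [gs]; rw [if_neg (by omega), if_pos (by omega)]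
      rw [if_pos rfl, g1, g2]
      have hC := idC hl' r
      have hq : poissonPMF l (r+1) * (((r+1).factorial : ℝ) / l ^ (r+1) * Real.exp l) = 1 := by
        rw [poissonPMF]
        have hf1 : ((r+1).factorial : ℝ) ≠ 0 := by positivity
        have h1 := exp_neg_mul_exp l
        field_simp
        linear_combination h1
      have hcast : ((r+1 : ℕ) : ℝ) = (r:ℝ) + 1 := by push_cast; ring
      rw [hcast]
      linear_combination (poissonPMF l (r+1)) * hC + hq
    · -- j < r+1 : both > j branch
      have g1 : gs l j (r+2) = poissonPMF l j * Hfun l (r+2) := by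
        rw [gs]; rw [if_neg (by omega), if_neg (by omega)]
      have g2 : gs l j (r+1) = poissonPMF l j * Hfun l (r+1) := by
        rw [gs]; rw [if_neg (by omega), if_neg (by omega)]
      rw [if_neg (by omega), g1, g2]
      have hB := idB hl' r
      have hcast : ((r+1 : ℕ) : ℝ) = (r:ℝ) + 1 := by push_cast; ring
      rw [hcast]
      linear_combination (poissonPMF l j) * hB

lemma l_mul_psum (l : ℝ) (m : ℕ) :
    l * psum l m = ∑ i ∈ range (m+1), (i:ℝ) * (l ^ i / (i.factorial : ℝ)) := by
  rw [Finset.sum_range_succ' (fun i => (i:ℝ) * (l ^ i / (i.factorial : ℝ))) m]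
  simp only [Nat.cast_zero, zero_mul, add_zero]
  rw [psum, Finset.mul_sum]
  refine Finset.sum_congr rfl fun i _ => ?_
  have hf : ((i+1).factorial : ℝ) = ((i:ℝ)+1) * (i.factorial : ℝ) := fact_succ_cast i
  have hf0 : (i.factorial : ℝ) ≠ 0 := by positivity
  have hf1 : ((i:ℝ)+1) ≠ 0 := by positivity
  push_cast
  rw [hf, pow_succ]
  field_simp

lemma hfun_mono {l : ℝ} (hl : 0 < l) (r : ℕ) : hfun l (r+1) ≤ hfun l (r+2) := by
  have key : l * psum l (r+1) ≤ ((r:ℝ)+1) * psum l (r+2) := by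
    rw [l_mul_psum, psum, Finset.mul_sum]
    refine Finset.sum_le_sum fun i hi => ?_
    have hi' : i ≤ r + 1 := by
      have := Finset.mem_range.1 hi; omega
    have : (i:ℝ) ≤ (r:ℝ) + 1 := by
      have h := (Nat.cast_le (α := ℝ)).2 hi'
      push_cast at h; linarith
    have hnn : (0:ℝ) ≤ l ^ i / (i.factorial : ℝ) := by positivity
    nlinarith
  have e1 : (r+1) - 1 = r := rfl
  have e2 : (r+2) - 1 = r+1 := rfl
  have h1 : hfun l (r+1) = (r.factorial : ℝ) / l ^ (r+2) * (l * psum l (r+1)) := by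
    rw [hfun, e1, pow_succ]
    have : l ≠ 0 := ne_of_gt hl
    field_simp
    ring
  have h2 : hfun l (r+2) = (r.factorial : ℝ) / l ^ (r+2) * (((r:ℝ)+1) * psum l (r+2)) := by
    rw [hfun, e2, fact_succ_cast]
    ring
  rw [h1, h2]
  apply mul_le_mul_of_nonneg_left key
  positivity

lemma Hfun_anti {l : ℝ} (hl : 0 < l) (r : ℕ) : Hfun l (r+2) ≤ Hfun l (r+1) := by
  have key := ptail_mono_mul hl (r+1)
  have hcast : ((r+1 : ℕ) : ℝ) = (r:ℝ) + 1 := by push_cast; ring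
  rw [hcast] at key
  have e1 : (r+1) - 1 = r := rfl
  have e2 : (r+2) - 1 = r+1 := rfl
  have h1 : Hfun l (r+1) = (r.factorial : ℝ) / l ^ (r+2) * (l * ptail l (r+1)) := by
    rw [Hfun, e1, pow_succ]
    have : l ≠ 0 := ne_of_gt hl
    field_simp
    ring
  have h2 : Hfun l (r+2) = (r.factorial : ℝ) / l ^ (r+2) * (((r:ℝ)+1) * ptail l (r+2)) := by
    rw [Hfun, e2, fact_succ_cast]
    ring
  rw [h1, h2]
  apply mul_le_mul_of_nonneg_left key
  positivity

lemma diag_bound {l : ℝ} (hl : 0 < l) (r : ℕ) :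
    poissonPMF l (r+1) * Hfun l (r+2) + poissonPMF l (r+1) * hfun l (r+1)
      ≤ (1 - Real.exp (-l)) / l := by
  have hl' : l ≠ 0 := ne_of_gt hl
  have hf0 : (r.factorial : ℝ) ≠ 0 := by positivity
  have hf1 : ((r+1).factorial : ℝ) ≠ 0 := by positivity
  have e1 : (r+1) - 1 = r := rfl
  have e2 : (r+2) - 1 = r+1 := rfl
  have eq1 : poissonPMF l (r+1) * Hfun l (r+2) = Real.exp (-l) / l * ptail l (r+2) := by
    rw [poissonPMF, Hfun, e2]
    field_simp
    ring
  have eq2 : poissonPMF l (r+1) * hfun l (r+1)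
      = Real.exp (-l) * ((1 / ((r:ℝ)+1)) * psum l (r+1)) := by
    rw [poissonPMF, hfun, e1, fact_succ_cast]
    have : ((r:ℝ)+1) ≠ 0 := by positivity
    field_simp
  have key : (1 / ((r:ℝ)+1)) * psum l (r+1) ≤ (1 / l) * (psum l (r+2) - 1) := by
    have hps : psum l (r+2) - 1 = ∑ i ∈ range (r+1), l ^ (i+1) / ((i+1).factorial : ℝ) := by
      have := Finset.sum_range_succ' (fun i => l ^ i / (i.factorial : ℝ)) (r+1)
      rw [psum, this]
      simp [Nat.factorial]
    rw [hps, psum, Finset.mul_sum, Finset.mul_sum]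
    refine Finset.sum_le_sum fun i hi => ?_
    have hi' : i + 1 ≤ r + 1 := by simpa [Nat.lt_succ_iff] using Finset.mem_range.1 hi
    have hfi : ((i+1).factorial : ℝ) = ((i:ℝ)+1) * (i.factorial : ℝ) := fact_succ_cast i
    have h1 : (1:ℝ) / l * (l ^ (i+1) / ((i+1).factorial : ℝ)) = l ^ i / (((i:ℝ)+1) * (i.factorial : ℝ)) := by
      rw [hfi, pow_succ]
      field_simp
    have h2 : (1:ℝ) / ((r:ℝ)+1) * (l ^ i / (i.factorial : ℝ)) = l ^ i / (((r:ℝ)+1) * (i.factorial : ℝ)) := by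
      have : ((r:ℝ)+1) ≠ 0 := by positivity
      field_simp
    rw [h1, h2, div_le_div_iff₀ (by positivity) (by positivity)]
    have hle : ((i:ℝ)+1) ≤ (r:ℝ)+1 := by
      have : ((i+1 : ℕ):ℝ) ≤ ((r+1 : ℕ):ℝ) := Nat.cast_le.2 hi'
      push_cast at this; linarith
    have hnn : (0:ℝ) ≤ l ^ i * (i.factorial : ℝ) := by positivity
    nlinarith [hle, hnn]
  have step : Real.exp (-l) * ((1 / ((r:ℝ)+1)) * psum l (r+1))
      ≤ Real.exp (-l) * ((1 / l) * (psum l (r+2) - 1)) :=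
    mul_le_mul_of_nonneg_left key (Real.exp_nonneg _)
  have hsum := psum_add_ptail l (r+2)
  have hfin : Real.exp (-l) / l * ptail l (r+2) + Real.exp (-l) * ((1 / l) * (psum l (r+2) - 1))
      = (1 - Real.exp (-l)) / l := by
    have h1 := exp_neg_mul_exp l
    field_simp
    linear_combination Real.exp (-l) * hsum + h1
  rw [eq1, eq2]
  linarith [step, hfin]

lemma C_nonneg {l : ℝ} (hl : 0 < l) : 0 ≤ (1 - Real.exp (-l)) / l := by
  have : Real.exp (-l) ≤ 1 := by
    rw [show (1:ℝ) = Real.exp 0 by simp]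
    exact Real.exp_le_exp.2 (by linarith)
  apply div_nonneg (by linarith) (le_of_lt hl)

lemma gs_delta_ne {l : ℝ} (hl : 0 < l) {j k : ℕ} (hk : 1 ≤ k) (hjk : j ≠ k) :
    gs l j (k+1) - gs l j k ≤ 0 := by
  have hq : 0 ≤ poissonPMF l j := poisson_nonneg (le_of_lt hl) j
  cases k with
  | zero => omega
  | succ r =>
    rcases lt_or_gt_of_ne hjk with hc | hc
    · -- j < r+1 : both > j
      have g1 : gs l j (r+2) = poissonPMF l j * Hfun l (r+2) := by
        rw [gs]; rw [if_neg (by omega), if_neg (by omega)]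
      have g2 : gs l j (r+1) = poissonPMF l j * Hfun l (r+1) := by
        rw [gs]; rw [if_neg (by omega), if_neg (by omega)]
      rw [g1, g2]
      nlinarith [Hfun_anti hl r]
    · -- r+1 < j : both ≤ j
      have g1 : gs l j (r+2) = -poissonPMF l j * hfun l (r+2) := by
        rw [gs]; rw [if_neg (by omega), if_pos (by omega)]
      have g2 : gs l j (r+1) = -poissonPMF l j * hfun l (r+1) := by
        rw [gs]; rw [if_neg (by omega), if_pos (by omega)]
      rw [g1, g2]
      nlinarith [hfun_mono hl r]

lemma gs_delta {l : ℝ} (hl : 0 < l) (j : ℕ) {k : ℕ} (hk : 1 ≤ k) :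
    gs l j (k+1) - gs l j k ≤ (1 - Real.exp (-l)) / l := by
  by_cases hjk : j = k
  · subst hjk
    cases j with
    | zero => omega
    | succ r =>
      have g1 : gs l (r+1) (r+2) = poissonPMF l (r+1) * Hfun l (r+2) := by
        rw [gs]; rw [if_neg (by omega), if_neg (by omega)]
      have g2 : gs l (r+1) (r+1) = -poissonPMF l (r+1) * hfun l (r+1) := by
        rw [gs]; rw [if_neg (by omega), if_pos (by omega)]
      rw [g1, g2]
      have := diag_bound hl r
      linarith
  · exact le_trans (gs_delta_ne hl hk hjk) (C_nonneg hl)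

lemma steinA {l : ℝ} (hl : 0 < l) (A : Finset ℕ) (m : ℕ) :
    l * (∑ j ∈ A, gs l j (m+1)) - (m:ℝ) * (∑ j ∈ A, gs l j m)
      = (if m ∈ A then 1 else 0) - ∑ j ∈ A, poissonPMF l j := by
  classical
  rw [Finset.mul_sum, Finset.mul_sum, ← Finset.sum_sub_distrib]
  have : ∀ j ∈ A, l * gs l j (m+1) - (m:ℝ) * gs l j m
      = (if m = j then 1 else 0) - poissonPMF l j := fun j _ => stein_single hl j m
  rw [Finset.sum_congr rfl this, Finset.sum_sub_distrib, Finset.sum_ite_eq A m (fun _ => (1:ℝ))]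

lemma deltaA {l : ℝ} (hl : 0 < l) (A : Finset ℕ) {k : ℕ} (hk : 1 ≤ k) :
    (∑ j ∈ A, gs l j (k+1)) - ∑ j ∈ A, gs l j k ≤ (1 - Real.exp (-l)) / l := by
  classical
  rw [← Finset.sum_sub_distrib]
  calc ∑ j ∈ A, (gs l j (k+1) - gs l j k)
      ≤ ∑ j ∈ A, (if j = k then (1 - Real.exp (-l)) / l else 0) := by
        refine Finset.sum_le_sum fun j _ => ?_
        by_cases hjk : j = k
        · rw [if_pos hjk]; subst hjk; exact gs_delta hl j hk
        · rw [if_neg hjk]; exact gs_delta_ne hl hk hjk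
    _ = if k ∈ A then (1 - Real.exp (-l)) / l else 0 := Finset.sum_ite_eq' A k _
    _ ≤ (1 - Real.exp (-l)) / l := by
        split
        · exact le_rfl
        · exact C_nonneg hl

lemma binom_succ_mul (N : ℕ) (p : ℝ) (r : ℕ) :
    binomPMF (N+1) p (r+1) * ((r:ℝ)+1) = ((N:ℝ)+1) * p * binomPMF N p r := by
  rw [binomPMF, binomPMF]
  have hsub : N + 1 - (r + 1) = N - r := by omega
  rw [hsub]
  have hch : (N+1) * N.choose r = (N+1).choose (r+1) * (r+1) := Nat.add_one_mul_choose_eq N r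
  have hc : (((N+1).choose (r+1) : ℝ)) * ((r:ℝ)+1) = ((N:ℝ)+1) * ((N.choose r : ℝ)) := by
    have := congrArg (Nat.cast (R := ℝ)) hch
    push_cast at this
    linarith
  have hpow : p ^ (r+1) = p ^ r * p := pow_succ p r
  rw [hpow]
  linear_combination ((p ^ r * p) * (1 - p) ^ (N - r)) * hc

lemma binom_pascal (N : ℕ) (p : ℝ) {r : ℕ} (hr : r < N + 1) :
    binomPMF (N+1) p (r+1) = p * binomPMF N p r + (1-p) * binomPMF N p (r+1) := by
  rcases Nat.lt_or_ge r N with h | h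
  · have hsub1 : N + 1 - (r+1) = N - r := by omega
    have hsub2 : N - r = (N - (r+1)) + 1 := by omega
    rw [binomPMF, binomPMF, binomPMF, hsub1]
    have hc : ((N+1).choose (r+1) : ℝ) = (N.choose r : ℝ) + (N.choose (r+1) : ℝ) := by
      exact_mod_cast congrArg (Nat.cast (R := ℝ)) (Nat.choose_succ_succ N r)
    rw [hc, hsub2, pow_succ, pow_succ]
    ring
  · have hrN : r = N := by omega
    subst hrN
    rw [binomPMF, binomPMF, binomPMF]
    have h0 : r.choose (r+1) = 0 := Nat.choose_eq_zero_of_lt (by omega)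
    have hsub : r + 1 - (r + 1) = 0 := by omega
    have hsub2 : r - r = 0 := by omega
    rw [h0, hsub, hsub2, Nat.choose_self, Nat.choose_self, pow_succ]
    push_cast
    ring

lemma binom_zero_succ (N : ℕ) (p : ℝ) : binomPMF (N+1) p 0 = (1-p) * binomPMF N p 0 := by
  rw [binomPMF, binomPMF]
  have hsub : N + 1 - 0 = N + 1 := by omega
  have hsub2 : N - 0 = N := by omega
  rw [hsub, hsub2, Nat.choose_zero_right, Nat.choose_zero_right, pow_succ]
  push_cast
  ring

lemma sumS2 (N : ℕ) (p : ℝ) (G : ℕ → ℝ) :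
    ∑ m ∈ range (N+1+1), binomPMF (N+1) p m * ((m:ℝ) * G m)
      = ((N:ℝ)+1) * p * ∑ r ∈ range (N+1), binomPMF N p r * G (r+1) := by
  rw [Finset.sum_range_succ' (fun m => binomPMF (N+1) p m * ((m:ℝ) * G m)) (N+1)]
  simp only [Nat.cast_zero, zero_mul, mul_zero, add_zero]
  rw [Finset.mul_sum]
  refine Finset.sum_congr rfl fun r _ => ?_
  have hb := binom_succ_mul N p r
  push_cast
  linear_combination (G (r+1)) * hb

lemma sumS3 (N : ℕ) (p : ℝ) (G : ℕ → ℝ) :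
    ∑ m ∈ range (N+1+1), binomPMF (N+1) p m * G (m+1)
      = p * (∑ r ∈ range (N+1), binomPMF N p r * G (r+2))
        + (1-p) * (∑ r ∈ range (N+1), binomPMF N p r * G (r+1)) := by
  have hidx : ∀ r : ℕ, r + 1 + 1 = r + 2 := fun r => rfl
  rw [Finset.sum_range_succ' (fun m => binomPMF (N+1) p m * G (m+1)) (N+1)]
  have e1 : ∀ r ∈ range (N+1), binomPMF (N+1) p (r+1) * G (r+1+1)
      = p * (binomPMF N p r * G (r+2)) + (1-p) * (binomPMF N p (r+1) * G (r+1+1)) := by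
    intro r hr
    rw [binom_pascal N p (Finset.mem_range.1 hr), hidx]
    ring
  rw [Finset.sum_congr rfl e1, Finset.sum_add_distrib, binom_zero_succ N p]
  have e2 : (1-p) * ∑ m ∈ range (N+1+1), binomPMF N p m * G (m+1)
      = ∑ r ∈ range (N+1), (1-p) * (binomPMF N p (r+1) * G (r+1+1))
        + (1-p) * binomPMF N p 0 * G (0+1) := by
    rw [Finset.sum_range_succ' (fun m => binomPMF N p m * G (m+1)) (N+1), mul_add,
      Finset.mul_sum]
    ring
  have e3 : ∑ m ∈ range (N+1+1), binomPMF N p m * G (m+1)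
      = ∑ m ∈ range (N+1), binomPMF N p m * G (m+1) := by
    rw [Finset.sum_range_succ, binom_eq_zero (show N < N+1 by omega) p]
    simp
  rw [add_assoc, ← e2, e3, Finset.mul_sum, ← Finset.mul_sum]

lemma sumS4 (N : ℕ) (p : ℝ) (G : ℕ → ℝ) :
    ∑ m ∈ range (N+1+1),
        binomPMF (N+1) p m * (((N:ℝ)+1) * p * G (m+1) - (m:ℝ) * G m)
      = ((N:ℝ)+1) * p * p * ∑ r ∈ range (N+1), binomPMF N p r * (G (r+2) - G (r+1)) := by
  have e : ∀ m ∈ range (N+1+1),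
      binomPMF (N+1) p m * (((N:ℝ)+1) * p * G (m+1) - (m:ℝ) * G m)
        = ((N:ℝ)+1) * p * (binomPMF (N+1) p m * G (m+1)) - binomPMF (N+1) p m * ((m:ℝ) * G m) := by
    intro m _; ring
  have e4 : ∑ r ∈ range (N+1), binomPMF N p r * (G (r+2) - G (r+1))
      = (∑ r ∈ range (N+1), binomPMF N p r * G (r+2))
        - ∑ r ∈ range (N+1), binomPMF N p r * G (r+1) := by
    rw [← Finset.sum_sub_distrib]
    exact Finset.sum_congr rfl fun r _ => mul_sub _ _ _
  rw [Finset.sum_congr rfl e, Finset.sum_sub_distrib, ← Finset.mul_sum, sumS3, sumS2, e4]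
  ring

lemma stein_bound (N : ℕ) (p : ℝ) (hp0 : 0 < p) (hp1 : p ≤ 1) (A : Finset ℕ) :
    (∑ m ∈ range (N+1+1), if m ∈ A then binomPMF (N+1) p m else 0)
      - ∑ j ∈ A, poissonPMF (((N:ℝ)+1) * p) j
      ≤ p * (1 - Real.exp (-(((N:ℝ)+1) * p))) := by
  classical
  have hidx : ∀ r : ℕ, r + 1 + 1 = r + 2 := fun r => rfl
  set l : ℝ := ((N:ℝ)+1) * p with hldef
  have hNpos : (0:ℝ) < (N:ℝ) + 1 := by positivity
  have hl : 0 < l := mul_pos hNpos hp0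
  have hl' : l ≠ 0 := ne_of_gt hl
  set G : ℕ → ℝ := fun k => ∑ j ∈ A, gs l j k with hG
  set QA : ℝ := ∑ j ∈ A, poissonPMF l j with hQA
  have hp0' : (0:ℝ) ≤ p := le_of_lt hp0
  have key : ∀ m : ℕ, l * G (m+1) - (m:ℝ) * G m = (if m ∈ A then (1:ℝ) else 0) - QA := by
    intro m
    simp only [hG, hQA]
    exact steinA hl A m
  have sum1 : (∑ m ∈ range (N+1+1), if m ∈ A then binomPMF (N+1) p m else 0) - QA
      = ∑ m ∈ range (N+1+1), binomPMF (N+1) p m * (l * G (m+1) - (m:ℝ) * G m) := by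
    have e0 : ∀ m ∈ range (N+1+1), binomPMF (N+1) p m * (l * G (m+1) - (m:ℝ) * G m)
        = (if m ∈ A then binomPMF (N+1) p m else 0) - binomPMF (N+1) p m * QA := by
      intro m _
      rw [key m]
      by_cases h : m ∈ A <;> simp [h] <;> ring
    rw [Finset.sum_congr rfl e0, Finset.sum_sub_distrib, ← Finset.sum_mul, sum_binom (N+1) p,
      one_mul]
  have sum4 := sumS4 N p G
  rw [← hldef] at sum4
  have hC := C_nonneg hl
  have bound : ∑ r ∈ range (N+1), binomPMF N p r * (G (r+2) - G (r+1))
      ≤ (1 - Real.exp (-l)) / l := by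
    calc ∑ r ∈ range (N+1), binomPMF N p r * (G (r+2) - G (r+1))
        ≤ ∑ r ∈ range (N+1), binomPMF N p r * ((1 - Real.exp (-l)) / l) := by
          refine Finset.sum_le_sum fun r _ => ?_
          have hb0 : 0 ≤ binomPMF N p r := binom_nonneg hp0' hp1 N r
          have hd : G (r+2) - G (r+1) ≤ (1 - Real.exp (-l)) / l := by
            have h := deltaA hl A (k := r+1) (by omega)
            simpa only [hG, hidx r] using h
          exact mul_le_mul_of_nonneg_left hd hb0
      _ = (1 - Real.exp (-l)) / l := by
          rw [← Finset.sum_mul, sum_binom N p, one_mul]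
  calc (∑ m ∈ range (N+1+1), if m ∈ A then binomPMF (N+1) p m else 0) - QA
      = l * p * ∑ r ∈ range (N+1), binomPMF N p r * (G (r+2) - G (r+1)) := by
        rw [sum1, sum4]
    _ ≤ l * p * ((1 - Real.exp (-l)) / l) := by
        apply mul_le_mul_of_nonneg_left bound
        positivity
    _ = p * (1 - Real.exp (-l)) := by
        field_simp

lemma abs_eq_two_max (x : ℝ) : |x| = 2 * max x 0 - x := by
  rcases le_or_gt 0 x with h | h
  · rw [abs_of_nonneg h, max_eq_left h]; ring
  · rw [abs_of_neg h, max_eq_right (le_of_lt h)]; ring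

lemma dTV_binom_poisson (N : ℕ) (p : ℝ) (hp0 : 0 < p) (hp1 : p ≤ 1) :
    dTV (binomPMF (N+1) p) (poissonPMF (((N:ℝ)+1)*p))
      ≤ p * (1 - Real.exp (-(((N:ℝ)+1)*p))) := by
  classical
  set l : ℝ := ((N:ℝ)+1)*p with hldef
  have hl : 0 < l := mul_pos (by positivity) hp0
  have hq0 : ∀ m, 0 ≤ poissonPMF l m := poisson_nonneg (le_of_lt hl)
  have hsb : Summable (binomPMF (N+1) p) := summable_binom _ _
  have hsq : Summable (poissonPMF l) := summable_poisson _
  have hsd : Summable (fun m => binomPMF (N+1) p m - poissonPMF l m) := hsb.sub hsq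
  have htd : ∑' m, (binomPMF (N+1) p m - poissonPMF l m) = 0 := by
    rw [Summable.tsum_sub hsb hsq, tsum_binom, tsum_poisson]; ring
  set dp : ℕ → ℝ := fun m => max (binomPMF (N+1) p m - poissonPMF l m) 0 with hdp
  have hdp0 : ∀ m ∉ range (N+1+1), dp m = 0 := by
    intro m hm
    have hmgt : N+1 < m := by
      have := Finset.mem_range.not.1 hm
      omega
    have hb0 : binomPMF (N+1) p m = 0 := binom_eq_zero hmgt p
    simp only [hdp, hb0, zero_sub]
    exact max_eq_right (by linarith [hq0 m])
  have hsdp : Summable dp := summable_of_ne_finset_zero hdp0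
  have habs : ∀ m, |binomPMF (N+1) p m - poissonPMF l m|
      = 2 * dp m - (binomPMF (N+1) p m - poissonPMF l m) := fun m => abs_eq_two_max _
  have htabs : ∑' m, |binomPMF (N+1) p m - poissonPMF l m| = 2 * ∑' m, dp m := by
    calc ∑' m, |binomPMF (N+1) p m - poissonPMF l m|
        = ∑' m, (2 * dp m - (binomPMF (N+1) p m - poissonPMF l m)) := tsum_congr habs
      _ = (∑' m, 2 * dp m) - ∑' m, (binomPMF (N+1) p m - poissonPMF l m) :=
          Summable.tsum_sub (hsdp.mul_left 2) hsd
      _ = 2 * ∑' m, dp m := by rw [tsum_mul_left, htd]; ring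
  have htdp : ∑' m, dp m = ∑ m ∈ range (N+1+1), dp m := tsum_eq_sum hdp0
  set A : Finset ℕ :=
    (range (N+1+1)).filter (fun m => poissonPMF l m < binomPMF (N+1) p m) with hA
  have hsum_dp : ∑ m ∈ range (N+1+1), dp m
      = (∑ m ∈ range (N+1+1), if m ∈ A then binomPMF (N+1) p m else 0)
        - ∑ j ∈ A, poissonPMF l j := by
    have e1 : ∀ m ∈ range (N+1+1), dp m
        = (if m ∈ A then binomPMF (N+1) p m else 0)
          - (if m ∈ A then poissonPMF l m else 0) := by
      intro m hm
      by_cases h : poissonPMF l m < binomPMF (N+1) p m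
      · have hmA : m ∈ A := by rw [hA]; exact Finset.mem_filter.2 ⟨hm, h⟩
        rw [if_pos hmA, if_pos hmA]
        simp only [hdp]
        exact max_eq_left (by linarith)
      · have hmA : m ∉ A := by rw [hA]; intro hc; exact h (Finset.mem_filter.1 hc).2
        rw [if_neg hmA, if_neg hmA]
        simp only [hdp]
        rw [max_eq_right (by push_neg at h; linarith)]
        ring
    rw [Finset.sum_congr rfl e1, Finset.sum_sub_distrib]
    congr 1
    rw [Finset.sum_ite_mem, Finset.inter_eq_right.2 (Finset.filter_subset _ _)]
  have hdtv : dTV (binomPMF (N+1) p) (poissonPMF l) = ∑ m ∈ range (N+1+1), dp m := by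
    rw [dTV, htabs, htdp]; ring
  rw [hdtv, hsum_dp]
  exact stein_bound N p hp0 hp1 A

lemma lecam_min (N : ℕ) (p : ℝ) (hp0 : 0 < p) (hp1 : p ≤ 1) :
    p * (1 - Real.exp (-(((N:ℝ)+1)*p))) ≤ min p (p^2 * ((N:ℝ)+1)) := by
  have hN : (0:ℝ) ≤ (N:ℝ) + 1 := by positivity
  apply le_min
  · nlinarith [Real.exp_nonneg (-(((N:ℝ)+1)*p))]
  · have h2 := Real.add_one_le_exp (-(((N:ℝ)+1)*p))
    nlinarith

/-- if `X` is binomial with parameters `(n, p)` and `Y` is Poisson with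
parameter `y·n/k`, then `d_TV(L(X), L(Y))` is at most `min{p, p²·n} + (n/k)·|y − k·p|`. -/
theorem stmt0 (n k : ℕ) (hn : 0 < n) (hk : 0 < k) (p y : ℝ)
    (hp : p ∈ Set.Icc (0 : ℝ) 1) (hy : 0 < y) :
    dTV (binomPMF n p) (poissonPMF (y * n / k)) ≤
      min p (p ^ 2 * n) + ((n : ℝ) / k) * |y - k * p| := by
  obtain ⟨hp0, hp1⟩ := hp
  have hkR : (0:ℝ) < (k:ℝ) := by exact_mod_cast hk
  have hnR : (0:ℝ) < (n:ℝ) := by exact_mod_cast hn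
  set r : ℝ := y * n / k with hrdef
  have hr0 : 0 ≤ r := by positivity
  rcases eq_or_lt_of_le hp0 with hp0' | hp0'
  · -- p = 0
    have hpz : p = 0 := hp0'.symm
    subst hpz
    have hbp : binomPMF n 0 = poissonPMF 0 := by
      funext m
      cases m with
      | zero => simp [binomPMF, poissonPMF]
      | succ mm => simp [binomPMF, poissonPMF]
    rw [hbp]
    have h1 : dTV (poissonPMF 0) (poissonPMF r) ≤ |0 - r| := dTV_poisson_abs le_rfl hr0
    have h2 : |(0:ℝ) - r| = r := by
      rw [zero_sub, abs_neg, abs_of_nonneg hr0]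
    have h3 : min (0:ℝ) (0^2 * n) + ((n:ℝ)/k) * |y - k*0| = r := by
      rw [hrdef]
      simp [abs_of_nonneg (le_of_lt hy)]
      field_simp
    rw [h3]
    linarith [h1, h2.le, h2.ge]
  · -- 0 < p
    obtain ⟨N, rfl⟩ : ∃ N, n = N + 1 := ⟨n - 1, by omega⟩
    have hcast : ((N+1 : ℕ) : ℝ) = (N:ℝ) + 1 := by push_cast; ring
    set l : ℝ := ((N:ℝ)+1) * p with hldef
    have hl : 0 < l := mul_pos (by positivity) hp0'
    have hsb : Summable (binomPMF (N+1) p) := summable_binom _ _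
    have hsql : Summable (poissonPMF l) := summable_poisson _
    have hsqr : Summable (poissonPMF r) := summable_poisson _
    have s1 : Summable fun m => |binomPMF (N+1) p m - poissonPMF l m| := (hsb.sub hsql).abs
    have s2 : Summable fun m => |poissonPMF l m - poissonPMF r m| := (hsql.sub hsqr).abs
    have h1 := dTV_triangle (binomPMF (N+1) p) (poissonPMF l) (poissonPMF r) s1 s2
    have h2 : dTV (binomPMF (N+1) p) (poissonPMF l) ≤ p * (1 - Real.exp (-l)) :=
      dTV_binom_poisson N p hp0' hp1
    have h3 : p * (1 - Real.exp (-l)) ≤ min p (p^2 * ((N:ℝ)+1)) := lecam_min N p hp0' hp1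
    have h4 : dTV (poissonPMF l) (poissonPMF r) ≤ |l - r| := dTV_poisson_abs (le_of_lt hl) hr0
    have h5 : |l - r| = (((N:ℝ)+1)/k) * |y - k*p| := by
      have e : l - r = ((N:ℝ)+1)/k * ((k:ℝ)*p - y) := by
        rw [hldef, hrdef, hcast]
        field_simp
      rw [e, abs_mul, abs_of_nonneg (by positivity : (0:ℝ) ≤ ((N:ℝ)+1)/k), abs_sub_comm]
    have hgoal : dTV (binomPMF (N+1) p) (poissonPMF r)
        ≤ min p (p^2 * ((N:ℝ)+1)) + (((N:ℝ)+1)/k) * |y - k*p| := by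
      rw [← h5] at *
      linarith
    calc dTV (binomPMF (N+1) p) (poissonPMF (y * ((N+1:ℕ):ℝ) / k))
        = dTV (binomPMF (N+1) p) (poissonPMF r) := by rw [hrdef]
      _ ≤ min p (p^2 * ((N:ℝ)+1)) + (((N:ℝ)+1)/k) * |y - k*p| := hgoal
      _ = min p (p ^ 2 * ((N+1:ℕ):ℝ)) + (((N+1:ℕ):ℝ) / k) * |y - k * p| := by rw [hcast]
end

section
/- Let n be a positive integer and let p₁, p₂ ≥ 0 with p₁ + p₂ ≤ 1. Allocate n balls independently at random, each ball going to urn 1 with probability p₁ and to urn 2 with probability p₂ (and to neither with probability 1 − p₁ − p₂); let X₁ and X₂ be the numbers of balls in urns 1 and 2, so that (X₁, X₂, n − X₁ − X₂) has the multinomial distribution with parameters (n; p₁, p₂, 1 − p₁ − p₂). Let (W₁, W₂) be a pair of independent Poisson random variables with respective parameters p₁·n and p₂·n. Then d_TV(L(X₁, X₂), L(W₁, W₂)) ≤ (p₁ + p₂)²·n. -/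
noncomputable def multinom2PMF (n : ℕ) (p₁ p₂ : ℝ) : ℕ × ℕ → ℝ :=
  fun ab =>
    if ab.1 + ab.2 ≤ n then
      (Nat.factorial n : ℝ) /
          ((Nat.factorial ab.1 : ℝ) * (Nat.factorial ab.2 : ℝ) *
            (Nat.factorial (n - ab.1 - ab.2) : ℝ)) *
        p₁ ^ ab.1 * p₂ ^ ab.2 * (1 - p₁ - p₂) ^ (n - ab.1 - ab.2)
    else 0

open Real Finset

lemma poissonPMF_nonneg {r : ℝ} (hr : 0 ≤ r) (k : ℕ) : 0 ≤ poissonPMF r k := by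
  unfold poissonPMF
  positivity

lemma poissonPMF_hasSum {r : ℝ} (hr : 0 ≤ r) : HasSum (poissonPMF r) 1 := by
  have h := ProbabilityTheory.poissonPMFRealSum ⟨r, hr⟩
  have heq : poissonPMF r = fun n => ProbabilityTheory.poissonPMFReal ⟨r, hr⟩ n := by
    funext k; simp [poissonPMF, ProbabilityTheory.poissonPMFReal]; rfl
  rw [heq]; exact h

lemma poissonPMF_summable {r : ℝ} (hr : 0 ≤ r) : Summable (poissonPMF r) :=
  (poissonPMF_hasSum hr).summable

/-- regrouping a summable double sum by antidiagonals -/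
lemma tsum_antidiagonal_summable {F : ℕ × ℕ → ℝ} (hF : Summable F) :
    Summable fun k => ∑ kl ∈ Finset.HasAntidiagonal.antidiagonal k, F kl := by
  have hF' : Summable (F ∘ (Finset.HasAntidiagonal.sigmaAntidiagonalEquivProd (A := ℕ))) :=
    (Equiv.summable_iff _).mpr hF
  have := hF'.sigma' (fun n => (hasSum_fintype _).summable)
  convert this using 2 with k
  rw [← Finset.sum_finset_coe, ← tsum_fintype (L := .unconditional _)]
  rfl

lemma tsum_antidiagonal_eq {F : ℕ × ℕ → ℝ} (hF : Summable F) :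
    ∑' (ab : ℕ × ℕ), F ab = ∑' k, ∑ kl ∈ Finset.HasAntidiagonal.antidiagonal k, F kl := by
  have hF' : Summable (F ∘ (Finset.HasAntidiagonal.sigmaAntidiagonalEquivProd (A := ℕ))) :=
    (Equiv.summable_iff _).mpr hF
  rw [← (Finset.HasAntidiagonal.sigmaAntidiagonalEquivProd (A := ℕ)).tsum_eq F]
  rw [show (fun c : (n : ℕ) × {x // x ∈ Finset.HasAntidiagonal.antidiagonal n} =>
      F (Finset.HasAntidiagonal.sigmaAntidiagonalEquivProd c)) = F ∘ Finset.HasAntidiagonal.sigmaAntidiagonalEquivProd from rfl,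
    Summable.tsum_sigma hF']
  congr 1 with k
  rw [← Finset.sum_finset_coe, ← tsum_fintype (L := .unconditional _)]
  rfl
noncomputable def bern (p : ℝ) : ℕ → ℝ :=
  fun k => if k = 0 then 1 - p else if k = 1 then p else 0

noncomputable def binPMF (n : ℕ) (p : ℝ) : ℕ → ℝ :=
  fun k => if k ≤ n then (n.choose k : ℝ) * p ^ k * (1 - p) ^ (n - k) else 0

noncomputable def conv (μ ν : ℕ → ℝ) : ℕ → ℝ :=
  fun k => ∑ i ∈ Finset.range (k + 1), μ i * ν (k - i)

lemma bern_nonneg {p : ℝ} (h0 : 0 ≤ p) (h1 : p ≤ 1) (k : ℕ) : 0 ≤ bern p k := by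
  unfold bern; split_ifs <;> linarith

lemma bern_summable (p : ℝ) : Summable (bern p) := by
  apply summable_of_ne_finset_zero (s := {0, 1})
  intro b hb
  simp only [Finset.mem_insert, Finset.mem_singleton] at hb
  push_neg at hb
  simp [bern, hb.1, hb.2]

lemma binPMF_nonneg {n : ℕ} {p : ℝ} (h0 : 0 ≤ p) (h1 : p ≤ 1) (k : ℕ) : 0 ≤ binPMF n p k := by
  unfold binPMF
  split_ifs
  · have : (0:ℝ) ≤ 1 - p := by linarith
    positivity
  · exact le_refl 0
  
lemma binPMF_hasSum {n : ℕ} {p : ℝ} : HasSum (binPMF n p) 1 := by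
  have h : ∀ b ∉ Finset.range (n + 1), binPMF n p b = 0 := by
    intro b hb
    simp only [Finset.mem_range, not_lt] at hb
    simp [binPMF, Nat.lt_of_succ_le hb, Nat.not_le.mpr (Nat.lt_of_succ_le hb)]
  have : HasSum (binPMF n p) _ := hasSum_sum_of_ne_finset_zero h
  have hsum : ∑ b ∈ Finset.range (n + 1), binPMF n p b = 1 := by
    have hb : ∀ b ∈ Finset.range (n + 1), binPMF n p b = p ^ b * (1 - p) ^ (n - b) * (n.choose b : ℝ) := by
      intro b hb
      simp only [Finset.mem_range] at hb
      simp only [binPMF, if_pos (Nat.lt_succ_iff.mp hb)]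
      ring
    rw [Finset.sum_congr rfl hb, ← add_pow]
    norm_num
  rwa [hsum] at this
lemma inv_fact_eq {k i : ℕ} (h : i ≤ k) :
    (1:ℝ) / (i.factorial * (k - i).factorial) = (k.choose i : ℝ) / k.factorial := by
  have hh := Nat.choose_mul_factorial_mul_factorial h
  have hc : (k.choose i : ℝ) * i.factorial * (k - i).factorial = k.factorial := by
    exact_mod_cast congrArg (Nat.cast (R := ℝ)) hh
  have h1 : (i.factorial : ℝ) ≠ 0 := Nat.cast_ne_zero.mpr (Nat.factorial_ne_zero i)
  have h2 : ((k - i).factorial : ℝ) ≠ 0 := Nat.cast_ne_zero.mpr (Nat.factorial_ne_zero _)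
  have h3 : (k.factorial : ℝ) ≠ 0 := Nat.cast_ne_zero.mpr (Nat.factorial_ne_zero k)
  field_simp
  linarith [hc]

lemma conv_poisson (a b : ℝ) (k : ℕ) :
    conv (poissonPMF a) (poissonPMF b) k = poissonPMF (a + b) k := by
  unfold conv poissonPMF
  have : Real.exp (-(a+b)) = Real.exp (-a) * Real.exp (-b) := by
    rw [← Real.exp_add]; ring_nf
  rw [this, add_pow, Finset.mul_sum, Finset.sum_div]
  apply Finset.sum_congr rfl
  intro i hi
  have h : i ≤ k := Nat.lt_succ_iff.mp (Finset.mem_range.mp hi)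
  have key := inv_fact_eq h
  have h1 : (i.factorial : ℝ) ≠ 0 := Nat.cast_ne_zero.mpr (Nat.factorial_ne_zero i)
  have h2 : ((k - i).factorial : ℝ) ≠ 0 := Nat.cast_ne_zero.mpr (Nat.factorial_ne_zero _)
  have h3 : (k.factorial : ℝ) ≠ 0 := Nat.cast_ne_zero.mpr (Nat.factorial_ne_zero k)
  field_simp at key ⊢
  linear_combination (a ^ i * b ^ (k - i)) * key

lemma conv_bern_bin (n : ℕ) (p : ℝ) (k : ℕ) :
    conv (bern p) (binPMF n p) k = binPMF (n + 1) p k := by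
  unfold conv
  rcases k with _ | m
  · simp [bern, binPMF, pow_succ]
    ring
  · rw [Finset.sum_range_succ', Finset.sum_range_succ']
    have hz : ∀ i ∈ Finset.range m, bern p (i + 1 + 1) * binPMF n p (m + 1 - (i + 1 + 1)) = 0 := by
      intro i _
      simp [bern]
    rw [Finset.sum_eq_zero hz, zero_add]
    have hb1 : bern p (0 + 1) = p := by simp [bern]
    have hb0 : bern p 0 = 1 - p := by simp [bern]
    rw [hb1, hb0]
    have e0 : m + 1 - (0 + 1) = m := by omega
    have e0' : m + 1 - 0 = m + 1 := by omega
    rw [e0, e0']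
    unfold binPMF
    rcases lt_trichotomy m n with hmn | rfl | hmn
    · rw [if_pos (by omega : m + 1 ≤ n), if_pos (le_of_lt hmn), if_pos (by omega : m + 1 ≤ n + 1)]
      have e1 : n - m = (n - (m + 1)) + 1 := by omega
      have e2 : n + 1 - (m + 1) = n - m := by omega
      have pas : ((n + 1).choose (m + 1) : ℝ) = n.choose m + n.choose (m + 1) := by
        exact_mod_cast Nat.choose_succ_succ n m
      rw [e2, e1, pow_succ, pas]
      ring
    · rw [if_pos (le_refl m), if_neg (by omega : ¬ (m + 1 ≤ m)), if_pos (le_refl (m + 1))]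
      simp [Nat.choose_self, Nat.sub_self, pow_succ]
      ring
    · rw [if_neg (by omega), if_neg (by omega), if_neg (by omega)]
      ring
set_option maxHeartbeats 1000000 in
lemma conv_dtv_le {μ₁ ν₁ μ₂ ν₂ : ℕ → ℝ}
    (hμ₁s : Summable μ₁) (hν₂s : Summable ν₂)
    (hμ₂0 : ∀ k, 0 ≤ μ₂ k) (hμ₂ : HasSum μ₂ 1)
    (hν₁0 : ∀ k, 0 ≤ ν₁ k) (hν₁ : HasSum ν₁ 1) :
    ∑' k, |conv μ₁ ν₁ k - conv μ₂ ν₂ k| ≤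
      (∑' k, |μ₁ k - μ₂ k|) + ∑' k, |ν₁ k - ν₂ k| := by
  set G : ℕ × ℕ → ℝ := fun ab => |μ₁ ab.1 * ν₁ ab.2 - μ₂ ab.1 * ν₂ ab.2| with hG
  set H : ℕ × ℕ → ℝ :=
    fun ab => |μ₁ ab.1 - μ₂ ab.1| * ν₁ ab.2 + μ₂ ab.1 * |ν₁ ab.2 - ν₂ ab.2| with hH
  -- pointwise bound
  have hGH : ∀ ab, G ab ≤ H ab := by
    intro ⟨a, b⟩
    simp only [hG, hH]
    have : μ₁ a * ν₁ b - μ₂ a * ν₂ b = (μ₁ a - μ₂ a) * ν₁ b + μ₂ a * (ν₁ b - ν₂ b) := by ring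
    rw [this]
    calc |(μ₁ a - μ₂ a) * ν₁ b + μ₂ a * (ν₁ b - ν₂ b)|
        ≤ |(μ₁ a - μ₂ a) * ν₁ b| + |μ₂ a * (ν₁ b - ν₂ b)| := abs_add_le _ _
      _ = |μ₁ a - μ₂ a| * ν₁ b + μ₂ a * |ν₁ b - ν₂ b| := by
          rw [abs_mul, abs_mul, abs_of_nonneg (hν₁0 b), abs_of_nonneg (hμ₂0 a)]
  -- summability
  have hμd : Summable (fun k => |μ₁ k - μ₂ k|) := (hμ₁s.sub hμ₂.summable).abs
  have hνd : Summable (fun k => |ν₁ k - ν₂ k|) := (hν₁.summable.sub hν₂s).abs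
  have hH1 : Summable (fun ab : ℕ × ℕ => |μ₁ ab.1 - μ₂ ab.1| * ν₁ ab.2) :=
    hμd.mul_of_nonneg hν₁.summable (fun k => abs_nonneg _) hν₁0
  have hH2 : Summable (fun ab : ℕ × ℕ => μ₂ ab.1 * |ν₁ ab.2 - ν₂ ab.2|) :=
    hμ₂.summable.mul_of_nonneg hνd hμ₂0 (fun k => abs_nonneg _)
  have hHs : Summable H := hH1.add hH2
  have hGs : Summable G :=
    Summable.of_nonneg_of_le (fun ab => abs_nonneg _) hGH hHs
  -- tsum of H
  have htH : ∑' ab, H ab = (∑' k, |μ₁ k - μ₂ k|) + ∑' k, |ν₁ k - ν₂ k| := by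
    rw [hH, Summable.tsum_add hH1 hH2, ← Summable.tsum_mul_tsum hμd hν₁.summable hH1,
      ← Summable.tsum_mul_tsum hμ₂.summable hνd hH2, hν₁.tsum_eq, hμ₂.tsum_eq]
    ring
  -- antidiagonal regrouping
  have hreg := tsum_antidiagonal_eq hGs
  have hregs := tsum_antidiagonal_summable hGs
  -- termwise bound of the convolutions
  have hterm : ∀ k, |conv μ₁ ν₁ k - conv μ₂ ν₂ k| ≤ ∑ kl ∈ Finset.HasAntidiagonal.antidiagonal k, G kl := by
    intro k
    rw [Finset.Nat.sum_antidiagonal_eq_sum_range_succ_mk]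
    unfold conv
    rw [← Finset.sum_sub_distrib]
    exact Finset.abs_sum_le_sum_abs _ _
  have hLs : Summable (fun k => |conv μ₁ ν₁ k - conv μ₂ ν₂ k|) :=
    Summable.of_nonneg_of_le (fun k => abs_nonneg _) hterm hregs
  calc ∑' k, |conv μ₁ ν₁ k - conv μ₂ ν₂ k|
      ≤ ∑' k, ∑ kl ∈ Finset.HasAntidiagonal.antidiagonal k, G kl := Summable.tsum_le_tsum hterm hLs hregs
    _ = ∑' ab, G ab := hreg.symm
    _ ≤ ∑' ab, H ab := Summable.tsum_le_tsum hGH hGs hHs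
    _ = _ := htH
lemma exp_neg_le_one {p : ℝ} (h0 : 0 ≤ p) : Real.exp (-p) ≤ 1 := by
  rw [Real.exp_le_one_iff]
  linarith

lemma bern_poisson_dtv {p : ℝ} (h0 : 0 ≤ p) (h1 : p ≤ 1) :
    ∑' k, |bern p k - poissonPMF p k| ≤ 2 * p ^ 2 := by
  have hps := poissonPMF_summable h0
  have hpnn := poissonPMF_nonneg h0
  have hfs : Summable (fun k => |bern p k - poissonPMF p k|) := ((bern_summable p).sub hps).abs
  have h2 : ∀ k : ℕ, |bern p (k + 1 + 1) - poissonPMF p (k + 1 + 1)| = poissonPMF p (k + 1 + 1) := by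
    intro k
    have hb : bern p (k + 1 + 1) = 0 := by simp [bern]
    rw [hb, zero_sub, abs_neg, abs_of_nonneg (hpnn _)]
  have e1 : ∑' k, |bern p k - poissonPMF p k|
      = |bern p 0 - poissonPMF p 0| + (|bern p 1 - poissonPMF p 1|
        + ∑' k, poissonPMF p (k + 1 + 1)) := by
    rw [Summable.tsum_eq_zero_add hfs, Summable.tsum_eq_zero_add ((summable_nat_add_iff 1).mpr hfs)]
    norm_num [tsum_congr h2]
  have e2 : (1 : ℝ) = poissonPMF p 0 + (poissonPMF p 1 + ∑' k, poissonPMF p (k + 1 + 1)) := by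
    rw [← (poissonPMF_hasSum h0).tsum_eq, Summable.tsum_eq_zero_add hps,
      Summable.tsum_eq_zero_add ((summable_nat_add_iff 1).mpr hps)]
  have v0 : poissonPMF p 0 = Real.exp (-p) := by simp [poissonPMF]
  have v1 : poissonPMF p 1 = Real.exp (-p) * p := by simp [poissonPMF]
  have a0 : |bern p 0 - poissonPMF p 0| = Real.exp (-p) - (1 - p) := by
    rw [v0]
    have hb : bern p 0 = 1 - p := by simp [bern]
    rw [hb, abs_of_nonpos (by linarith [Real.add_one_le_exp (-p)])]
    ring
  have a1 : |bern p 1 - poissonPMF p 1| = p - Real.exp (-p) * p := by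
    rw [v1]
    have hb : bern p 1 = p := by simp [bern]
    rw [hb, abs_of_nonneg (by nlinarith [exp_neg_le_one h0])]
  rw [e1, a0, a1]
  have e3 : ∑' k, poissonPMF p (k + 1 + 1) = 1 - poissonPMF p 0 - poissonPMF p 1 := by
    linarith [e2]
  rw [e3, v0, v1]
  nlinarith [Real.add_one_le_exp (-p), h0, mul_le_mul_of_nonneg_left
    (by linarith [Real.add_one_le_exp (-p)] : 1 - Real.exp (-p) ≤ p) h0]

lemma lecam {p : ℝ} (h0 : 0 ≤ p) (h1 : p ≤ 1) (n : ℕ) :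
    ∑' k, |binPMF n p k - poissonPMF (p * n) k| ≤ 2 * n * p ^ 2 := by
  induction n with
  | zero =>
    have hz : ∀ k, |binPMF 0 p k - poissonPMF (p * (0:ℕ)) k| = 0 := by
      intro k
      cases k with
      | zero => simp [binPMF, poissonPMF]
      | succ m => simp [binPMF, poissonPMF]
    rw [tsum_congr hz, tsum_zero]
    simp
  | succ n ih =>
    have hb : ∀ k, binPMF (n + 1) p k = conv (bern p) (binPMF n p) k :=
      fun k => (conv_bern_bin n p k).symm
    have hp : ∀ k, poissonPMF (p * (n + 1 : ℕ)) k
        = conv (poissonPMF p) (poissonPMF (p * n)) k := by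
      intro k
      rw [conv_poisson]
      congr 2
      push_cast
      ring
    calc ∑' k, |binPMF (n + 1) p k - poissonPMF (p * (n + 1 : ℕ)) k|
        = ∑' k, |conv (bern p) (binPMF n p) k
            - conv (poissonPMF p) (poissonPMF (p * n)) k| := by
          apply tsum_congr; intro k; rw [hb, hp]
      _ ≤ (∑' k, |bern p k - poissonPMF p k|)
            + ∑' k, |binPMF n p k - poissonPMF (p * n) k| :=
          conv_dtv_le (bern_summable p) (poissonPMF_summable (by positivity))
            (poissonPMF_nonneg h0) (poissonPMF_hasSum h0)
            (binPMF_nonneg h0 h1) binPMF_hasSum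
      _ ≤ 2 * p ^ 2 + 2 * n * p ^ 2 := add_le_add (bern_poisson_dtv h0 h1) ih
      _ = 2 * (n + 1 : ℕ) * p ^ 2 := by push_cast; ring
noncomputable def binF (n : ℕ) (p : ℝ) : ℕ → ℝ := fun k =>
  (if k ≤ n then (n.factorial : ℝ) / ((n - k).factorial : ℝ) * (1 - p) ^ (n - k) else 0)
    - Real.exp (-(p * n)) * (n : ℝ) ^ k

lemma binF_mul (n k : ℕ) (p : ℝ) :
    p ^ k / (k.factorial : ℝ) * binF n p k = binPMF n p k - poissonPMF (p * n) k := by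
  unfold binF binPMF poissonPMF
  rw [mul_sub]
  congr 1
  · split_ifs with h
    · have hh : (n.choose k : ℝ) * k.factorial * (n - k).factorial = n.factorial := by
        exact_mod_cast congrArg (Nat.cast (R := ℝ)) (Nat.choose_mul_factorial_mul_factorial h)
      have h1 : (k.factorial : ℝ) ≠ 0 := Nat.cast_ne_zero.mpr (Nat.factorial_ne_zero _)
      have h2 : ((n - k).factorial : ℝ) ≠ 0 := Nat.cast_ne_zero.mpr (Nat.factorial_ne_zero _)
      field_simp
      linear_combination (-(p ^ k * (1 - p) ^ (n - k))) * hh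
    · simp
  · rw [mul_pow]
    ring

lemma abs_binF_mul (n k : ℕ) {p : ℝ} (h0 : 0 ≤ p) :
    p ^ k / (k.factorial : ℝ) * |binF n p k| = |binPMF n p k - poissonPMF (p * n) k| := by
  rw [← binF_mul, abs_mul, abs_of_nonneg (by positivity : (0:ℝ) ≤ p ^ k / (k.factorial : ℝ))]

/-- if `(X₁, X₂)` are the urn counts of a multinomial allocation of `n` balls
with probabilities `(p₁, p₂)` and `(W₁, W₂)` are independent Poisson variables with
parameters `p₁·n`, `p₂·n`, then `d_TV(L(X₁, X₂), L(W₁, W₂)) ≤ (p₁ + p₂)²·n`. -/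
theorem stmt1 (n : ℕ) (hn : 0 < n) (p₁ p₂ : ℝ) (h1 : 0 ≤ p₁) (h2 : 0 ≤ p₂)
    (h12 : p₁ + p₂ ≤ 1) :
    dTV (multinom2PMF n p₁ p₂)
        (fun ab => poissonPMF (p₁ * n) ab.1 * poissonPMF (p₂ * n) ab.2) ≤
      (p₁ + p₂) ^ 2 * n := by
  have hp0 : 0 ≤ p₁ + p₂ := by positivity
  set p : ℝ := p₁ + p₂ with hp
  have h1p : 1 - p₁ - p₂ = 1 - p := by rw [hp]; ring
  have h1p0 : 0 ≤ 1 - p := by rw [hp]; linarith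
  set G : ℕ × ℕ → ℝ := fun ab =>
    |multinom2PMF n p₁ p₂ ab - poissonPMF (p₁ * n) ab.1 * poissonPMF (p₂ * n) ab.2| with hGdef
  -- product of the two Poisson pmfs rewritten
  have hq : ∀ a b : ℕ, poissonPMF (p₁ * n) a * poissonPMF (p₂ * n) b
      = p₁ ^ a * p₂ ^ b / ((a.factorial : ℝ) * (b.factorial : ℝ))
        * (Real.exp (-(p * n)) * (n : ℝ) ^ (a + b)) := by
    intro a b
    have he : Real.exp (-(p₁ * n)) * Real.exp (-(p₂ * n)) = Real.exp (-(p * n)) := by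
      rw [← Real.exp_add]; congr 1; rw [hp]; ring
    unfold poissonPMF
    rw [mul_pow, mul_pow, pow_add, ← he]
    ring
  -- key pointwise identity
  have key : ∀ a b : ℕ, G (a, b)
      = p₁ ^ a * p₂ ^ b / ((a.factorial : ℝ) * (b.factorial : ℝ)) * |binF n p (a + b)| := by
    intro a b
    have hmq : multinom2PMF n p₁ p₂ (a, b)
        - poissonPMF (p₁ * n) a * poissonPMF (p₂ * n) b
        = p₁ ^ a * p₂ ^ b / ((a.factorial : ℝ) * (b.factorial : ℝ)) * binF n p (a + b) := by
      rw [hq]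
      unfold multinom2PMF binF
      simp only [Nat.sub_sub]
      split_ifs with h
      · rw [mul_sub]
        congr 1
        have ha : (a.factorial : ℝ) ≠ 0 := Nat.cast_ne_zero.mpr (Nat.factorial_ne_zero _)
        have hb : (b.factorial : ℝ) ≠ 0 := Nat.cast_ne_zero.mpr (Nat.factorial_ne_zero _)
        have hnk : ((n - (a + b)).factorial : ℝ) ≠ 0 :=
          Nat.cast_ne_zero.mpr (Nat.factorial_ne_zero _)
        rw [h1p]
        field_simp
      · rw [mul_sub, mul_zero, zero_sub]
    rw [hGdef]
    simp only
    rw [hmq, abs_mul, abs_of_nonneg (by positivity :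
      (0:ℝ) ≤ p₁ ^ a * p₂ ^ b / ((a.factorial : ℝ) * (b.factorial : ℝ)))]
  -- summability of G
  have hm0 : ∀ ab : ℕ × ℕ, 0 ≤ multinom2PMF n p₁ p₂ ab := by
    intro ab
    unfold multinom2PMF
    split_ifs
    · have := h1p0
      have h1p' : 0 ≤ 1 - p₁ - p₂ := by linarith [h1p0, h1p.ge]
      positivity
    · exact le_refl 0
  have hmsum : Summable (multinom2PMF n p₁ p₂) := by
    apply summable_of_ne_finset_zero (s := Finset.range (n + 1) ×ˢ Finset.range (n + 1))
    intro ab hab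
    simp only [Finset.mem_product, Finset.mem_range, not_and_or, not_lt] at hab
    have : ¬ (ab.1 + ab.2 ≤ n) := by omega
    simp [multinom2PMF, this]
  have hpoisum : Summable (fun ab : ℕ × ℕ => poissonPMF (p₁ * n) ab.1 * poissonPMF (p₂ * n) ab.2) :=
    (poissonPMF_summable (by positivity)).mul_of_nonneg (poissonPMF_summable (by positivity))
      (poissonPMF_nonneg (by positivity)) (poissonPMF_nonneg (by positivity))
  have hGs : Summable G := by
    apply Summable.of_nonneg_of_le (fun ab => abs_nonneg _) _ (hmsum.add hpoisum)
    intro ab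
    calc G ab ≤ |multinom2PMF n p₁ p₂ ab|
        + |poissonPMF (p₁ * n) ab.1 * poissonPMF (p₂ * n) ab.2| := abs_sub _ _
      _ = multinom2PMF n p₁ p₂ ab + poissonPMF (p₁ * n) ab.1 * poissonPMF (p₂ * n) ab.2 := by
          rw [abs_of_nonneg (hm0 ab), abs_of_nonneg
            (mul_nonneg (poissonPMF_nonneg (by positivity) _) (poissonPMF_nonneg (by positivity) _))]
  -- inner antidiagonal sums
  have inner : ∀ k, ∑ kl ∈ Finset.HasAntidiagonal.antidiagonal k, G kl
      = |binPMF n p k - poissonPMF (p * n) k| := by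
    intro k
    rw [Finset.Nat.sum_antidiagonal_eq_sum_range_succ_mk]
    have hterm : ∀ i ∈ Finset.range (k + 1), G (i, k - i)
        = p₁ ^ i * p₂ ^ (k - i) * ((k.choose i : ℝ)) * (|binF n p k| / (k.factorial : ℝ)) := by
      intro i hi
      have hik : i ≤ k := Nat.lt_succ_iff.mp (Finset.mem_range.mp hi)
      rw [key i (k - i), Nat.add_sub_cancel' hik, div_eq_mul_one_div, inv_fact_eq hik]
      ring
    rw [Finset.sum_congr rfl hterm, ← Finset.sum_mul, ← add_pow, ← hp,
      ← abs_binF_mul n k hp0]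
    ring
  -- put everything together
  have hfinal : ∑' (ab : ℕ × ℕ), G ab = ∑' k, |binPMF n p k - poissonPMF (p * n) k| := by
    rw [tsum_antidiagonal_eq hGs, tsum_congr inner]
  have hle := lecam hp0 (by rw [hp]; exact h12) n
  unfold dTV
  calc (1/2 : ℝ) * ∑' (ab : ℕ × ℕ),
        |multinom2PMF n p₁ p₂ ab - poissonPMF (p₁ * n) ab.1 * poissonPMF (p₂ * n) ab.2|
      = (1/2 : ℝ) * ∑' (ab : ℕ × ℕ), G ab := rfl
    _ = (1/2 : ℝ) * ∑' k, |binPMF n p k - poissonPMF (p * n) k| := by rw [hfinal]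
    _ ≤ (1/2 : ℝ) * (2 * n * p ^ 2) := mul_le_mul_of_nonneg_left hle (by norm_num)
    _ = p ^ 2 * n := by ring
    _ = (p₁ + p₂) ^ 2 * n := by rw [hp]
end

section
/- Let k ≥ 1 be an integer, let B be a finite set (of 'balls'), let s : B → ℕ with s(b) ≥ 1 for all b (the 'sizes'), and let f : B → {1, …, k} be any allocation of the balls to k urns. For an integer m ≥ 1 let N_m = #{b ∈ B : s(b) = m} and C_m = #{ j ∈ {1,…,k} : f⁻¹(j) ≠ ∅ and Σ_{b ∈ f⁻¹(j)} s(b) = m }; let N = #B and C = #{ j ∈ {1,…,k} : f⁻¹(j) ≠ ∅ }. Then for every integer m ≥ 1, |N_m − C_m| ≤ 2·(N − C). -/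
open Finset

theorem aux5 {B : Type*} [Fintype B] {k : ℕ}
    (s : B → ℕ) (f : B → Fin k) (m : ℕ)
    (fib : Fin k → Finset B)
    (hfib : ∀ j, fib j = Finset.univ.filter (fun b : B => f b = j)) :
    |((Finset.univ.filter (fun b : B => s b = m)).card : ℤ) -
        ((Finset.univ.filter (fun j : Fin k =>
            (fib j).Nonempty ∧ ∑ b ∈ fib j, s b = m)).card : ℤ)| ≤
      2 * ((Fintype.card B : ℤ) -
        ((Finset.univ.filter (fun j : Fin k => (fib j).Nonempty)).card : ℤ)) := by
  classical
  set Nm : ℕ := (Finset.univ.filter (fun b : B => s b = m)).card with hNmdef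
  set Q : Finset (Fin k) := Finset.univ.filter (fun j : Fin k =>
      (fib j).Nonempty ∧ ∑ b ∈ fib j, s b = m) with hQdef
  set P : Finset (Fin k) := Finset.univ.filter (fun j : Fin k => (fib j).Nonempty) with hPdef
  set Sset : Finset (Fin k) := P.filter (fun j => (fib j).card = 1) with hSdef
  set Mset : Finset (Fin k) := P.filter (fun j => ¬ (fib j).card = 1) with hMdef
  -- basic facts
  have hM2 : ∀ j ∈ Mset, 2 ≤ (fib j).card := by
    intro j hj
    rw [hMdef, mem_filter, hPdef, mem_filter] at hj
    have h1 : 0 < (fib j).card := Finset.card_pos.mpr hj.1.2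
    omega
  -- size-m counter per urn
  have hsingle : ∀ j ∈ Sset,
      ((fib j).filter (fun b => s b = m)).card
        = if (∑ b ∈ fib j, s b) = m then 1 else 0 := by
    intro j hj
    rw [hSdef, mem_filter] at hj
    obtain ⟨b, hb⟩ := Finset.card_eq_one.mp hj.2
    rw [hb]
    simp [Finset.filter_singleton, Finset.sum_singleton]
    split_ifs <;> simp
  -- e1 : card B
  have hfibsum : Fintype.card B = ∑ j, (fib j).card := by
    rw [← Finset.card_univ]
    rw [Finset.card_eq_sum_card_fiberwise (f := f) (t := Finset.univ)
      (fun b _ => Finset.mem_univ (f b))]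
    exact Finset.sum_congr rfl fun j _ => by rw [hfib]
  have hsumP : ∑ j, (fib j).card = ∑ j ∈ P, (fib j).card := by
    refine (Finset.sum_subset (Finset.subset_univ P) ?_).symm
    intro j _ hj
    rw [hPdef, mem_filter] at hj
    have : fib j = ∅ := Finset.not_nonempty_iff_eq_empty.mp (fun h => hj ⟨mem_univ j, h⟩)
    simp [this]
  have hsplitP : ∑ j ∈ P, (fib j).card
      = ∑ j ∈ Sset, (fib j).card + ∑ j ∈ Mset, (fib j).card :=
    (Finset.sum_filter_add_sum_filter_not P _ _).symm
  have hSsum : ∑ j ∈ Sset, (fib j).card = Sset.card := by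
    rw [Finset.card_eq_sum_ones]
    exact Finset.sum_congr rfl fun j hj => by
      rw [hSdef, mem_filter] at hj; exact hj.2
  have e1 : Fintype.card B = Sset.card + ∑ j ∈ Mset, (fib j).card := by
    rw [hfibsum, hsumP, hsplitP, hSsum]
  -- e2 : P.card
  have e2 : P.card = Sset.card + Mset.card :=
    (Finset.card_filter_add_card_filter_not (p := fun j => (fib j).card = 1)).symm
  -- e3 : Nm
  have hNm0 : Nm = ∑ j, ((fib j).filter (fun b => s b = m)).card := by
    rw [hNmdef, Finset.card_eq_sum_card_fiberwise (f := f) (t := Finset.univ)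
      (fun b _ => Finset.mem_univ (f b))]
    refine Finset.sum_congr rfl fun j _ => ?_
    rw [hfib, Finset.filter_comm]
  have hNm1 : ∑ j, ((fib j).filter (fun b => s b = m)).card
      = ∑ j ∈ P, ((fib j).filter (fun b => s b = m)).card := by
    refine (Finset.sum_subset (Finset.subset_univ P) ?_).symm
    intro j _ hj
    rw [hPdef, mem_filter] at hj
    have : fib j = ∅ := Finset.not_nonempty_iff_eq_empty.mp (fun h => hj ⟨mem_univ j, h⟩)
    simp [this]
  have hNm2 : ∑ j ∈ P, ((fib j).filter (fun b => s b = m)).card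
      = ∑ j ∈ Sset, ((fib j).filter (fun b => s b = m)).card
        + ∑ j ∈ Mset, ((fib j).filter (fun b => s b = m)).card :=
    (Finset.sum_filter_add_sum_filter_not P _ _).symm
  have hSm : ∑ j ∈ Sset, ((fib j).filter (fun b => s b = m)).card
      = (Sset.filter (fun j => ∑ b ∈ fib j, s b = m)).card := by
    rw [Finset.card_filter]
    exact Finset.sum_congr rfl hsingle
  have e3 : Nm = (Sset.filter (fun j => ∑ b ∈ fib j, s b = m)).card
      + ∑ j ∈ Mset, ((fib j).filter (fun b => s b = m)).card := by
    rw [hNm0, hNm1, hNm2, hSm]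
  -- e4 : Q.card
  have hQP : Q = P.filter (fun j => ∑ b ∈ fib j, s b = m) := by
    rw [hQdef, hPdef, Finset.filter_filter]
  have e4 : Q.card = (Sset.filter (fun j => ∑ b ∈ fib j, s b = m)).card
      + (Mset.filter (fun j => ∑ b ∈ fib j, s b = m)).card := by
    rw [hQP,
      ← Finset.card_filter_add_card_filter_not
        (s := P.filter (fun j => ∑ b ∈ fib j, s b = m))
        (p := fun j => (fib j).card = 1),
      Finset.filter_comm, hSdef]
    congr 1
    rw [Finset.filter_comm, hMdef]
  -- inequalities
  have i1 : ∑ j ∈ Mset, ((fib j).filter (fun b => s b = m)).card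
      ≤ ∑ j ∈ Mset, (fib j).card :=
    Finset.sum_le_sum fun j _ => Finset.card_filter_le _ _
  have i2 : 2 * Mset.card ≤ ∑ j ∈ Mset, (fib j).card := by
    calc 2 * Mset.card = ∑ _j ∈ Mset, 2 := by rw [Finset.sum_const, smul_eq_mul, mul_comm]
    _ ≤ ∑ j ∈ Mset, (fib j).card := Finset.sum_le_sum hM2
  have i3 : (Mset.filter (fun j => ∑ b ∈ fib j, s b = m)).card ≤ Mset.card :=
    Finset.card_filter_le _ _
  rw [abs_sub_le_iff]
  constructor <;> omega

open Classical in
/-- deterministic coagulation bound. Balls `b ∈ B` with sizes `s b ≥ 1` are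
allocated to `k` urns by `f : B → Fin k`; `N_m` counts balls of size `m`, `C_m` counts
nonempty urns whose total size is `m`, `N = #B`, `C` = number of nonempty urns. Then
`|N_m − C_m| ≤ 2·(N − C)` for every `m ≥ 1`. -/
theorem stmt5 {B : Type*} [Fintype B] (k : ℕ) (hk : 1 ≤ k)
    (s : B → ℕ) (hs : ∀ b, 1 ≤ s b) (f : B → Fin k) (m : ℕ) (hm : 1 ≤ m) :
    |((Finset.univ.filter (fun b : B => s b = m)).card : ℤ) -
        ((Finset.univ.filter (fun j : Fin k =>
            (Finset.univ.filter (fun b : B => f b = j)).Nonempty ∧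
            ∑ b ∈ Finset.univ.filter (fun b : B => f b = j), s b = m)).card : ℤ)| ≤
      2 * ((Fintype.card B : ℤ) -
        ((Finset.univ.filter (fun j : Fin k =>
            (Finset.univ.filter (fun b : B => f b = j)).Nonempty)).card : ℤ)) :=
  aux5 s f m (fun j => Finset.univ.filter (fun b : B => f b = j)) (fun _ => rfl)
end

section
/- Assume E[Γ] = 1. Then for every x > 0 and every z ∈ Z, one has Σ_{ℓ≥1} ℓ·C^x(z)(ℓ) = 1; that is, C^x(z) ∈ Z. -/
open MeasureTheory

/-- `φ⁻¹(ℓ)`: tuples `c = (c(1), …, c(ℓ))` of nonnegative integers with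
`Σ_{i=1}^ℓ i·c(i) = ℓ` (here `c i` stands for `c(i+1)` for `i : Fin ℓ`). -/
def parts (ℓ : ℕ) : Type := {c : Fin ℓ → ℕ // ∑ i : Fin ℓ, (i.1 + 1) * c i = ℓ}

/-- `|z| = Σ_{i≥1} z(i)` (sequences are indexed from `1`; `z 0 = 0` by convention). -/
noncomputable def znorm (z : ℕ → ℝ) : ℝ := ∑' i, z i

/-- `ψ_λ(z) = Σ_{i≥1} z(i)·λ^i`. -/
noncomputable def psi (lam : ℝ) (z : ℕ → ℝ) : ℝ := ∑' i, z i * lam ^ i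

/-- Membership in `Z`: a summable sequence of nonnegative reals, indexed from `1`
(`z 0 = 0`), with `Σ_{i≥1} i·z(i) = 1`. -/
def memZ (z : ℕ → ℝ) : Prop :=
  (∀ i, 0 ≤ z i) ∧ z 0 = 0 ∧ Summable z ∧ ∑' i : ℕ, (i : ℝ) * z i = 1

/-- The coagulation operator `C^x`, defined coordinatewise for `ℓ ≥ 1` by
`C^x(z)(ℓ) = E[ x·e^{−|z|·Γ/x} · Σ_{c ∈ φ⁻¹(ℓ)} Π_{i=1}^ℓ (z(i)·Γ/x)^{c(i)}/c(i)! ]`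
(and `C^x(z)(0) = 0`, in accordance with the indexing-from-one convention). -/
noncomputable def Cx {Ω : Type*} [MeasureSpace Ω] (Γ : Ω → ℝ) (x : ℝ) (z : ℕ → ℝ) :
    ℕ → ℝ :=
  fun ℓ =>
    if ℓ = 0 then 0
    else
      ∫ ω, x * Real.exp (-(znorm z * Γ ω) / x) *
        ∑' c : parts ℓ,
          ∏ i : Fin ℓ, (z (i.1 + 1) * Γ ω / x) ^ (c.1 i) / (Nat.factorial (c.1 i) : ℝ)

open scoped ENNReal BigOperators
open Finset

section Stmt7Aux

namespace Stmt7Aux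

/-! ### Finiteness of `parts ℓ` -/

lemma parts_le {ℓ : ℕ} (c : parts ℓ) (i : Fin ℓ) : c.1 i ≤ ℓ := by
  have h2 : (i.1 + 1) * c.1 i ≤ ℓ := by
    conv_rhs => rw [← c.2]
    exact Finset.single_le_sum (f := fun i : Fin ℓ => (i.1 + 1) * c.1 i)
      (fun _ _ => Nat.zero_le _) (Finset.mem_univ i)
  calc c.1 i ≤ (i.1 + 1) * c.1 i := Nat.le_mul_of_pos_left _ (Nat.succ_pos _)
    _ ≤ ℓ := h2

instance partsFinite (ℓ : ℕ) : Finite (parts ℓ) := by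
  have hinj : Function.Injective (fun c : parts ℓ =>
      fun i : Fin ℓ => (⟨c.1 i, Nat.lt_succ_of_le (parts_le c i)⟩ : Fin (ℓ + 1))) := by
    intro c c' h
    apply Subtype.ext
    funext i
    exact congrArg Fin.val (congrFun h i)
  exact Finite.of_injective _ hinj

noncomputable instance partsFintype (ℓ : ℕ) : Fintype (parts ℓ) := Fintype.ofFinite _

/-! ### ENNReal weights -/

noncomputable def phh (A : ℕ → ℝ≥0∞) (j n : ℕ) : ℝ≥0∞ := A j ^ n / (Nat.factorial n : ℝ≥0∞)

lemma phh_zero (A : ℕ → ℝ≥0∞) (j : ℕ) : phh A j 0 = 1 := by simp [phh]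

noncomputable def ww (A : ℕ → ℝ≥0∞) (b : ℕ →₀ ℕ) : ℝ≥0∞ :=
  b.prod (fun j n => phh A (j + 1) n)

lemma ww_eq_prod (A : ℕ → ℝ≥0∞) (b : ℕ →₀ ℕ) {s : Finset ℕ} (hs : b.support ⊆ s) :
    ww A b = ∏ j ∈ s, phh A (j + 1) (b j) :=
  Finsupp.prod_of_support_subset b hs _ (fun j _ => phh_zero A _)

/-! ### degree -/

def degb (b : ℕ →₀ ℕ) : ℕ := b.sum (fun j n => (j + 1) * n)

lemma lt_degb {b : ℕ →₀ ℕ} {j : ℕ} (hj : j ∈ b.support) : j < degb b := by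
  have h1 : 1 ≤ b j := Nat.one_le_iff_ne_zero.2 (Finsupp.mem_support_iff.1 hj)
  have h2 : (j + 1) * b j ≤ degb b :=
    Finset.single_le_sum (f := fun j => (j + 1) * b j) (fun _ _ => Nat.zero_le _) hj
  have h3 : j + 1 ≤ (j + 1) * b j := Nat.le_mul_of_pos_right _ h1
  omega

lemma support_subset_range_degb (b : ℕ →₀ ℕ) : b.support ⊆ Finset.range (degb b) :=
  fun j hj => Finset.mem_range.2 (lt_degb hj)

lemma degb_eq_sum_range (b : ℕ →₀ ℕ) :
    degb b = ∑ j ∈ Finset.range (degb b), (j + 1) * b j :=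
  Finsupp.sum_of_support_subset b (support_subset_range_degb b) _ (by simp)

/-! ### key single-step identities -/

lemma phh_succ (A : ℕ → ℝ≥0∞) (j n : ℕ) :
    ((n : ℝ≥0∞) + 1) * phh A j (n + 1) = A j * phh A j n := by
  have h0 : ((n : ℝ≥0∞) + 1) ≠ 0 := by
    simp
  have htop : ((n : ℝ≥0∞) + 1) ≠ ∞ := by
    exact ENNReal.add_ne_top.2 ⟨ENNReal.natCast_ne_top n, ENNReal.one_ne_top⟩
  have hfac : ((Nat.factorial (n + 1) : ℕ) : ℝ≥0∞) = ((n : ℝ≥0∞) + 1) * (Nat.factorial n : ℝ≥0∞) := by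
    rw [Nat.factorial_succ]
    push_cast
    ring
  unfold phh
  rw [hfac, pow_succ, div_eq_mul_inv, div_eq_mul_inv,
    ENNReal.mul_inv (Or.inl h0) (Or.inl htop)]
  calc ((n : ℝ≥0∞) + 1) * (A j ^ n * A j * (((n : ℝ≥0∞) + 1)⁻¹ * (Nat.factorial n : ℝ≥0∞)⁻¹))
      = (((n : ℝ≥0∞) + 1) * ((n : ℝ≥0∞) + 1)⁻¹) * (A j * (A j ^ n * (Nat.factorial n : ℝ≥0∞)⁻¹)) := by
        ring
    _ = A j * (A j ^ n * (Nat.factorial n : ℝ≥0∞)⁻¹) := by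
        rw [ENNReal.mul_inv_cancel h0 htop, one_mul]

lemma apply_add_single_ne (b : ℕ →₀ ℕ) (k n : ℕ) {j : ℕ} (hj : j ≠ k) :
    (b + Finsupp.single k n) j = b j := by
  rw [Finsupp.add_apply, Finsupp.single_apply, if_neg (fun h => hj h.symm), add_zero]

lemma support_add_single_subset (b : ℕ →₀ ℕ) (k n : ℕ) :
    (b + Finsupp.single k n).support ⊆ insert k b.support := by
  refine Finsupp.support_add.trans ?_
  apply Finset.union_subset
  · exact Finset.subset_insert _ _
  · exact Finsupp.support_single_subset.trans (by
      intro j hj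
      rw [Finset.mem_singleton] at hj
      exact hj ▸ Finset.mem_insert_self _ _)

lemma ww_add_single (A : ℕ → ℝ≥0∞) (b : ℕ →₀ ℕ) (k n : ℕ) (hk : b k = 0) :
    ww A (b + Finsupp.single k n) = phh A (k + 1) n * ww A b := by
  classical
  set u : Finset ℕ := insert k b.support with hu
  have hmem : k ∈ u := Finset.mem_insert_self _ _
  rw [ww_eq_prod A _ (support_add_single_subset b k n),
      ww_eq_prod A b (Finset.subset_insert _ _)]
  rw [← Finset.mul_prod_erase u _ hmem, ← Finset.mul_prod_erase u _ hmem]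
  have h1 : (b + Finsupp.single k n) k = n := by
    rw [Finsupp.add_apply, hk, Finsupp.single_eq_same, zero_add]
  have h2 : ∀ j ∈ u.erase k, phh A (j + 1) ((b + Finsupp.single k n) j) = phh A (j + 1) (b j) :=
    fun j hj => by rw [apply_add_single_ne b k n (Finset.ne_of_mem_erase hj)]
  rw [h1, hk, phh_zero, Finset.prod_congr rfl h2]
  ring

lemma ww_mul_succ (A : ℕ → ℝ≥0∞) (b : ℕ →₀ ℕ) (k : ℕ) :
    ((b k : ℝ≥0∞) + 1) * ww A (b + Finsupp.single k 1) = A (k + 1) * ww A b := by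
  classical
  set u : Finset ℕ := insert k b.support with hu
  have hmem : k ∈ u := Finset.mem_insert_self _ _
  rw [ww_eq_prod A _ (support_add_single_subset b k 1),
      ww_eq_prod A b (Finset.subset_insert _ _)]
  rw [← Finset.mul_prod_erase u _ hmem, ← Finset.mul_prod_erase u _ hmem]
  have h1 : (b + Finsupp.single k 1 : ℕ →₀ ℕ) k = b k + 1 := by
    rw [Finsupp.add_apply, Finsupp.single_eq_same]
  have h2 : ∀ j ∈ u.erase k, phh A (j + 1) ((b + Finsupp.single k 1 : ℕ →₀ ℕ) j) = phh A (j + 1) (b j) :=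
    fun j hj => by rw [apply_add_single_ne b k 1 (Finset.ne_of_mem_erase hj)]
  rw [h1, Finset.prod_congr rfl h2, ← mul_assoc, ← mul_assoc]
  congr 1
  have := phh_succ A (k + 1) (b k)
  push_cast
  rw [mul_comm (A (k + 1)) _] at this ⊢
  exact this

lemma tsum_apply_mul_ww (A : ℕ → ℝ≥0∞) (k : ℕ) :
    ∑' b : ℕ →₀ ℕ, (b k : ℝ≥0∞) * ww A b = A (k + 1) * ∑' b : ℕ →₀ ℕ, ww A b := by
  rw [← ENNReal.tsum_mul_left]
  have hT : Function.Injective (fun b : ℕ →₀ ℕ => b + Finsupp.single k 1) := by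
    intro b b' h
    ext j
    have h2 := DFunLike.congr_fun h j
    simp only [Finsupp.add_apply] at h2
    omega
  have hsupp : Function.support (fun b : ℕ →₀ ℕ => (b k : ℝ≥0∞) * ww A b)
      ⊆ Set.range (fun b : ℕ →₀ ℕ => b + Finsupp.single k 1) := by
    intro b hb
    have hk : b k ≠ 0 := by
      intro h
      apply hb
      simp [h]
    refine ⟨b.erase k + Finsupp.single k (b k - 1), ?_⟩
    have : Finsupp.single k (b k - 1) + Finsupp.single k 1 = Finsupp.single k (b k) := by
      rw [← Finsupp.single_add]
      congr 1
      omega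
    simp only [add_assoc, this]
    rw [Finsupp.erase_add_single]
  have key : ∀ b : ℕ →₀ ℕ,
      (((b + Finsupp.single k 1 : ℕ →₀ ℕ) k : ℝ≥0∞)) * ww A (b + Finsupp.single k 1)
        = A (k + 1) * ww A b := by
    intro b
    have h1 : (b + Finsupp.single k 1 : ℕ →₀ ℕ) k = b k + 1 := by
      rw [Finsupp.add_apply, Finsupp.single_eq_same]
    rw [h1]
    push_cast
    exact ww_mul_succ A b k
  calc ∑' b : ℕ →₀ ℕ, (b k : ℝ≥0∞) * ww A b
      = ∑' b : ℕ →₀ ℕ,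
          (((b + Finsupp.single k 1 : ℕ →₀ ℕ) k : ℝ≥0∞)) * ww A (b + Finsupp.single k 1) :=
        (Function.Injective.tsum_eq hT hsupp).symm
    _ = ∑' b : ℕ →₀ ℕ, A (k + 1) * ww A b := tsum_congr key

/-! ### total weight equals exponential -/

lemma tsum_phh (a : ℝ) (ha : 0 ≤ a) :
    ∑' n : ℕ, ENNReal.ofReal a ^ n / (Nat.factorial n : ℝ≥0∞) = ENNReal.ofReal (Real.exp a) := by
  have h1 : ∀ n : ℕ, ENNReal.ofReal a ^ n / (Nat.factorial n : ℝ≥0∞)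
      = ENNReal.ofReal (a ^ n / (Nat.factorial n : ℝ)) := by
    intro n
    rw [ENNReal.ofReal_div_of_pos (by positivity), ENNReal.ofReal_pow ha,
      ENNReal.ofReal_natCast]
  simp_rw [h1]
  rw [← ENNReal.ofReal_tsum_of_nonneg (fun n => by positivity)
    (Real.summable_pow_div_factorial a)]
  congr 1
  rw [Real.exp_eq_exp_ℝ, NormedSpace.exp_eq_tsum_div]

lemma tsum_ww_subtype (A : ℕ → ℝ≥0∞) (s : Finset ℕ) :
    ∑' b : {b : ℕ →₀ ℕ // b.support ⊆ s}, ww A b.1 = ∏ j ∈ s, ∑' n : ℕ, phh A (j + 1) n := by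
  classical
  induction s using Finset.induction_on with
  | empty =>
      have hzero : ((⟨0, by simp⟩ : {b : ℕ →₀ ℕ // b.support ⊆ (∅ : Finset ℕ)})) =
        (⟨0, by simp⟩ : {b : ℕ →₀ ℕ // b.support ⊆ (∅ : Finset ℕ)}) := rfl
      have hu : ∀ b : {b : ℕ →₀ ℕ // b.support ⊆ (∅ : Finset ℕ)},
          b = ⟨0, by simp⟩ := by
        rintro ⟨b, hb⟩
        have : b = 0 := by
          rw [← Finsupp.support_eq_empty]
          exact Finset.subset_empty.1 hb
        exact Subtype.ext this
      rw [tsum_eq_single (⟨0, by simp⟩ : {b : ℕ →₀ ℕ // b.support ⊆ (∅ : Finset ℕ)})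
        (fun b' hb' => (hb' (hu b')).elim)]
      simp [ww]
  | @insert k s hk ih =>
      have hbk : ∀ b : {b : ℕ →₀ ℕ // b.support ⊆ s}, b.1 k = 0 := by
        intro b
        by_contra hne
        exact hk (b.2 (Finsupp.mem_support_iff.2 hne))
      let e : ℕ × {b : ℕ →₀ ℕ // b.support ⊆ s} ≃ {b : ℕ →₀ ℕ // b.support ⊆ insert k s} :=
      { toFun := fun p => ⟨p.2.1 + Finsupp.single k p.1, by
          refine (support_add_single_subset p.2.1 k p.1).trans ?_
          exact Finset.insert_subset_insert _ p.2.2⟩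
        invFun := fun b => (b.1 k, ⟨b.1.erase k, by
          intro j hj
          rw [Finsupp.support_erase, Finset.mem_erase] at hj
          rcases Finset.mem_insert.1 (b.2 hj.2) with h | h
          · exact absurd h hj.1
          · exact h⟩)
        left_inv := fun p => by
          have h1 : (p.2.1 + Finsupp.single k p.1 : ℕ →₀ ℕ) k = p.1 := by
            rw [Finsupp.add_apply, hbk p.2, Finsupp.single_eq_same, zero_add]
          refine Prod.ext ?_ (Subtype.ext ?_)
          · exact h1
          · ext j
            by_cases hj : j = k
            · subst hj
              rw [Finsupp.erase_same, hbk p.2]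
            · rw [Finsupp.erase_ne hj, apply_add_single_ne _ _ _ hj]
        right_inv := fun b => by
          refine Subtype.ext ?_
          show b.1.erase k + Finsupp.single k (b.1 k) = b.1
          rw [Finsupp.erase_add_single] }
      rw [← Equiv.tsum_eq e (fun b => ww A b.1)]
      have hterm : ∀ p : ℕ × {b : ℕ →₀ ℕ // b.support ⊆ s},
          ww A ((e p).1) = phh A (k + 1) p.1 * ww A p.2.1 := by
        intro p
        show ww A (p.2.1 + Finsupp.single k p.1) = _
        exact ww_add_single A p.2.1 k p.1 (hbk p.2)
      rw [tsum_congr hterm, ENNReal.tsum_prod']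
      simp_rw [ENNReal.tsum_mul_left, ENNReal.tsum_mul_right]
      rw [ih, Finset.prod_insert hk]

lemma tsum_ww_finset (α : ℕ → ℝ) (hα : ∀ j, 0 ≤ α j) (A : ℕ → ℝ≥0∞)
    (hA : ∀ j, A (j + 1) = ENNReal.ofReal (α j)) (s : Finset ℕ) :
    ∑' b : {b : ℕ →₀ ℕ // b.support ⊆ s}, ww A b.1
      = ENNReal.ofReal (Real.exp (∑ j ∈ s, α j)) := by
  rw [tsum_ww_subtype]
  have h1 : ∀ j ∈ s, ∑' n : ℕ, phh A (j + 1) n = ENNReal.ofReal (Real.exp (α j)) := by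
    intro j _
    have := tsum_phh (α j) (hα j)
    simp_rw [phh, hA j]
    exact this
  rw [Finset.prod_congr rfl h1, ← ENNReal.ofReal_prod_of_nonneg
    (fun j _ => (Real.exp_pos (α j)).le), Real.exp_sum]

lemma tsum_ww_eq (α : ℕ → ℝ) (hα : ∀ j, 0 ≤ α j) (hs : Summable α) (A : ℕ → ℝ≥0∞)
    (hA : ∀ j, A (j + 1) = ENNReal.ofReal (α j)) :
    ∑' b : ℕ →₀ ℕ, ww A b = ENNReal.ofReal (Real.exp (∑' j, α j)) := by
  classical
  apply le_antisymm
  · rw [ENNReal.tsum_eq_iSup_sum]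
    apply iSup_le
    intro t
    set s : Finset ℕ := t.sup Finsupp.support with hs'
    have hsub : ∀ b ∈ t, b.support ⊆ s := fun b hb => Finset.le_sup hb
    have h1 : ∑ b ∈ t, ww A b ≤ ∑' b : {b : ℕ →₀ ℕ // b.support ⊆ s}, ww A b.1 := by
      let emb : {b : ℕ →₀ ℕ // b ∈ t} → {b : ℕ →₀ ℕ // b.support ⊆ s} :=
        fun b => ⟨b.1, hsub b.1 b.2⟩
      have hembinj : Function.Injective emb := by
        intro a a' h
        have h2 := congrArg Subtype.val h
        exact Subtype.ext h2
      calc ∑ b ∈ t, ww A b = ∑ b ∈ t.attach, ww A b.1 := (Finset.sum_attach t _).symm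
        _ = ∑ b ∈ t.attach, ww A (emb b).1 := rfl
        _ ≤ ∑' b : {b : ℕ →₀ ℕ // b ∈ t}, ww A (emb b).1 := ENNReal.sum_le_tsum _
        _ ≤ ∑' b : {b : ℕ →₀ ℕ // b.support ⊆ s}, ww A b.1 :=
            ENNReal.tsum_comp_le_tsum_of_injective hembinj _
    refine h1.trans ?_
    rw [tsum_ww_finset α hα A hA s]
    apply ENNReal.ofReal_le_ofReal
    exact Real.exp_le_exp.2 (Summable.sum_le_tsum s (fun j _ => hα j) hs)
  · have key : ∀ s : Finset ℕ,
        ENNReal.ofReal (Real.exp (∑ j ∈ s, α j)) ≤ ∑' b : ℕ →₀ ℕ, ww A b := by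
      intro s
      rw [← tsum_ww_finset α hα A hA s]
      exact ENNReal.tsum_comp_le_tsum_of_injective Subtype.val_injective _
    have htend : Filter.Tendsto (fun s : Finset ℕ => ENNReal.ofReal (Real.exp (∑ j ∈ s, α j)))
        Filter.atTop (nhds (ENNReal.ofReal (Real.exp (∑' j, α j)))) := by
      have h1 : Filter.Tendsto (fun s : Finset ℕ => ∑ j ∈ s, α j) Filter.atTop
          (nhds (∑' j, α j)) := hs.hasSum
      exact (ENNReal.continuous_ofReal.tendsto _).comp
        ((Real.continuous_exp.tendsto _).comp h1)
    exact le_of_tendsto htend (Filter.Eventually.of_forall key)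

/-! ### the sigma reindexing -/

def toParts (b : ℕ →₀ ℕ) : parts (degb b) :=
  ⟨fun i => b i.1, by
    rw [Fin.sum_univ_eq_sum_range (fun j => (j + 1) * b j) (degb b)]
    exact (degb_eq_sum_range b).symm⟩

lemma toParts_inj :
    Function.Injective (fun b : ℕ →₀ ℕ => (⟨degb b, toParts b⟩ : Σ ℓ, parts ℓ)) := by
  intro b b' h
  have h1 : degb b = degb b' := congrArg Sigma.fst h
  have h2 : ∀ j, j < degb b → b j = b' j := by
    intro j hj
    have h3 := congrArg
      (fun σ : Σ ℓ, parts ℓ => if hh : j < σ.1 then σ.2.1 ⟨j, hh⟩ else 0) h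
    simp only [dif_pos hj, dif_pos (h1 ▸ hj)] at h3
    exact h3
  ext j
  by_cases hj : j < degb b
  · exact h2 j hj
  · have hb : b j = 0 := by
      by_contra hne
      exact hj (lt_degb (Finsupp.mem_support_iff.2 hne))
    have hb' : b' j = 0 := by
      by_contra hne
      exact hj (h1 ▸ lt_degb (Finsupp.mem_support_iff.2 hne))
    rw [hb, hb']

lemma sigma_parts_eq {n m : ℕ} (p : parts n) (q : parts m) (h : n = m)
    (h2 : ∀ j (hjn : j < n) (hjm : j < m), p.1 ⟨j, hjn⟩ = q.1 ⟨j, hjm⟩) :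
    (⟨n, p⟩ : Σ ℓ, parts ℓ) = ⟨m, q⟩ := by
  subst h
  exact congrArg (Sigma.mk n) (Subtype.ext (funext fun i => h2 i.1 i.2 i.2))

lemma degb_cast (b : ℕ →₀ ℕ) :
    (degb b : ℝ≥0∞) = ∑' k : ℕ, (((k + 1) * b k : ℕ) : ℝ≥0∞) := by
  rw [tsum_eq_sum (s := b.support)
    (fun k hk => by rw [Finsupp.notMem_support_iff.1 hk, Nat.mul_zero, Nat.cast_zero])]
  rw [degb, Finsupp.sum, Nat.cast_sum]

lemma core (A : ℕ → ℝ≥0∞) :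
    ∑' ℓ : ℕ, (ℓ : ℝ≥0∞) * ∑' c : parts ℓ, ∏ i : Fin ℓ, phh A (i.1 + 1) (c.1 i)
      = (∑' k : ℕ, ((k : ℝ≥0∞) + 1) * A (k + 1)) * ∑' b : ℕ →₀ ℕ, ww A b := by
  classical
  set F : (Σ ℓ : ℕ, parts ℓ) → ℝ≥0∞ :=
    fun σ => (σ.1 : ℝ≥0∞) * ∏ i : Fin σ.1, phh A (i.1 + 1) (σ.2.1 i) with hF
  set G : (ℕ →₀ ℕ) → ℝ≥0∞ := fun b => (degb b : ℝ≥0∞) * ww A b with hG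
  have step1 : ∑' ℓ : ℕ, (ℓ : ℝ≥0∞) * ∑' c : parts ℓ, ∏ i : Fin ℓ, phh A (i.1 + 1) (c.1 i)
      = ∑' σ : Σ ℓ : ℕ, parts ℓ, F σ := by
    rw [ENNReal.tsum_sigma' F]
    exact tsum_congr fun ℓ => ENNReal.tsum_mul_left.symm
  have hi : Function.Injective
      (fun b : Function.support G => (⟨degb b.1, toParts b.1⟩ : Σ ℓ : ℕ, parts ℓ)) := by
    intro b b' h
    exact Subtype.ext (toParts_inj h)
  have hfg : ∀ b : Function.support G,
      F ⟨degb b.1, toParts b.1⟩ = G b.1 := by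
    intro b
    simp only [hF, hG]
    congr 1
    rw [ww_eq_prod A b.1 (support_subset_range_degb b.1),
      ← Fin.prod_univ_eq_prod_range (fun j => phh A (j + 1) (b.1 j)) (degb b.1)]
    rfl
  have hf : Function.support F ⊆
      Set.range (fun b : Function.support G => (⟨degb b.1, toParts b.1⟩ : Σ ℓ : ℕ, parts ℓ)) := by
    rintro ⟨ℓ, c⟩ hσ
    rw [Function.mem_support] at hσ
    set bc : ℕ →₀ ℕ := Finsupp.onFinset (Finset.range ℓ)
      (fun j => if h : j < ℓ then c.1 ⟨j, h⟩ else 0)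
      (fun j hj => by
        rw [Finset.mem_range]
        by_contra h
        simp only [dif_neg h] at hj
        exact hj rfl) with hbcdef
    have hbc : ∀ (j : ℕ) (hj : j < ℓ), bc j = c.1 ⟨j, hj⟩ := fun j hj => dif_pos hj
    have hsupp : bc.support ⊆ Finset.range ℓ := Finsupp.support_onFinset_subset
    have hdeg : degb bc = ℓ := by
      rw [degb, Finsupp.sum_of_support_subset bc hsupp _ (by simp),
        ← Fin.sum_univ_eq_sum_range (fun j => (j + 1) * bc j) ℓ]
      calc ∑ i : Fin ℓ, (i.1 + 1) * bc i.1
          = ∑ i : Fin ℓ, (i.1 + 1) * c.1 i :=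
            Finset.sum_congr rfl (fun i _ => by rw [hbc i.1 i.2])
        _ = ℓ := c.2
    have hww : ww A bc = ∏ i : Fin ℓ, phh A (i.1 + 1) (c.1 i) := by
      rw [ww_eq_prod A bc hsupp,
        ← Fin.prod_univ_eq_prod_range (fun j => phh A (j + 1) (bc j)) ℓ]
      exact Finset.prod_congr rfl (fun i _ => by rw [hbc i.1 i.2])
    have hGbc : bc ∈ Function.support G := by
      rw [Function.mem_support, hG]
      simp only []
      rw [hdeg, hww]
      exact hσ
    refine ⟨⟨bc, hGbc⟩, ?_⟩
    show (⟨degb bc, toParts bc⟩ : Σ ℓ : ℕ, parts ℓ) = ⟨ℓ, c⟩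
    refine sigma_parts_eq _ _ hdeg ?_
    intro j hjn hjm
    show bc j = c.1 ⟨j, hjm⟩
    exact hbc j hjm
  have step2 : ∑' σ : Σ ℓ : ℕ, parts ℓ, F σ = ∑' b : ℕ →₀ ℕ, G b :=
    tsum_eq_tsum_of_ne_zero_bij _ hi hf hfg
  have step3 : ∑' b : ℕ →₀ ℕ, G b
      = (∑' k : ℕ, ((k : ℝ≥0∞) + 1) * A (k + 1)) * ∑' b : ℕ →₀ ℕ, ww A b := by
    calc ∑' b : ℕ →₀ ℕ, G b
        = ∑' b : ℕ →₀ ℕ, ∑' k : ℕ, (((k + 1) * b k : ℕ) : ℝ≥0∞) * ww A b := by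
          refine tsum_congr fun b => ?_
          rw [hG]
          simp only []
          rw [degb_cast b, ENNReal.tsum_mul_right]
      _ = ∑' k : ℕ, ∑' b : ℕ →₀ ℕ, (((k + 1) * b k : ℕ) : ℝ≥0∞) * ww A b :=
          ENNReal.tsum_comm
      _ = ∑' k : ℕ, ((k : ℝ≥0∞) + 1) * (A (k + 1) * ∑' b : ℕ →₀ ℕ, ww A b) := by
          refine tsum_congr fun k => ?_
          rw [← tsum_apply_mul_ww A k, ← ENNReal.tsum_mul_left]
          refine tsum_congr fun b => ?_
          push_cast
          ring
      _ = (∑' k : ℕ, ((k : ℝ≥0∞) + 1) * A (k + 1)) * ∑' b : ℕ →₀ ℕ, ww A b := by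
          simp_rw [← mul_assoc]
          rw [ENNReal.tsum_mul_right]
  rw [step1, step2, step3]

lemma pointwise (z : ℕ → ℝ) (hz : memZ z) (x : ℝ) (hx : 0 < x) (γ : ℝ) (hγ : 0 ≤ γ) :
    ∑' ℓ : ℕ, (ℓ : ℝ≥0∞) * ENNReal.ofReal (x * Real.exp (-(znorm z * γ) / x) *
      ∑' c : parts ℓ, ∏ i : Fin ℓ,
        (z (i.1 + 1) * γ / x) ^ (c.1 i) / (Nat.factorial (c.1 i) : ℝ))
      = ENNReal.ofReal γ := by
  obtain ⟨hz0, hzz, hzs, hzt⟩ := hz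
  have hmul : Summable (fun i : ℕ => (i : ℝ) * z i) := by
    by_contra h
    rw [tsum_eq_zero_of_not_summable h] at hzt
    norm_num at hzt
  set A : ℕ → ℝ≥0∞ := fun j => ENNReal.ofReal (z j * γ / x) with hA
  have hconv : ∀ ℓ : ℕ,
      ENNReal.ofReal (∑' c : parts ℓ, ∏ i : Fin ℓ,
          (z (i.1 + 1) * γ / x) ^ (c.1 i) / (Nat.factorial (c.1 i) : ℝ))
        = ∑' c : parts ℓ, ∏ i : Fin ℓ, phh A (i.1 + 1) (c.1 i) := by
    intro ℓ
    rw [tsum_fintype, tsum_fintype]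
    rw [ENNReal.ofReal_sum_of_nonneg (fun c _ => Finset.prod_nonneg (fun i _ =>
      div_nonneg (pow_nonneg (div_nonneg (mul_nonneg (hz0 _) hγ) hx.le) _)
        (Nat.cast_nonneg _)))]
    refine Finset.sum_congr rfl (fun c _ => ?_)
    rw [ENNReal.ofReal_prod_of_nonneg (fun i _ =>
      div_nonneg (pow_nonneg (div_nonneg (mul_nonneg (hz0 _) hγ) hx.le) _)
        (Nat.cast_nonneg _))]
    refine Finset.prod_congr rfl (fun i _ => ?_)
    rw [phh, hA]
    rw [ENNReal.ofReal_div_of_pos (by positivity),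
      ENNReal.ofReal_pow (div_nonneg (mul_nonneg (hz0 _) hγ) hx.le),
      ENNReal.ofReal_natCast]
  have hT : ∑' k : ℕ, ((k : ℝ≥0∞) + 1) * A (k + 1) = ENNReal.ofReal (γ / x) := by
    have hsummand : ∀ k : ℕ, ((k : ℝ≥0∞) + 1) * A (k + 1)
        = ENNReal.ofReal (((k : ℝ) + 1) * (z (k + 1) * γ / x)) := by
      intro k
      rw [hA]
      rw [ENNReal.ofReal_mul (by positivity)]
      congr 1
      rw [← ENNReal.ofReal_natCast k, ← ENNReal.ofReal_one,
        ← ENNReal.ofReal_add (Nat.cast_nonneg k) zero_le_one]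
    have h1 : Summable (fun k : ℕ => ((k : ℝ) + 1) * z (k + 1)) := by
      have h0 := (summable_nat_add_iff (f := fun i : ℕ => (i : ℝ) * z i) 1).2 hmul
      refine h0.congr fun k => ?_
      push_cast
      ring
    have hsummable : Summable (fun k : ℕ => ((k : ℝ) + 1) * (z (k + 1) * γ / x)) := by
      refine (h1.mul_right (γ / x)).congr fun k => ?_
      ring
    rw [tsum_congr hsummand,
      ← ENNReal.ofReal_tsum_of_nonneg (fun k => by
        have := mul_nonneg (hz0 (k + 1)) hγ
        positivity) hsummable]
    congr 1
    have hval : ∑' k : ℕ, ((k : ℝ) + 1) * (z (k + 1) * γ / x)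
        = (∑' k : ℕ, ((k : ℝ) + 1) * z (k + 1)) * (γ / x) := by
      rw [← tsum_mul_right]
      exact tsum_congr fun k => by ring
    have hshift : ∑' k : ℕ, ((k : ℝ) + 1) * z (k + 1) = 1 := by
      have h0 := Summable.tsum_eq_zero_add hmul
      rw [hzt] at h0
      simp only [Nat.cast_zero, zero_mul, zero_add] at h0
      push_cast at h0
      exact h0.symm
    rw [hval, hshift, one_mul]
  have hW : ∑' b : ℕ →₀ ℕ, ww A b = ENNReal.ofReal (Real.exp (znorm z * γ / x)) := by
    have hα : ∀ j : ℕ, 0 ≤ z (j + 1) * γ / x := fun j =>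
      div_nonneg (mul_nonneg (hz0 _) hγ) hx.le
    have hαs : Summable (fun j : ℕ => z (j + 1) * γ / x) := by
      have h0 := (summable_nat_add_iff (f := z) 1).2 hzs
      refine (h0.mul_right (γ / x)).congr fun j => ?_
      ring
    rw [tsum_ww_eq (fun j => z (j + 1) * γ / x) hα hαs A (fun j => rfl)]
    congr 2
    have h1 : ∑' j : ℕ, z (j + 1) * γ / x = (∑' j : ℕ, z (j + 1)) * (γ / x) := by
      rw [← tsum_mul_right]
      exact tsum_congr fun j => by ring
    have h2 : ∑' j : ℕ, z (j + 1) = znorm z := by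
      rw [znorm, Summable.tsum_eq_zero_add hzs, hzz, zero_add]
    rw [h1, h2]
    ring
  have hofg : ∀ ℓ : ℕ, ENNReal.ofReal (x * Real.exp (-(znorm z * γ) / x) *
      ∑' c : parts ℓ, ∏ i : Fin ℓ,
        (z (i.1 + 1) * γ / x) ^ (c.1 i) / (Nat.factorial (c.1 i) : ℝ))
      = (ENNReal.ofReal x * ENNReal.ofReal (Real.exp (-(znorm z * γ) / x)))
        * ∑' c : parts ℓ, ∏ i : Fin ℓ, phh A (i.1 + 1) (c.1 i) := by
    intro ℓ
    rw [ENNReal.ofReal_mul (mul_nonneg hx.le (Real.exp_nonneg _)),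
      ENNReal.ofReal_mul hx.le, hconv ℓ]
  calc ∑' ℓ : ℕ, (ℓ : ℝ≥0∞) * ENNReal.ofReal (x * Real.exp (-(znorm z * γ) / x) *
        ∑' c : parts ℓ, ∏ i : Fin ℓ,
          (z (i.1 + 1) * γ / x) ^ (c.1 i) / (Nat.factorial (c.1 i) : ℝ))
      = ∑' ℓ : ℕ, (ENNReal.ofReal x * ENNReal.ofReal (Real.exp (-(znorm z * γ) / x)))
          * ((ℓ : ℝ≥0∞) * ∑' c : parts ℓ, ∏ i : Fin ℓ, phh A (i.1 + 1) (c.1 i)) := by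
        refine tsum_congr fun ℓ => ?_
        rw [hofg ℓ]
        ring
    _ = (ENNReal.ofReal x * ENNReal.ofReal (Real.exp (-(znorm z * γ) / x)))
          * ∑' ℓ : ℕ, (ℓ : ℝ≥0∞) * ∑' c : parts ℓ, ∏ i : Fin ℓ, phh A (i.1 + 1) (c.1 i) :=
        ENNReal.tsum_mul_left
    _ = ENNReal.ofReal γ := by
        rw [core A, hT, hW]
        rw [← ENNReal.ofReal_mul (div_nonneg hγ hx.le),
          ← ENNReal.ofReal_mul hx.le,
          ← ENNReal.ofReal_mul (mul_nonneg hx.le (Real.exp_nonneg _))]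
        congr 1
        have hexp : Real.exp (znorm z * γ / x) ≠ 0 := (Real.exp_pos _).ne'
        rw [neg_div, Real.exp_neg]
        field_simp

end Stmt7Aux

end Stmt7Aux

/-- if `E[Γ] = 1`, then for every `x > 0` and `z ∈ Z`,
`Σ_{ℓ≥1} ℓ·C^x(z)(ℓ) = 1`, i.e. `C^x(z) ∈ Z`. -/
theorem stmt7 {Ω : Type*} [MeasureSpace Ω] [IsProbabilityMeasure (volume : Measure Ω)]
    (Γ : Ω → ℝ) (hΓm : Measurable Γ) (hΓ0 : ∀ ω, 0 ≤ Γ ω) (hΓint : Integrable Γ)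
    (hEΓ : ∫ ω, Γ ω = 1) (x : ℝ) (hx : 0 < x) (z : ℕ → ℝ) (hz : memZ z) :
    ∑' ℓ : ℕ, (ℓ : ℝ) * Cx Γ x z ℓ = 1 := by
  classical
  obtain ⟨hz0, hzz, hzs, hzt⟩ := hz
  set g : ℕ → Ω → ℝ := fun ℓ ω => x * Real.exp (-(znorm z * Γ ω) / x) *
      ∑' c : parts ℓ, ∏ i : Fin ℓ,
        (z (i.1 + 1) * Γ ω / x) ^ (c.1 i) / (Nat.factorial (c.1 i) : ℝ) with hg
  have hgm : ∀ ℓ : ℕ, Measurable (g ℓ) := by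
    intro ℓ
    have hS : Measurable (fun ω => ∑' c : parts ℓ, ∏ i : Fin ℓ,
        (z (i.1 + 1) * Γ ω / x) ^ (c.1 i) / (Nat.factorial (c.1 i) : ℝ)) := by
      have heq : (fun ω => ∑' c : parts ℓ, ∏ i : Fin ℓ,
          (z (i.1 + 1) * Γ ω / x) ^ (c.1 i) / (Nat.factorial (c.1 i) : ℝ))
          = fun ω => ∑ c : parts ℓ, ∏ i : Fin ℓ,
            (z (i.1 + 1) * Γ ω / x) ^ (c.1 i) / (Nat.factorial (c.1 i) : ℝ) :=
        funext fun ω => tsum_fintype _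
      rw [heq]
      apply Finset.measurable_sum
      intro c _
      apply Finset.measurable_prod
      intro i _
      exact (((hΓm.const_mul (z (i.1 + 1))).div_const x).pow_const _).div_const _
    have hexp : Measurable (fun ω => Real.exp (-(znorm z * Γ ω) / x)) :=
      Real.measurable_exp.comp ((hΓm.const_mul (znorm z)).neg.div_const x)
    exact (measurable_const.mul hexp).mul hS
  have hg0 : ∀ (ℓ : ℕ) (ω : Ω), 0 ≤ g ℓ ω := by
    intro ℓ ω
    apply mul_nonneg (mul_nonneg hx.le (Real.exp_nonneg _))
    rw [tsum_fintype]
    apply Finset.sum_nonneg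
    intro c _
    apply Finset.prod_nonneg
    intro i _
    exact div_nonneg (pow_nonneg (div_nonneg (mul_nonneg (hz0 _) (hΓ0 ω)) hx.le) _)
      (Nat.cast_nonneg _)
  set I : ℕ → ℝ≥0∞ := fun ℓ => ∫⁻ ω, ENNReal.ofReal (g ℓ ω) with hI
  have hIsum : ∑' ℓ : ℕ, (ℓ : ℝ≥0∞) * I ℓ = 1 := by
    have h1 : ∀ ℓ : ℕ, (ℓ : ℝ≥0∞) * I ℓ
        = ∫⁻ ω, (ℓ : ℝ≥0∞) * ENNReal.ofReal (g ℓ ω) := fun ℓ =>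
      (lintegral_const_mul _ (hgm ℓ).ennreal_ofReal).symm
    rw [tsum_congr h1, ← lintegral_tsum (fun ℓ =>
      (((hgm ℓ).ennreal_ofReal).const_mul _).aemeasurable)]
    have h2 : ∀ ω : Ω, ∑' ℓ : ℕ, (ℓ : ℝ≥0∞) * ENNReal.ofReal (g ℓ ω)
        = ENNReal.ofReal (Γ ω) := fun ω =>
      Stmt7Aux.pointwise z ⟨hz0, hzz, hzs, hzt⟩ x hx (Γ ω) (hΓ0 ω)
    rw [lintegral_congr h2,
      ← ofReal_integral_eq_lintegral_ofReal hΓint (Filter.Eventually.of_forall hΓ0),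
      hEΓ, ENNReal.ofReal_one]
  have hCxI : ∀ ℓ : ℕ, ℓ ≠ 0 → Cx Γ x z ℓ = (I ℓ).toReal := by
    intro ℓ hℓ
    have h3 : Cx Γ x z ℓ = ∫ ω, g ℓ ω := by
      simp only [Cx, if_neg hℓ, hg]
    rw [h3, hI]
    exact integral_eq_lintegral_of_nonneg_ae
      (Filter.Eventually.of_forall (hg0 ℓ)) (hgm ℓ).aestronglyMeasurable
  have hfin : ∀ ℓ : ℕ, (ℓ : ℝ≥0∞) * I ℓ ≠ ∞ := by
    intro ℓ
    apply ne_top_of_le_ne_top _ (ENNReal.le_tsum ℓ)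
    rw [hIsum]
    exact ENNReal.one_ne_top
  calc ∑' ℓ : ℕ, (ℓ : ℝ) * Cx Γ x z ℓ
      = ∑' ℓ : ℕ, ((ℓ : ℝ≥0∞) * I ℓ).toReal := by
        refine tsum_congr fun ℓ => ?_
        rcases eq_or_ne ℓ 0 with h | h
        · subst h
          simp
        · rw [hCxI ℓ h, ENNReal.toReal_mul, ENNReal.toReal_natCast]
    _ = (∑' ℓ : ℕ, (ℓ : ℝ≥0∞) * I ℓ).toReal := (ENNReal.tsum_toReal_eq hfin).symm
    _ = 1 := by rw [hIsum, ENNReal.toReal_one]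
end

section
/- Assume E[Γ] = 1. Then for every x > 0, every z ∈ Z and every λ ∈ [0,1], the series Σ_{ℓ≥1} λ^ℓ·C^x(z)(ℓ) converges and equals E[ x·e^{−|z|·Γ/x}·( e^{ψ_λ(z)·Γ/x} − 1 ) ]. -/
open MeasureTheory

open scoped ENNReal NNReal

namespace Stmt8Aux

lemma parts_le {ℓ : ℕ} (c : parts ℓ) (i : Fin ℓ) : c.1 i ≤ ℓ := by
  calc c.1 i ≤ (i.1 + 1) * c.1 i := Nat.le_mul_of_pos_left _ (Nat.succ_pos _)
  _ ≤ ∑ j : Fin ℓ, (j.1 + 1) * c.1 j :=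
      Finset.single_le_sum (f := fun j : Fin ℓ => (j.1 + 1) * c.1 j) (fun j _ => Nat.zero_le _) (Finset.mem_univ i)
  _ = ℓ := c.2

noncomputable instance partsFintype (ℓ : ℕ) : Fintype (parts ℓ) :=
  Fintype.ofInjective (fun c : parts ℓ => fun i : Fin ℓ =>
      (⟨c.1 i, Nat.lt_succ_of_le (parts_le c i)⟩ : Fin (ℓ + 1)))
    (by
      intro c d h
      apply Subtype.ext
      funext i
      exact congrArg Fin.val (congrFun h i))

instance partsZeroUnique : Unique (parts 0) where
  default := ⟨fun i => i.elim0, by simp⟩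
  uniq := by
    rintro ⟨c, hc⟩
    apply Subtype.ext
    funext i
    exact i.elim0

noncomputable def pterm (v : ℕ → ℝ) (ℓ : ℕ) (c : parts ℓ) : ℝ :=
  ∏ i : Fin ℓ, v (i.1 + 1) ^ (c.1 i) / (Nat.factorial (c.1 i) : ℝ)

lemma pterm_nonneg {v : ℕ → ℝ} (hv : ∀ i, 0 ≤ v i) (ℓ : ℕ) (c : parts ℓ) :
    0 ≤ pterm v ℓ c :=
  Finset.prod_nonneg fun i _ => div_nonneg (pow_nonneg (hv _) _) (Nat.cast_nonneg _)

/-- extend `c : parts ℓ` to a function `ℕ → ℕ` (value at `j ∈ [1, ℓ]` is `c (j-1)`). -/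
def extc (ℓ : ℕ) (c : parts ℓ) : ℕ → ℕ :=
  fun j => if h : 0 < j ∧ j ≤ ℓ then c.1 ⟨j - 1, by omega⟩ else 0

lemma extc_succ {ℓ : ℕ} (c : parts ℓ) (i : Fin ℓ) : extc ℓ c (i.1 + 1) = c.1 i := by
  have h : 0 < i.1 + 1 ∧ i.1 + 1 ≤ ℓ := ⟨Nat.succ_pos _, i.isLt⟩
  have he : (⟨i.1 + 1 - 1, by omega⟩ : Fin ℓ) = i := Fin.ext rfl
  simp only [extc, dif_pos h, he]

lemma extc_vanish {ℓ : ℕ} (c : parts ℓ) {j : ℕ} (h : ¬(0 < j ∧ j ≤ ℓ)) : extc ℓ c j = 0 :=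
  dif_neg h

/-- reindexing lemma for sums. -/
lemma sum_shift {M : Type*} [AddCommMonoid M] (k : ℕ → ℕ) (ℓ : ℕ)
    (hk : ∀ j, ¬(0 < j ∧ j ≤ ℓ) → k j = 0) (F : ℕ → ℕ → M) (hF : ∀ j, F j 0 = 0)
    (L : ℕ) (hk' : ∀ j, k j ≠ 0 → j ≤ L) :
    ∑ j ∈ Finset.range (L + 1), F j (k j) = ∑ i : Fin ℓ, F (i.1 + 1) (k (i.1 + 1)) := by
  have h1 : ∑ j ∈ Finset.range (L + 1), F j (k j)
      = ∑ j ∈ Finset.range (max L ℓ + 1), F j (k j) := by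
    refine Finset.sum_subset (by intro j hj; simp at hj ⊢; omega) ?_
    intro j hj hj'
    simp only [Finset.mem_range] at hj hj'
    have hkj : k j = 0 := by by_contra hne; exact hj' (by have := hk' j hne; omega)
    rw [hkj, hF]
  have h2 : ∑ j ∈ Finset.range (max L ℓ + 1), F j (k j)
      = ∑ j ∈ Finset.range (ℓ + 1), F j (k j) := by
    refine (Finset.sum_subset (by intro j hj; simp at hj ⊢; omega) ?_).symm
    intro j hj hj'
    simp only [Finset.mem_range] at hj hj'
    rw [hk j (by omega), hF]
  rw [h1, h2, Finset.sum_range_succ', hk 0 (by omega), hF, add_zero,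
    ← Fin.sum_univ_eq_sum_range (fun i => F (i + 1) (k (i + 1)))]


/-- reindexing lemma for products. -/
lemma prod_shift (k : ℕ → ℕ) (ℓ : ℕ)
    (hk : ∀ j, ¬(0 < j ∧ j ≤ ℓ) → k j = 0) (F : ℕ → ℕ → ℝ) (hF : ∀ j, F j 0 = 1)
    (L : ℕ) (hk' : ∀ j, k j ≠ 0 → j ≤ L) :
    ∏ j ∈ Finset.range (L + 1), F j (k j) = ∏ i : Fin ℓ, F (i.1 + 1) (k (i.1 + 1)) := by
  have h1 : ∏ j ∈ Finset.range (L + 1), F j (k j)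
      = ∏ j ∈ Finset.range (max L ℓ + 1), F j (k j) := by
    refine Finset.prod_subset (by intro j hj; simp at hj ⊢; omega) ?_
    intro j hj hj'
    simp only [Finset.mem_range] at hj hj'
    have : k j = 0 := by by_contra hne; exact hj' (by have := hk' j hne; omega)
    rw [this, hF]
  have h2 : ∏ j ∈ Finset.range (max L ℓ + 1), F j (k j)
      = ∏ j ∈ Finset.range (ℓ + 1), F j (k j) := by
    refine (Finset.prod_subset (by intro j hj; simp at hj ⊢; omega) ?_).symm
    intro j hj hj'
    simp only [Finset.mem_range] at hj hj'
    rw [hk j (by omega), hF]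
  rw [h1, h2, Finset.prod_range_succ', hk 0 (by omega), hF, mul_one,
    ← Fin.prod_univ_eq_prod_range (fun i => F (i + 1) (k (i + 1)))]



lemma fterm_eq (v : ℕ → ℝ) (s : Finset ℕ) (n : ℕ) (k : ℕ → ℕ)
    (hk : k ∈ Finset.piAntidiag s n) :
    ∏ j ∈ s, v j ^ k j / (Nat.factorial (k j) : ℝ) =
      ((Nat.multinomial s k : ℝ) * ∏ j ∈ s, v j ^ k j) / (Nat.factorial n : ℝ) := by
  have hsum : ∑ j ∈ s, k j = n := (Finset.mem_piAntidiag.mp hk).1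
  have hspec : (∏ j ∈ s, Nat.factorial (k j)) * Nat.multinomial s k = Nat.factorial n := by
    rw [Nat.multinomial_spec, hsum]
  have hc : ((∏ j ∈ s, Nat.factorial (k j) : ℕ) : ℝ) * (Nat.multinomial s k : ℝ)
      = (Nat.factorial n : ℝ) := by exact_mod_cast congrArg (Nat.cast : ℕ → ℝ) hspec
  have hb : ((∏ j ∈ s, Nat.factorial (k j) : ℕ) : ℝ) ≠ 0 := by positivity
  have hn : (Nat.factorial n : ℝ) ≠ 0 := by positivity
  rw [Finset.prod_div_distrib]
  rw [div_eq_div_iff (by push_cast at hb ⊢; exact hb) hn]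
  push_cast at hc ⊢
  rw [← hc]
  ring

lemma lemA (v : ℕ → ℝ) (hv : ∀ i, 0 ≤ v i) (s : Finset ℕ) :
    HasSum (fun p : Σ n : ℕ, {k : ℕ → ℕ // k ∈ Finset.piAntidiag s n} =>
        ∏ j ∈ s, v j ^ (p.2.1 j) / (Nat.factorial (p.2.1 j) : ℝ))
      (Real.exp (∑ j ∈ s, v j)) := by
  set S := ∑ j ∈ s, v j with hS
  have hexp : HasSum (fun n : ℕ => S ^ n / (Nat.factorial n : ℝ)) (Real.exp S) := by
    rw [Real.exp_eq_exp_ℝ]; exact NormedSpace.expSeries_div_hasSum_exp S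
  have hfib : ∀ n : ℕ, HasSum (fun k : {k : ℕ → ℕ // k ∈ Finset.piAntidiag s n} =>
      ∏ j ∈ s, v j ^ (k.1 j) / (Nat.factorial (k.1 j) : ℝ)) (S ^ n / (Nat.factorial n : ℝ)) := by
    intro n
    have hval : ∑ k ∈ Finset.piAntidiag s n, (∏ j ∈ s, v j ^ k j / (Nat.factorial (k j) : ℝ))
        = S ^ n / (Nat.factorial n : ℝ) := by
      rw [Finset.sum_congr rfl (fun k hk => fterm_eq v s n k hk), ← Finset.sum_div]
      rw [← Finset.sum_pow_eq_sum_piAntidiag]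
    have hfin := (Finset.piAntidiag s n).hasSum
      (fun k : ℕ → ℕ => ∏ j ∈ s, v j ^ k j / (Nat.factorial (k j) : ℝ))
    rw [hval] at hfin
    exact hfin
  have hnn : ∀ p : Σ n : ℕ, {k : ℕ → ℕ // k ∈ Finset.piAntidiag s n},
      0 ≤ ∏ j ∈ s, v j ^ (p.2.1 j) / (Nat.factorial (p.2.1 j) : ℝ) :=
    fun p => Finset.prod_nonneg fun j _ => div_nonneg (pow_nonneg (hv _) _) (Nat.cast_nonneg _)
  have hsummable : Summable (fun p : Σ n : ℕ, {k : ℕ → ℕ // k ∈ Finset.piAntidiag s n} =>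
      ∏ j ∈ s, v j ^ (p.2.1 j) / (Nat.factorial (p.2.1 j) : ℝ)) := by
    refine (summable_sigma_of_nonneg hnn).mpr ⟨fun n => (hfib n).summable, ?_⟩
    refine Summable.congr hexp.summable ?_
    intro n
    exact ((hfib n).tsum_eq).symm
  exact HasSum.sigma_of_hasSum hexp hfib hsummable


lemma extc_supp {ℓ : ℕ} (c : parts ℓ) {L : ℕ} (hL : ℓ ≤ L) :
    ∀ j, extc ℓ c j ≠ 0 → j ≤ L := by
  intro j hj
  by_contra hjL
  exact hj (extc_vanish c (by omega))

lemma extc_weight {ℓ : ℕ} (c : parts ℓ) {L : ℕ} (hL : ℓ ≤ L) :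
    ∑ j ∈ Finset.range (L + 1), j * extc ℓ c j = ℓ := by
  rw [sum_shift (extc ℓ c) ℓ (fun j h => extc_vanish c h) (fun j m => j * m)
    (fun j => Nat.mul_zero j) L (extc_supp c hL)]
  calc ∑ i : Fin ℓ, (i.1 + 1) * extc ℓ c (i.1 + 1) = ∑ i : Fin ℓ, (i.1 + 1) * c.1 i :=
        Finset.sum_congr rfl fun i _ => by rw [extc_succ]
    _ = ℓ := c.2

lemma extc_count {ℓ : ℕ} (c : parts ℓ) {L : ℕ} (hL : ℓ ≤ L) :
    ∑ j ∈ Finset.range (L + 1), extc ℓ c j = ∑ i : Fin ℓ, c.1 i := by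
  rw [sum_shift (extc ℓ c) ℓ (fun j h => extc_vanish c h) (fun _ m => m) (fun _ => rfl) L
    (extc_supp c hL)]
  exact Finset.sum_congr rfl fun i _ => by rw [extc_succ]

lemma extc_mem {ℓ : ℕ} (c : parts ℓ) {L : ℕ} (hL : ℓ ≤ L) :
    extc ℓ c ∈ Finset.piAntidiag (Finset.range (L + 1)) (∑ i : Fin ℓ, c.1 i) := by
  rw [Finset.mem_piAntidiag]
  exact ⟨extc_count c hL, fun j hj =>
    Finset.mem_range.mpr (by have := extc_supp c hL j hj; omega)⟩

lemma extc_prod (v : ℕ → ℝ) {ℓ : ℕ} (c : parts ℓ) {L : ℕ} (hL : ℓ ≤ L) :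
    ∏ j ∈ Finset.range (L + 1), v j ^ (extc ℓ c j) / (Nat.factorial (extc ℓ c j) : ℝ)
      = pterm v ℓ c := by
  rw [prod_shift (extc ℓ c) ℓ (fun j h => extc_vanish c h)
    (fun j m => v j ^ m / (Nat.factorial m : ℝ)) (by intro j; simp) L (extc_supp c hL)]
  exact Finset.prod_congr rfl fun i _ => by rw [extc_succ]

lemma supp_of_mem {L n : ℕ} {k : ℕ → ℕ} (hm : k ∈ Finset.piAntidiag (Finset.range (L + 1)) n) :
    ∀ j, k j ≠ 0 → j ≤ L := fun j hj => by
  have := (Finset.mem_piAntidiag.mp hm).2 j hj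
  simp only [Finset.mem_range] at this
  omega

lemma van_of_mem {L n : ℕ} {k : ℕ → ℕ} (hm : k ∈ Finset.piAntidiag (Finset.range (L + 1)) n)
    (h0 : k 0 = 0) :
    ∀ j, ¬(0 < j ∧ j ≤ ∑ j' ∈ Finset.range (L + 1), j' * k j') → k j = 0 := by
  intro j hj
  by_contra hne
  have hjL : j ∈ Finset.range (L + 1) := (Finset.mem_piAntidiag.mp hm).2 j hne
  have h1 : j ≤ j * k j := Nat.le_mul_of_pos_right j (Nat.pos_of_ne_zero hne)
  have h2 : j * k j ≤ ∑ j' ∈ Finset.range (L + 1), j' * k j' :=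
    Finset.single_le_sum (f := fun j' => j' * k j') (fun _ _ => Nat.zero_le _) hjL
  have hj0 : 0 < j := Nat.pos_of_ne_zero (fun h => hne (by rw [h, h0]))
  omega

lemma wt_cond {L n : ℕ} {k : ℕ → ℕ} (hm : k ∈ Finset.piAntidiag (Finset.range (L + 1)) n)
    (h0 : k 0 = 0) :
    ∑ i : Fin (∑ j ∈ Finset.range (L + 1), j * k j), (i.1 + 1) * k (i.1 + 1)
      = ∑ j ∈ Finset.range (L + 1), j * k j :=
  (sum_shift k _ (van_of_mem hm h0) (fun j m => j * m) (fun j => Nat.mul_zero j) L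
    (supp_of_mem hm)).symm

def phiF (L : ℕ) (p : Σ ℓ : ℕ, parts ℓ) :
    Σ n : ℕ, {k : ℕ → ℕ // k ∈ Finset.piAntidiag (Finset.range (L + 1)) n} :=
  if h : p.1 ≤ L then ⟨∑ i : Fin p.1, p.2.1 i, ⟨extc p.1 p.2, extc_mem p.2 h⟩⟩
  else ⟨0, ⟨fun _ => 0, by rw [Finset.mem_piAntidiag]; exact ⟨by simp, by simp⟩⟩⟩

def psiF (L : ℕ)
    (q : Σ n : ℕ, {k : ℕ → ℕ // k ∈ Finset.piAntidiag (Finset.range (L + 1)) n}) :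
    Σ ℓ : ℕ, parts ℓ :=
  if h : q.2.1 0 = 0 then
    ⟨∑ j ∈ Finset.range (L + 1), j * q.2.1 j, ⟨fun i => q.2.1 (i.1 + 1), wt_cond q.2.2 h⟩⟩
  else ⟨0, default⟩

lemma phiF_pos {L : ℕ} {p : Σ ℓ : ℕ, parts ℓ} (h : p.1 ≤ L) :
    phiF L p = ⟨∑ i : Fin p.1, p.2.1 i, ⟨extc p.1 p.2, extc_mem p.2 h⟩⟩ := dif_pos h

lemma psiF_pos {L : ℕ}
    {q : Σ n : ℕ, {k : ℕ → ℕ // k ∈ Finset.piAntidiag (Finset.range (L + 1)) n}}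
    (h : q.2.1 0 = 0) :
    psiF L q = ⟨∑ j ∈ Finset.range (L + 1), j * q.2.1 j,
      ⟨fun i => q.2.1 (i.1 + 1), wt_cond q.2.2 h⟩⟩ := dif_pos h

lemma extc_inv {L n : ℕ} {k : ℕ → ℕ} (hm : k ∈ Finset.piAntidiag (Finset.range (L + 1)) n)
    (h0 : k 0 = 0) :
    extc (∑ j ∈ Finset.range (L + 1), j * k j)
      ⟨fun i => k (i.1 + 1), wt_cond hm h0⟩ = k := by
  funext j
  by_cases h : 0 < j ∧ j ≤ ∑ j' ∈ Finset.range (L + 1), j' * k j'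
  · simp only [extc, dif_pos h]
    congr 1
    omega
  · rw [van_of_mem hm h0 j h]; exact extc_vanish _ h

lemma lemB (v : ℕ → ℝ) (hv : ∀ i, 0 ≤ v i) (hv0 : v 0 = 0) (hvs : Summable v) :
    HasSum (fun p : Σ ℓ : ℕ, parts ℓ => pterm v p.1 p.2) (Real.exp (∑' i, v i)) := by
  classical
  apply hasSum_of_isLUB_of_nonneg
  · exact fun p => pterm_nonneg hv p.1 p.2
  constructor
  · rintro r ⟨F, rfl⟩
    set L := F.sup (fun p : Σ ℓ : ℕ, parts ℓ => p.1) with hLdef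
    have hLmem : ∀ p ∈ F, p.1 ≤ L := fun p hp =>
      Finset.le_sup (f := fun p : Σ ℓ : ℕ, parts ℓ => p.1) hp
    have hterm : ∀ p ∈ F, pterm v p.1 p.2 =
        ∏ j ∈ Finset.range (L + 1),
          v j ^ (((phiF L p).2.1) j) / (Nat.factorial (((phiF L p).2.1) j) : ℝ) := by
      intro p hp
      have h := hLmem p hp
      rw [phiF_pos h]
      exact (extc_prod v p.2 h).symm
    have hinj : ∀ p ∈ F, ∀ q ∈ F, phiF L p = phiF L q → p = q := by
      intro p hp q hq hpq
      have hkeq : extc p.1 p.2 = extc q.1 q.2 := by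
        rw [phiF_pos (hLmem p hp), phiF_pos (hLmem q hq)] at hpq
        exact congrArg
          (fun r : Σ n : ℕ, {k : ℕ → ℕ // k ∈ Finset.piAntidiag (Finset.range (L + 1)) n} =>
            r.2.1) hpq
      obtain ⟨ℓp, cp⟩ := p
      obtain ⟨ℓq, cq⟩ := q
      have hℓ : ℓp = ℓq := by
        have h1 := extc_weight cp (hLmem _ hp)
        have h2 := extc_weight cq (hLmem _ hq)
        rw [← h1, ← h2]
        exact Finset.sum_congr rfl fun j _ => by rw [hkeq]
      subst hℓ
      have hc : cp = cq := by
        apply Subtype.ext; funext i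
        rw [← extc_succ cp i, ← extc_succ cq i, hkeq]
      rw [hc]
    calc ∑ p ∈ F, pterm v p.1 p.2
        = ∑ p ∈ F, ∏ j ∈ Finset.range (L + 1),
            v j ^ (((phiF L p).2.1) j) / (Nat.factorial (((phiF L p).2.1) j) : ℝ) :=
          Finset.sum_congr rfl hterm
      _ = ∑ q ∈ F.image (phiF L), ∏ j ∈ Finset.range (L + 1),
            v j ^ (q.2.1 j) / (Nat.factorial (q.2.1 j) : ℝ) :=
          (Finset.sum_image (f := fun q : Σ n : ℕ,
              {k : ℕ → ℕ // k ∈ Finset.piAntidiag (Finset.range (L + 1)) n} =>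
              ∏ j ∈ Finset.range (L + 1), v j ^ (q.2.1 j) / (Nat.factorial (q.2.1 j) : ℝ))
            hinj).symm
      _ ≤ Real.exp (∑ j ∈ Finset.range (L + 1), v j) :=
          sum_le_hasSum _
            (fun q _ => Finset.prod_nonneg fun j _ =>
              div_nonneg (pow_nonneg (hv _) _) (Nat.cast_nonneg _))
            (lemA v hv (Finset.range (L + 1)))
      _ ≤ Real.exp (∑' i, v i) :=
          Real.exp_le_exp.mpr (Summable.sum_le_tsum _ (fun i _ => hv i) hvs)
  · intro b hb
    have key : ∀ L : ℕ, Real.exp (∑ j ∈ Finset.range (L + 1), v j) ≤ b := by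
      intro L
      refine le_of_tendsto' (lemA v hv (Finset.range (L + 1))) ?_
      intro G
      set G0 := G.filter
        (fun q : Σ n : ℕ, {k : ℕ → ℕ // k ∈ Finset.piAntidiag (Finset.range (L + 1)) n} =>
          q.2.1 0 = 0) with hG0
      have hsub : G0 ⊆ G := Finset.filter_subset _ _
      have hzero : ∀ q ∈ G, q ∉ G0 →
          (∏ j ∈ Finset.range (L + 1), v j ^ (q.2.1 j) / (Nat.factorial (q.2.1 j) : ℝ)) = 0 := by
        intro q hq hq0
        have hk0 : q.2.1 0 ≠ 0 := by simpa [hG0, hq] using hq0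
        refine Finset.prod_eq_zero (i := 0) (by simp) ?_
        rw [hv0, zero_pow hk0, zero_div]
      rw [← Finset.sum_subset hsub hzero]
      have hterm : ∀ q ∈ G0,
          (∏ j ∈ Finset.range (L + 1), v j ^ (q.2.1 j) / (Nat.factorial (q.2.1 j) : ℝ))
            = pterm v (psiF L q).1 (psiF L q).2 := by
        intro q hq
        rw [hG0] at hq
        have h0 : q.2.1 0 = 0 := (Finset.mem_filter.mp hq).2
        rw [psiF_pos h0]
        exact prod_shift q.2.1 _ (van_of_mem q.2.2 h0)
          (fun j m => v j ^ m / (Nat.factorial m : ℝ)) (by intro j; simp) L (supp_of_mem q.2.2)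
      have hinj : ∀ p ∈ G0, ∀ q ∈ G0, psiF L p = psiF L q → p = q := by
        intro p hp q hq hpq
        rw [hG0] at hp hq
        have h0p : p.2.1 0 = 0 := (Finset.mem_filter.mp hp).2
        have h0q : q.2.1 0 = 0 := (Finset.mem_filter.mp hq).2
        have hkeq : p.2.1 = q.2.1 := by
          rw [psiF_pos h0p, psiF_pos h0q] at hpq
          have h1 : extc (∑ j ∈ Finset.range (L + 1), j * p.2.1 j)
                ⟨fun i => p.2.1 (i.1 + 1), wt_cond p.2.2 h0p⟩
              = extc (∑ j ∈ Finset.range (L + 1), j * q.2.1 j)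
                ⟨fun i => q.2.1 (i.1 + 1), wt_cond q.2.2 h0q⟩ :=
            congrArg (fun r : Σ ℓ : ℕ, parts ℓ => extc r.1 r.2) hpq
          rwa [extc_inv p.2.2 h0p, extc_inv q.2.2 h0q] at h1
        obtain ⟨np, kp⟩ := p
        obtain ⟨nq, kq⟩ := q
        simp only at hkeq h0p h0q
        have hn : np = nq := by
          have e1 : ∑ j ∈ Finset.range (L + 1), kp.1 j = np :=
            (Finset.mem_piAntidiag.mp kp.2).1
          have e2 : ∑ j ∈ Finset.range (L + 1), kq.1 j = nq :=
            (Finset.mem_piAntidiag.mp kq.2).1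
          rw [← e1, ← e2]
          exact Finset.sum_congr rfl fun j _ => by rw [hkeq]
        subst hn
        have : kp = kq := Subtype.ext hkeq
        rw [this]
      rw [Finset.sum_congr rfl hterm,
        ← Finset.sum_image (f := fun p : Σ ℓ : ℕ, parts ℓ => pterm v p.1 p.2) hinj]
      exact hb ⟨G0.image (psiF L), rfl⟩
    have hlim : Filter.Tendsto (fun L : ℕ => Real.exp (∑ j ∈ Finset.range (L + 1), v j))
        Filter.atTop (nhds (Real.exp (∑' i, v i))) := by
      have h1 : Filter.Tendsto (fun L : ℕ => ∑ j ∈ Finset.range (L + 1), v j)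
          Filter.atTop (nhds (∑' i, v i)) :=
        hvs.hasSum.tendsto_sum_nat.comp (Filter.tendsto_add_atTop_nat 1)
      exact (Real.continuous_exp.tendsto _).comp h1
    exact le_of_tendsto' hlim key


lemma parts_zero_sum (v : ℕ → ℝ) : (∑ c : parts 0, pterm v 0 c) = 1 := by
  have h : ∀ c : parts 0, pterm v 0 c = 1 := by
    intro c
    rw [pterm]
    exact Finset.prod_of_isEmpty _
  rw [Finset.sum_congr rfl (fun c _ => h c), Finset.sum_const, Finset.card_univ,
    Fintype.card_unique, one_smul]

lemma lemC (v : ℕ → ℝ) (hv : ∀ i, 0 ≤ v i) (hv0 : v 0 = 0) (hvs : Summable v) :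
    HasSum (fun ℓ : ℕ => if ℓ = 0 then (0 : ℝ) else ∑ c : parts ℓ, pterm v ℓ c)
      (Real.exp (∑' i, v i) - 1) := by
  have h1 : HasSum (fun ℓ : ℕ => ∑ c : parts ℓ, pterm v ℓ c) (Real.exp (∑' i, v i)) :=
    (lemB v hv hv0 hvs).sigma (fun ℓ => hasSum_fintype _)
  have h2 : HasSum (fun ℓ : ℕ => if ℓ = 0 then (1 : ℝ) else 0) 1 := hasSum_ite_eq 0 1
  have h3 := h1.sub h2
  have hfe : (fun ℓ : ℕ => if ℓ = 0 then (0 : ℝ) else ∑ c : parts ℓ, pterm v ℓ c)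
      = fun ℓ : ℕ => (∑ c : parts ℓ, pterm v ℓ c) - (if ℓ = 0 then (1 : ℝ) else 0) := by
    funext ℓ
    by_cases h : ℓ = 0
    · subst h
      have hd : pterm v 0 (default : parts 0) = 1 := Finset.prod_of_isEmpty _
      norm_num [hd]
    · simp [h]
  rw [hfe]
  exact h3

lemma pterm_lam (z : ℕ → ℝ) (lam r : ℝ) (ℓ : ℕ) (c : parts ℓ) :
    pterm (fun i => z i * lam ^ i * r) ℓ c = lam ^ ℓ * pterm (fun i => z i * r) ℓ c := by
  rw [pterm, pterm]
  have h : ∀ i : Fin ℓ,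
      (z (i.1 + 1) * lam ^ (i.1 + 1) * r) ^ (c.1 i) / (Nat.factorial (c.1 i) : ℝ)
        = (lam ^ (i.1 + 1)) ^ (c.1 i)
          * ((z (i.1 + 1) * r) ^ (c.1 i) / (Nat.factorial (c.1 i) : ℝ)) := by
    intro i
    rw [show z (i.1 + 1) * lam ^ (i.1 + 1) * r = lam ^ (i.1 + 1) * (z (i.1 + 1) * r) by ring,
      mul_pow]
    ring
  rw [Finset.prod_congr rfl (fun i _ => h i), Finset.prod_mul_distrib]
  congr 1
  calc ∏ i : Fin ℓ, (lam ^ (i.1 + 1)) ^ (c.1 i)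
      = ∏ i : Fin ℓ, lam ^ ((i.1 + 1) * c.1 i) :=
        Finset.prod_congr rfl fun i _ => (pow_mul lam _ _).symm
    _ = lam ^ (∑ i : Fin ℓ, (i.1 + 1) * c.1 i) := Finset.prod_pow_eq_pow_sum _ _ _
    _ = lam ^ ℓ := by rw [c.2]

end Stmt8Aux

open Stmt8Aux

/-- if `E[Γ] = 1`, then for every `x > 0`, `z ∈ Z` and `λ ∈ [0,1]`, the series
`Σ_{ℓ≥1} λ^ℓ·C^x(z)(ℓ)` converges and equals `E[ x·e^{−|z|·Γ/x}·(e^{ψ_λ(z)·Γ/x} − 1) ]`.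
(Since `C^x(z)(0) = 0` by convention, the sum over all `ℓ : ℕ` is the sum over `ℓ ≥ 1`.) -/
theorem stmt8 {Ω : Type*} [MeasureSpace Ω] [IsProbabilityMeasure (volume : Measure Ω)]
    (Γ : Ω → ℝ) (hΓm : Measurable Γ) (hΓ0 : ∀ ω, 0 ≤ Γ ω) (hΓint : Integrable Γ)
    (hEΓ : ∫ ω, Γ ω = 1) (x : ℝ) (hx : 0 < x) (z : ℕ → ℝ) (hz : memZ z)
    (lam : ℝ) (hlam : lam ∈ Set.Icc (0 : ℝ) 1) :
    Summable (fun ℓ : ℕ => lam ^ ℓ * Cx Γ x z ℓ) ∧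
    ∑' ℓ : ℕ, lam ^ ℓ * Cx Γ x z ℓ =
      ∫ ω, x * Real.exp (-(znorm z * Γ ω) / x) * (Real.exp (psi lam z * Γ ω / x) - 1) := by
  obtain ⟨hz0, hznil, hzsum, _⟩ := hz
  obtain ⟨hl0, hl1⟩ := hlam
  have hpsis : Summable (fun i => z i * lam ^ i) :=
    Summable.of_nonneg_of_le (fun i => mul_nonneg (hz0 i) (pow_nonneg hl0 i))
      (fun i => mul_le_of_le_one_right (hz0 i) (pow_le_one₀ hl0 hl1)) hzsum
  have hpsi0 : 0 ≤ psi lam z :=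
    tsum_nonneg fun i => mul_nonneg (hz0 i) (pow_nonneg hl0 i)
  have hpsile : psi lam z ≤ znorm z :=
    Summable.tsum_le_tsum (fun i => mul_le_of_le_one_right (hz0 i) (pow_le_one₀ hl0 hl1)) hpsis hzsum
  set G : ℕ → Ω → ℝ := fun ℓ ω => ∑ c : parts ℓ, pterm (fun i => z i * (Γ ω / x)) ℓ c with hG
  set F : ℕ → Ω → ℝ := fun ℓ ω =>
    if ℓ = 0 then 0
    else lam ^ ℓ * (x * Real.exp (-(znorm z * Γ ω) / x) * G ℓ ω) with hF
  have hHS : ∀ ω, HasSum (fun ℓ => F ℓ ω)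
      (x * Real.exp (-(znorm z * Γ ω) / x) * (Real.exp (psi lam z * Γ ω / x) - 1)) := by
    intro ω
    have hr0 : 0 ≤ Γ ω / x := div_nonneg (hΓ0 ω) hx.le
    set v : ℕ → ℝ := fun i => z i * lam ^ i * (Γ ω / x) with hv
    have hvnn : ∀ i, 0 ≤ v i := fun i =>
      mul_nonneg (mul_nonneg (hz0 i) (pow_nonneg hl0 i)) hr0
    have hv0 : v 0 = 0 := by simp [hv, hznil]
    have hvs : Summable v := hpsis.mul_right _
    have hT : (∑' i, v i) = psi lam z * (Γ ω / x) := tsum_mul_right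
    have hC := lemC v hvnn hv0 hvs
    rw [hT, ← mul_div_assoc] at hC
    have hCeq : (fun ℓ : ℕ => if ℓ = 0 then (0 : ℝ) else ∑ c : parts ℓ, pterm v ℓ c)
        = fun ℓ : ℕ => if ℓ = 0 then (0 : ℝ) else lam ^ ℓ * G ℓ ω := by
      funext ℓ
      by_cases h : ℓ = 0
      · simp [h]
      · rw [if_neg h, if_neg h,
          Finset.sum_congr rfl (fun c _ => pterm_lam z lam (Γ ω / x) ℓ c), ← Finset.mul_sum]
    rw [hCeq] at hC
    have hC2 := hC.mul_left (x * Real.exp (-(znorm z * Γ ω) / x))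
    have hfe : (fun ℓ : ℕ => x * Real.exp (-(znorm z * Γ ω) / x)
        * (if ℓ = 0 then (0 : ℝ) else lam ^ ℓ * G ℓ ω)) = fun ℓ => F ℓ ω := by
      funext ℓ
      by_cases h : ℓ = 0
      · simp [hF, h]
      · simp only [hF, if_neg h]
        ring
    rwa [hfe] at hC2
  have hFnn : ∀ (ℓ : ℕ) (ω : Ω), 0 ≤ F ℓ ω := by
    intro ℓ ω
    have hGnn : 0 ≤ G ℓ ω :=
      Finset.sum_nonneg fun c _ =>
        pterm_nonneg (fun i => mul_nonneg (hz0 i) (div_nonneg (hΓ0 ω) hx.le)) ℓ c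
    by_cases h : ℓ = 0
    · simp [hF, h]
    · simp only [hF, if_neg h]
      exact mul_nonneg (pow_nonneg hl0 _)
        (mul_nonneg (mul_nonneg hx.le (Real.exp_pos _).le) hGnn)
  have hbound : ∀ ω,
      x * Real.exp (-(znorm z * Γ ω) / x) * (Real.exp (psi lam z * Γ ω / x) - 1) ≤ x := by
    intro ω
    have hr0 : 0 ≤ Γ ω / x := div_nonneg (hΓ0 ω) hx.le
    have e1 : Real.exp (-(znorm z * Γ ω) / x) * Real.exp (psi lam z * Γ ω / x)
        = Real.exp (psi lam z * Γ ω / x - znorm z * Γ ω / x) := by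
      rw [← Real.exp_add]
      congr 1
      ring
    have e2 : Real.exp (psi lam z * Γ ω / x - znorm z * Γ ω / x) ≤ 1 := by
      rw [Real.exp_le_one_iff]
      have h := mul_le_mul_of_nonneg_right hpsile hr0
      rw [mul_div_assoc, mul_div_assoc]
      linarith
    have e3 : 0 < Real.exp (-(znorm z * Γ ω) / x) := Real.exp_pos _
    nlinarith [e1, e2, e3, hx.le]
  have hGmeas : ∀ ℓ, Measurable (G ℓ) := by
    intro ℓ
    rw [hG]
    refine Finset.measurable_sum _ (fun c _ => ?_)
    simp only [pterm]
    refine Finset.measurable_prod _ (fun i _ => ?_)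
    exact (((hΓm.div_const x).const_mul (z (i.1 + 1))).pow_const _).div_const _
  have hFmeas : ∀ ℓ, Measurable (F ℓ) := by
    intro ℓ
    by_cases h : ℓ = 0
    · simp only [hF, if_pos h]
      exact measurable_const
    · simp only [hF, if_neg h]
      refine Measurable.const_mul ?_ _
      exact ((Real.measurable_exp.comp
        ((hΓm.const_mul (znorm z)).neg.div_const x)).const_mul x).mul (hGmeas ℓ)
  have hfin : (∑' ℓ : ℕ, ∫⁻ ω, ‖F ℓ ω‖₊ ∂volume) ≠ ⊤ := by
    rw [← MeasureTheory.lintegral_tsum (fun ℓ => ((hFmeas ℓ).nnnorm.coe_nnreal_ennreal).aemeasurable)]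
    have hle : ∀ ω, (∑' ℓ : ℕ, (‖F ℓ ω‖₊ : ℝ≥0∞)) ≤ ENNReal.ofReal x := by
      intro ω
      have h1 : ∀ ℓ : ℕ, (‖F ℓ ω‖₊ : ℝ≥0∞) = ENNReal.ofReal (F ℓ ω) := fun ℓ =>
        Real.enorm_eq_ofReal (hFnn ℓ ω)
      rw [tsum_congr h1, ← ENNReal.ofReal_tsum_of_nonneg (fun ℓ => hFnn ℓ ω) (hHS ω).summable,
        (hHS ω).tsum_eq]
      exact ENNReal.ofReal_le_ofReal (hbound ω)
    have hle2 : (∫⁻ ω, ∑' ℓ : ℕ, (‖F ℓ ω‖₊ : ℝ≥0∞) ∂volume) ≤ ENNReal.ofReal x := by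
      calc (∫⁻ ω, ∑' ℓ : ℕ, (‖F ℓ ω‖₊ : ℝ≥0∞) ∂volume)
          ≤ ∫⁻ _, ENNReal.ofReal x ∂volume := MeasureTheory.lintegral_mono hle
        _ = ENNReal.ofReal x := by
            rw [MeasureTheory.lintegral_const, measure_univ, mul_one]
    exact ne_top_of_le_ne_top ENNReal.ofReal_ne_top hle2
  have key := MeasureTheory.integral_tsum (fun ℓ => (hFmeas ℓ).aestronglyMeasurable) hfin
  have hCx : ∀ ℓ : ℕ, (∫ ω, F ℓ ω) = lam ^ ℓ * Cx Γ x z ℓ := by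
    intro ℓ
    by_cases h : ℓ = 0
    · subst h
      simp [hF, Cx]
    · have hF' : F ℓ = fun ω => lam ^ ℓ * (x * Real.exp (-(znorm z * Γ ω) / x) * G ℓ ω) := by
        rw [hF]
        funext ω
        simp only [if_neg h]
      rw [hF', MeasureTheory.integral_const_mul]
      congr 1
      simp only [Cx, if_neg h]
      congr 1
      funext ω
      rw [tsum_fintype]
      congr 1
      rw [hG]
      refine Finset.sum_congr rfl fun c _ => ?_
      simp only [pterm]
      exact Finset.prod_congr rfl fun i _ => by rw [mul_div_assoc]
  have hsum1 : Summable (fun ℓ : ℕ => ∫ ω, F ℓ ω) := by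
    refine Summable.of_norm_bounded (g := fun ℓ => (∫⁻ ω, (‖F ℓ ω‖₊ : ℝ≥0∞) ∂volume).toReal)
      (ENNReal.summable_toReal hfin) ?_
    intro ℓ
    show ‖∫ ω, F ℓ ω‖ ≤ (∫⁻ ω, (‖F ℓ ω‖₊ : ℝ≥0∞) ∂volume).toReal
    rw [show (∫⁻ ω, (‖F ℓ ω‖₊ : ℝ≥0∞) ∂volume) = ∫⁻ ω, ENNReal.ofReal ‖F ℓ ω‖ ∂volume from
      MeasureTheory.lintegral_congr fun ω => (ofReal_norm _).symm]
    exact MeasureTheory.norm_integral_le_lintegral_norm _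
  constructor
  · exact (summable_congr (fun ℓ => (hCx ℓ).symm)).mpr hsum1
  · calc ∑' ℓ : ℕ, lam ^ ℓ * Cx Γ x z ℓ = ∑' ℓ : ℕ, ∫ ω, F ℓ ω :=
        tsum_congr fun ℓ => (hCx ℓ).symm
      _ = ∫ ω, ∑' ℓ : ℕ, F ℓ ω := key.symm
      _ = ∫ ω, x * Real.exp (-(znorm z * Γ ω) / x) * (Real.exp (psi lam z * Γ ω / x) - 1) := by
          congr 1
          funext ω
          exact (hHS ω).tsum_eq
end

section
/- As k → ∞, E[ (k·p₁^{(k)})² ] converges to E[w₁²] / (E[w₁])². -/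
open MeasureTheory ProbabilityTheory Filter
open Topology

/-- for i.i.d. strictly positive random variables `(w_i)` with a finite
second moment, `E[(k·p₁^{(k)})²] = E[(k·w₁/(w₁ + … + w_k))²]` converges, as `k → ∞`,
to `E[w₁²]/(E[w₁])²`. -/
theorem stmt14 {Ω : Type*} [MeasureSpace Ω] [IsProbabilityMeasure (volume : Measure Ω)]
    (w : ℕ → Ω → ℝ) (hmeas : ∀ i, Measurable (w i))
    (hindep : iIndepFun w volume)
    (hident : ∀ i, IdentDistrib (w i) (w 0) volume volume)
    (hpos : ∀ i ω, 0 < w i ω)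
    (hL2 : Integrable (fun ω => (w 0 ω) ^ 2)) :
    Tendsto (fun k : ℕ => ∫ ω, ((k : ℝ) * w 0 ω / ∑ i ∈ Finset.range k, w i ω) ^ 2)
      atTop (nhds ((∫ ω, (w 0 ω) ^ 2) / (∫ ω, w 0 ω) ^ 2)) := by
  classical
  have hw0meas := hmeas 0
  -- integrability of w 0
  have hint : Integrable (w 0) := by
    refine (hL2.add (integrable_const 1)).mono' hw0meas.aestronglyMeasurable ?_
    filter_upwards with ω
    simp only [Pi.add_apply]
    rw [Real.norm_eq_abs, abs_of_pos (hpos 0 ω)]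
    nlinarith [sq_nonneg (w 0 ω - 1)]
  set m1 := ∫ ω, w 0 ω with hm1def
  set m2 := ∫ ω, (w 0 ω) ^ 2 with hm2def
  have hm1pos : 0 < m1 := by
    rw [hm1def, integral_pos_iff_support_of_nonneg (fun ω => (hpos 0 ω).le) hint]
    have : Function.support (w 0) = Set.univ := by
      ext ω; simp [(hpos 0 ω).ne']
    simp [this]
  -- r := E[exp(-w)] ∈ (0,1)
  set r := ∫ ω, Real.exp (-(w 0 ω)) with hrdef
  have hexp_int : Integrable (fun ω => Real.exp (-(w 0 ω))) := by
    refine (integrable_const 1).mono' (hw0meas.neg.exp).aestronglyMeasurable ?_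
    filter_upwards with ω
    rw [Real.norm_eq_abs, abs_of_pos (Real.exp_pos _)]
    exact Real.exp_le_one_iff.2 (by linarith [hpos 0 ω])
  have hr_pos : 0 < r := by
    rw [hrdef, integral_pos_iff_support_of_nonneg (fun ω => (Real.exp_pos _).le) hexp_int]
    have : (Function.support fun ω => Real.exp (-(w 0 ω))) = Set.univ := by
      ext ω; simp [(Real.exp_pos _).ne']
    simp [this]
  have hr_lt : r < 1 := by
    have h1 : 0 < ∫ ω, (1 - Real.exp (-(w 0 ω))) := by
      rw [integral_pos_iff_support_of_nonneg]
      · have : (Function.support fun ω => 1 - Real.exp (-(w 0 ω))) = Set.univ := by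
          ext ω
          have h2 : Real.exp (-(w 0 ω)) < 1 := Real.exp_lt_one_iff.2 (by linarith [hpos 0 ω])
          simp only [Function.mem_support, Set.mem_univ, iff_true]
          intro h; linarith
        simp [this]
      · intro ω
        have : Real.exp (-(w 0 ω)) < 1 := Real.exp_lt_one_iff.2 (by linarith [hpos 0 ω])
        simp [this.le]
      · exact (integrable_const 1).sub hexp_int
    rw [integral_sub (integrable_const 1) hexp_int] at h1
    simp at h1
    linarith
  -- choice of ε
  set ε := min m1 (-Real.log r) / 2 with hεdef
  have hL : 0 < -Real.log r := by
    have := Real.log_neg hr_pos hr_lt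
    linarith
  have hε : 0 < ε := by
    have := lt_min hm1pos hL
    positivity
  have hεm1 : ε < m1 := by
    have h := min_le_left m1 (-Real.log r)
    have := lt_min hm1pos hL
    rw [hεdef]; linarith
  have hgeo : Real.exp ε * r < 1 := by
    have hεL : ε < -Real.log r := by
      have h := min_le_right m1 (-Real.log r)
      have := lt_min hm1pos hL
      rw [hεdef]; linarith
    have : Real.exp ε * r = Real.exp (ε + Real.log r) := by
      rw [Real.exp_add, Real.exp_log hr_pos]
    rw [this]
    exact Real.exp_lt_one_iff.2 (by linarith)
  -- definitions
  set S : ℕ → Ω → ℝ := fun k ω => ∑ i ∈ Finset.range k, w i ω with hSdef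
  set T : ℕ → Ω → ℝ := fun k ω => ∑ i ∈ Finset.Ico 1 k, w i ω with hTdef
  set X : ℕ → Ω → ℝ := fun k ω => ((k : ℝ) * w 0 ω / S k ω) ^ 2 with hXdef
  set A : ℕ → Set Ω := fun k => {ω | ε * k < T k ω} with hAdef
  have hSmeas : ∀ k, Measurable (S k) := fun k =>
    Finset.measurable_sum _ (fun i _ => hmeas i)
  have hTmeas : ∀ k, Measurable (T k) := fun k =>
    Finset.measurable_sum _ (fun i _ => hmeas i)
  have hXmeas : ∀ k, Measurable (X k) := fun k =>
    ((measurable_const.mul hw0meas).div (hSmeas k)).pow_const 2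
  have hAmeas : ∀ k, MeasurableSet (A k) := fun k =>
    measurableSet_lt measurable_const (hTmeas k)
  have hTnonneg : ∀ k ω, 0 ≤ T k ω := fun k ω =>
    Finset.sum_nonneg fun i _ => (hpos i ω).le
  have hST : ∀ k ω, 1 ≤ k → S k ω = w 0 ω + T k ω := by
    intro k ω hk
    have hr : Finset.range k = insert 0 (Finset.Ico 1 k) := by
      ext i; simp only [Finset.mem_range, Finset.mem_insert, Finset.mem_Ico]; omega
    simp only [hSdef, hTdef, hr]
    exact Finset.sum_insert (by simp)
  have hXnonneg : ∀ k ω, 0 ≤ X k ω := fun k ω => sq_nonneg _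
  have hXbound : ∀ k ω, X k ω ≤ (k : ℝ) ^ 2 := by
    intro k ω
    rcases Nat.eq_zero_or_pos k with hk | hk
    · simp [hXdef, hk]
    · have hw0 := hpos 0 ω
      have hS : w 0 ω ≤ S k ω := by
        have := hTnonneg k ω
        rw [hST k ω hk]; linarith
      have hSpos : 0 < S k ω := lt_of_lt_of_le hw0 hS
      have h1 : (k : ℝ) * w 0 ω / S k ω ≤ (k : ℝ) := by
        rw [div_le_iff₀ hSpos]
        have : (0:ℝ) ≤ (k : ℝ) := Nat.cast_nonneg k
        nlinarith
      have h2 : 0 ≤ (k : ℝ) * w 0 ω / S k ω := by positivity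
      calc X k ω = ((k : ℝ) * w 0 ω / S k ω) ^ 2 := rfl
        _ ≤ (k : ℝ) ^ 2 := by nlinarith
  have hXint : ∀ k, Integrable (X k) := by
    intro k
    refine (integrable_const ((k:ℝ)^2)).mono' (hXmeas k).aestronglyMeasurable ?_
    filter_upwards with ω
    rw [Real.norm_eq_abs, abs_of_nonneg (hXnonneg k ω)]
    exact hXbound k ω
  -- product formula / Markov bound on bad set
  have hbad : ∀ k, (volume (A k)ᶜ).toReal ≤ Real.exp (ε * k) * r ^ (k - 1) := by
    intro k
    have hTint : Integrable (fun ω => Real.exp (-(T k ω))) := by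
      refine (integrable_const 1).mono' ((hTmeas k).neg.exp).aestronglyMeasurable ?_
      filter_upwards with ω
      rw [Real.norm_eq_abs, abs_of_pos (Real.exp_pos _)]
      exact Real.exp_le_one_iff.2 (by linarith [hTnonneg k ω])
    have hprod : (∫ ω, Real.exp (-(T k ω))) = r ^ (k - 1) := by
      have h1 : (∫ ω, Real.exp (-(T k ω))) = mgf (∑ i ∈ Finset.Ico 1 k, w i) volume (-1) := by
        unfold mgf
        congr 1; funext ω
        simp [hTdef, neg_one_mul]
      rw [h1, hindep.mgf_sum hmeas]
      have h2 : ∀ i, mgf (w i) volume (-1) = r := by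
        intro i
        have := ((hident i).comp (show Measurable (fun x : ℝ => Real.exp (-1 * x)) from
          (measurable_const.mul measurable_id).exp)).integral_eq
        unfold mgf
        simpa [neg_one_mul] using this
      rw [Finset.prod_congr rfl (fun i _ => h2 i), Finset.prod_const, Nat.card_Ico]
    have hmark := mul_meas_ge_le_integral_of_nonneg
      (ae_of_all _ (fun ω => (Real.exp_pos (-(T k ω))).le)) hTint (Real.exp (-(ε * k)))
    rw [hprod] at hmark
    have hset : {x | Real.exp (-(ε * k)) ≤ Real.exp (-(T k x))} = (A k)ᶜ := by
      ext x
      simp only [Set.mem_setOf_eq, Real.exp_le_exp, neg_le_neg_iff, hAdef,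
        Set.mem_compl_iff, not_lt]
    rw [hset] at hmark
    have h3 : Real.exp (ε * k) * Real.exp (-(ε * k)) = 1 := by
      rw [← Real.exp_add]; simp
    calc (volume (A k)ᶜ).toReal
        = Real.exp (ε * k) * Real.exp (-(ε * k)) * (volume (A k)ᶜ).toReal := by
          rw [h3, one_mul]
      _ = Real.exp (ε * k) * (Real.exp (-(ε * k)) * (volume (A k)ᶜ).toReal) := by ring
      _ ≤ Real.exp (ε * k) * r ^ (k - 1) := mul_le_mul_of_nonneg_left hmark (Real.exp_pos _).le
  -- strong law of large numbers
  have hSLLN : ∀ᵐ ω, Tendsto (fun n : ℕ => S n ω / n) atTop (𝓝 m1) := by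
    have := strong_law_ae_real w hint
      (fun i j hij => hindep.indepFun hij) hident
    filter_upwards [this] with ω hω
    exact hω
  -- dominated convergence on the good sets
  have hDCT : Tendsto (fun k => ∫ ω, (A k).indicator (X k) ω) atTop
      (𝓝 (∫ ω, (w 0 ω / m1) ^ 2)) := by
    apply tendsto_integral_of_dominated_convergence (bound := fun ω => (w 0 ω / ε) ^ 2)
    · exact fun k => ((hXmeas k).indicator (hAmeas k)).aestronglyMeasurable
    · have : (fun ω => (w 0 ω / ε) ^ 2) = fun ω => (w 0 ω) ^ 2 / ε ^ 2 := by
        funext ω; rw [div_pow]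
      rw [this]
      exact hL2.div_const _
    · intro k
      filter_upwards with ω
      by_cases hω : ω ∈ A k
      · rw [Set.indicator_of_mem hω, Real.norm_eq_abs, abs_of_nonneg (hXnonneg k ω)]
        have hTk : ε * k < T k ω := hω
        have hk : 1 ≤ k := by
          by_contra hc
          have : k = 0 := by omega
          subst this
          simp only [hTdef, Finset.Ico_self, Finset.sum_empty, Nat.cast_zero, mul_zero] at hTk
          exact lt_irrefl _ hTk
        have hkpos : (0:ℝ) < k := by exact_mod_cast hk
        have hw0 := hpos 0 ω
        have hS : T k ω ≤ S k ω := by rw [hST k ω hk]; linarith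
        have hεk : 0 < ε * k := by positivity
        have hSgt : ε * k < S k ω := lt_of_lt_of_le hTk hS
        have h1 : (k : ℝ) * w 0 ω / S k ω ≤ (k : ℝ) * w 0 ω / (ε * k) := by
          apply div_le_div_of_nonneg_left (mul_nonneg hkpos.le hw0.le) hεk hSgt.le
        have h2 : (k : ℝ) * w 0 ω / (ε * k) = w 0 ω / ε := by
          field_simp
        have h3 : 0 ≤ (k : ℝ) * w 0 ω / S k ω := div_nonneg (mul_nonneg hkpos.le hw0.le) (le_of_lt (hεk.trans hSgt))
        calc X k ω = ((k : ℝ) * w 0 ω / S k ω) ^ 2 := rfl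
          _ ≤ (w 0 ω / ε) ^ 2 := by
              apply pow_le_pow_left₀ h3
              rw [← h2]; exact h1
      · rw [Set.indicator_of_notMem hω]
        simp only [norm_zero]
        positivity
    · filter_upwards [hSLLN] with ω hω
      have hw0 := hpos 0 ω
      -- eventually ω ∈ A k
      have hT_tendsto : Tendsto (fun k : ℕ => T k ω / k) atTop (𝓝 m1) := by
        have h0 : Tendsto (fun k : ℕ => w 0 ω / k) atTop (𝓝 0) :=
          tendsto_const_nhds.div_atTop tendsto_natCast_atTop_atTop
        have := hω.sub h0
        rw [sub_zero] at this
        apply this.congr'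
        filter_upwards [eventually_ge_atTop 1] with k hk
        rw [hST k ω hk]
        ring
      have hA_ev : ∀ᶠ k : ℕ in atTop, ω ∈ A k := by
        have hgt : ∀ᶠ k : ℕ in atTop, ε < T k ω / k :=
          hT_tendsto.eventually (eventually_gt_nhds hεm1)
        filter_upwards [hgt, eventually_ge_atTop 1] with k hk hk1
        have hkpos : (0:ℝ) < k := by exact_mod_cast hk1
        have := (lt_div_iff₀ hkpos).mp hk
        exact this
      -- tendsto of X k ω
      have hX_tendsto : Tendsto (fun k : ℕ => X k ω) atTop (𝓝 ((w 0 ω / m1) ^ 2)) := by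
        have h1 : Tendsto (fun k : ℕ => w 0 ω / (S k ω / k)) atTop (𝓝 (w 0 ω / m1)) :=
          tendsto_const_nhds.div hω hm1pos.ne'
        have h2 := h1.pow 2
        apply h2.congr
        intro k
        rw [div_div_eq_mul_div]
        simp only [hXdef]; ring
      apply hX_tendsto.congr'
      filter_upwards [hA_ev] with k hk
      rw [Set.indicator_of_mem hk]
  -- the bad term tends to zero
  have hbadlim : Tendsto (fun k => ∫ ω in (A k)ᶜ, X k ω) atTop (𝓝 0) := by
    have hub : Tendsto (fun k : ℕ => (k:ℝ) ^ 2 * (Real.exp (ε * k) * r ^ (k - 1)))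
        atTop (𝓝 0) := by
      have hmain : Tendsto (fun k : ℕ => (1/r) * ((k:ℝ) ^ 2 * (Real.exp ε * r) ^ k))
          atTop (𝓝 ((1/r) * 0)) :=
        (tendsto_pow_const_mul_const_pow_of_lt_one 2
          (by positivity) hgeo).const_mul (1/r)
      rw [mul_zero] at hmain
      apply hmain.congr'
      filter_upwards [eventually_ge_atTop 1] with k hk
      have h1 : Real.exp (ε * k) = Real.exp ε ^ k := by
        rw [← Real.exp_nat_mul]; ring_nf
      have h2 : r ^ (k - 1) = r ^ k / r := by
        rw [pow_sub₀ r hr_pos.ne' hk, pow_one, div_eq_mul_inv]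
      rw [h1, h2, mul_pow]
      field_simp
    have hlow : Tendsto (fun _ : ℕ => (0:ℝ)) atTop (𝓝 0) := tendsto_const_nhds
    refine tendsto_of_tendsto_of_tendsto_of_le_of_le' hlow hub ?_ ?_
    · filter_upwards with k
      exact setIntegral_nonneg (hAmeas k).compl (fun ω _ => hXnonneg k ω)
    · filter_upwards with k
      calc ∫ ω in (A k)ᶜ, X k ω ≤ ∫ _ω in (A k)ᶜ, (k:ℝ)^2 := by
            apply setIntegral_mono_on (hXint k).integrableOn
              (integrableOn_const (measure_ne_top _ _)) (hAmeas k).compl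
            intro ω _; exact hXbound k ω
        _ = (volume (A k)ᶜ).toReal * (k:ℝ)^2 := by
            rw [setIntegral_const]; rfl
        _ ≤ (k:ℝ)^2 * (Real.exp (ε * k) * r ^ (k - 1)) := by
            rw [mul_comm]
            exact mul_le_mul_of_nonneg_left (hbad k) (by positivity)
  -- assembling
  have hsplit : ∀ k, (∫ ω, X k ω) =
      (∫ ω, (A k).indicator (X k) ω) + ∫ ω in (A k)ᶜ, X k ω := by
    intro k
    rw [integral_indicator (hAmeas k), integral_add_compl (hAmeas k) (hXint k)]
  have hfinal := hDCT.add hbadlim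
  rw [add_zero] at hfinal
  have hval : (∫ ω, (w 0 ω / m1) ^ 2) = m2 / m1 ^ 2 := by
    simp only [div_pow]
    rw [integral_div]
  rw [hval] at hfinal
  apply Tendsto.congr _ hfinal
  intro k
  rw [← hsplit k]
end

section
/- As k → ∞, E[ ( k·p̄₁^{(k)} − k·p₁^{(k)} )² ] converges to 0; that is, E[ ( w₁/E[w₁] − k·w₁/(w₁ + … + w_k) )² ] → 0. -/
open MeasureTheory ProbabilityTheory Filter

/-- for i.i.d. strictly positive random variables `(w_i)` with a finite
second moment, `E[(k·p̄₁^{(k)} − k·p₁^{(k)})²] = E[(w₁/E[w₁] − k·w₁/(w₁ + … + w_k))²]`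
converges to `0` as `k → ∞`. -/
theorem stmt15 {Ω : Type*} [MeasureSpace Ω] [IsProbabilityMeasure (volume : Measure Ω)]
    (w : ℕ → Ω → ℝ) (hmeas : ∀ i, Measurable (w i))
    (hindep : iIndepFun w volume)
    (hident : ∀ i, IdentDistrib (w i) (w 0) volume volume)
    (hpos : ∀ i ω, 0 < w i ω)
    (hL2 : Integrable (fun ω => (w 0 ω) ^ 2)) :
    Tendsto (fun k : ℕ =>
        ∫ ω, (w 0 ω / (∫ ω', w 0 ω') - (k : ℝ) * w 0 ω / ∑ i ∈ Finset.range k, w i ω) ^ 2)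
      atTop (nhds 0) := by
  set μ : ℝ := ∫ ω', w 0 ω' with hμdef
  have hw0meas := hmeas 0
  -- integrability of w 0
  have hInt : Integrable (w 0) := by
    refine ((integrable_const (1:ℝ)).add hL2).mono' hw0meas.aestronglyMeasurable ?_
    refine Filter.Eventually.of_forall fun ω => ?_
    have h0 := hpos 0 ω
    simp only [Pi.add_apply]
    rw [Real.norm_eq_abs, abs_of_pos h0]
    nlinarith [sq_nonneg (w 0 ω - 1)]
  -- μ > 0
  have hμpos : 0 < μ := by
    rw [hμdef, integral_pos_iff_support_of_nonneg (fun ω => (hpos 0 ω).le) hInt]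
    have : Function.support (w 0) = Set.univ := Set.eq_univ_of_forall fun ω => (hpos 0 ω).ne'
    rw [this]; simp
  -- φ := mgf of w 0 at -1
  set φ : ℝ := ∫ ω, Real.exp (-1 * w 0 ω) with hφdef
  have hexp_int : ∀ i, Integrable (fun ω => Real.exp (-1 * w i ω)) := by
    intro i
    refine (integrable_const (1:ℝ)).mono' (((hmeas i).const_mul (-1)).exp).aestronglyMeasurable ?_
    refine Filter.Eventually.of_forall fun ω => ?_
    rw [Real.norm_eq_abs, abs_of_pos (Real.exp_pos _)]
    have := hpos i ω
    rw [Real.exp_le_one_iff]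
    nlinarith
  have hφpos : 0 < φ := by
    rw [hφdef, integral_pos_iff_support_of_nonneg (fun ω => (Real.exp_pos _).le) (hexp_int 0)]
    have : (Function.support fun ω => Real.exp (-1 * w 0 ω)) = Set.univ :=
      Set.eq_univ_of_forall fun ω => (Real.exp_pos _).ne'
    rw [this]; simp
  have hφlt : φ < 1 := by
    have h1 : 0 < ∫ ω, (1 - Real.exp (-1 * w 0 ω)) := by
      rw [integral_pos_iff_support_of_nonneg]
      · have : (Function.support fun ω => 1 - Real.exp (-1 * w 0 ω)) = Set.univ := by
          refine Set.eq_univ_of_forall fun ω => ?_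
          have := hpos 0 ω
          have : Real.exp (-1 * w 0 ω) < 1 := by rw [Real.exp_lt_one_iff]; nlinarith
          simp only [Function.mem_support]
          intro h; linarith [this]
        rw [this]; simp
      · intro ω
        have := hpos 0 ω
        have : Real.exp (-1 * w 0 ω) ≤ 1 := by rw [Real.exp_le_one_iff]; nlinarith
        simp only [Pi.zero_apply]; linarith
      · exact (integrable_const 1).sub (hexp_int 0)
    have h2 : ∫ ω, (1 - Real.exp (-1 * w 0 ω)) = 1 - φ := by
      rw [integral_sub (integrable_const 1) (hexp_int 0)]
      simp [hφdef]
    linarith [h2 ▸ h1]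
  -- a and ρ
  set a : ℝ := -(Real.log φ) / 2 with hadef
  have hapos : 0 < a := by
    have := Real.log_neg hφpos hφlt
    rw [hadef]; linarith
  set ρ : ℝ := Real.exp a * φ with hρdef
  have hρpos : 0 < ρ := mul_pos (Real.exp_pos _) hφpos
  have hρlt : ρ < 1 := by
    rw [hρdef]
    calc Real.exp a * φ = Real.exp (a + Real.log φ) := by
          rw [Real.exp_add, Real.exp_log hφpos]
      _ < 1 := by
          rw [Real.exp_lt_one_iff]
          have := Real.log_neg hφpos hφlt
          rw [hadef]; linarith
  -- partial sums
  set S : ℕ → Ω → ℝ := fun k ω => ∑ i ∈ Finset.range k, w i ω with hSdef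
  have hSmeas : ∀ k, Measurable (S k) := fun k => Finset.measurable_sum _ fun i _ => hmeas i
  have hSpos : ∀ k, 1 ≤ k → ∀ ω, 0 < S k ω := by
    intro k hk ω
    exact Finset.sum_pos (fun i _ => hpos i ω) (by simp; omega)
  have hw0leS : ∀ k, 1 ≤ k → ∀ ω, w 0 ω ≤ S k ω := by
    intro k hk ω
    exact Finset.single_le_sum (f := fun i => w i ω) (fun i _ => (hpos i ω).le) (by simp; omega)
  -- tail sums
  set T : ℕ → Ω → ℝ := fun k => ∑ i ∈ Finset.Ico 1 k, w i with hTdef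
  have hTapp : ∀ k ω, T k ω = ∑ i ∈ Finset.Ico 1 k, w i ω := fun k ω => by
    rw [hTdef]; simp [Finset.sum_apply]
  have hTmeas : ∀ k, Measurable (T k) := by
    intro k
    have : T k = fun ω => ∑ i ∈ Finset.Ico 1 k, w i ω := funext fun ω => hTapp k ω
    rw [this]; exact Finset.measurable_sum _ fun i _ => hmeas i
  have hST : ∀ k, 1 ≤ k → ∀ ω, S k ω = w 0 ω + T k ω := by
    intro k hk ω
    rw [hSdef, hTdef]
    simp only [Finset.sum_apply]
    rw [Finset.range_eq_Ico, Finset.sum_eq_sum_Ico_succ_bot (by omega : 0 < k)]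
  -- Chernoff bound
  have hchernoff : ∀ k : ℕ, (volume {ω | T k ω ≤ a * ((k - 1 : ℕ) : ℝ)}).toReal ≤ ρ ^ (k - 1) := by
    intro k
    have hTint : Integrable (fun ω => Real.exp (-1 * T k ω)) := by
      refine (integrable_const (1:ℝ)).mono' (((hTmeas k).const_mul (-1)).exp).aestronglyMeasurable ?_
      refine Filter.Eventually.of_forall fun ω => ?_
      rw [Real.norm_eq_abs, abs_of_pos (Real.exp_pos _)]
      rw [Real.exp_le_one_iff]
      have : 0 ≤ T k ω := by
        rw [hTdef]; simp only [Finset.sum_apply]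
        exact Finset.sum_nonneg fun i _ => (hpos i ω).le
      linarith
    have hmgf : mgf (T k) volume (-1) = φ ^ (k - 1) := by
      rw [hTdef, hindep.mgf_sum hmeas (Finset.Ico 1 k)]
      have heach : ∀ i, mgf (w i) volume (-1) = φ := by
        intro i
        have hcomp := (hident i).comp (u := fun x : ℝ => Real.exp (-1 * x))
          (Real.measurable_exp.comp (measurable_id.const_mul (-1)))
        have := hcomp.integral_eq
        simpa [mgf, hφdef, Function.comp] using this
      rw [Finset.prod_congr rfl fun i _ => heach i, Finset.prod_const, Nat.card_Ico]
    have := measure_le_le_exp_mul_mgf (μ := volume) (X := T k) (a * ((k - 1 : ℕ) : ℝ))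
      (by norm_num : (-1 : ℝ) ≤ 0) hTint
    rw [hmgf] at this
    calc (volume {ω | T k ω ≤ a * ((k - 1 : ℕ) : ℝ)}).toReal
        ≤ Real.exp (-(-1) * (a * ((k - 1 : ℕ) : ℝ))) * φ ^ (k - 1) := this
      _ = ρ ^ (k - 1) := by
          rw [hρdef, mul_pow, ← Real.exp_nat_mul]
          ring_nf
  -- the integrand functions
  set f : ℕ → Ω → ℝ := fun k ω => (w 0 ω / μ - (k:ℝ) * w 0 ω / S k ω) ^ 2 with hfdef
  have hfmeas : ∀ k, Measurable (f k) := fun k =>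
    ((hw0meas.div_const μ).sub ((hw0meas.const_mul (k:ℝ)).div (hSmeas k))).pow_const 2
  have hf_nonneg : ∀ k ω, 0 ≤ f k ω := fun k ω => by
    simp only [hfdef]; exact sq_nonneg _
  -- the dominating function
  set g : Ω → ℝ := fun ω => 2 * (w 0 ω / μ)^2 + 8 * (w 0 ω / a)^2 with hgdef
  have hgmeas : Measurable g := by
    apply Measurable.add
    · exact ((hw0meas.div_const μ).pow_const 2).const_mul 2
    · exact ((hw0meas.div_const a).pow_const 2).const_mul 8
  have hgnonneg : ∀ ω, 0 ≤ g ω := fun ω => by simp only [hgdef]; positivity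
  have hg_int : Integrable g := by
    have hgeq : g = fun ω => (2/μ^2) * (w 0 ω)^2 + (8/a^2) * (w 0 ω)^2 := by
      funext ω; simp only [hgdef, div_pow]; ring
    rw [hgeq]; exact (hL2.const_mul _).add (hL2.const_mul _)
  -- almost sure convergence via SLLN
  have hslln := strong_law_ae w hInt (fun i j hij => hindep.indepFun hij) hident
  have hae : ∀ᵐ ω, Tendsto (fun k => f k ω) atTop (nhds 0) := by
    filter_upwards [hslln] with ω hω
    have hB : Tendsto (fun k : ℕ => (k:ℝ) * w 0 ω / S k ω) atTop (nhds (w 0 ω / μ)) := by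
      have h1 : Tendsto (fun k : ℕ => w 0 ω / ((k:ℝ)⁻¹ * S k ω)) atTop (nhds (w 0 ω / μ)) := by
        refine tendsto_const_nhds.div ?_ hμpos.ne'
        simpa [smul_eq_mul, hSdef] using hω
      refine Tendsto.congr' ?_ h1
      filter_upwards [eventually_ge_atTop 1] with k hk
      have hk0 : (k:ℝ) ≠ 0 := Nat.cast_ne_zero.mpr (by omega)
      have hS0 : S k ω ≠ 0 := (hSpos k hk ω).ne'
      field_simp
    have h2 : Tendsto (fun k => f k ω) atTop (nhds ((w 0 ω / μ - w 0 ω / μ)^2)) := by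
      simp only [hfdef]
      exact (tendsto_const_nhds.sub hB).pow 2
    simpa using h2
  -- events
  set E : ℕ → Set Ω := fun k => {ω | T k ω ≤ a * ((k - 1 : ℕ) : ℝ)} with hEdef
  have hEmeas : ∀ k, MeasurableSet (E k) := fun k =>
    measurableSet_le (hTmeas k) measurable_const
  -- pointwise estimate
  have hptwise : ∀ k, 2 ≤ k → ∀ ω,
      f k ω ≤ min (f k ω) (g ω) + (E k).indicator (fun _ => 2*(k:ℝ)^2) ω := by
    intro k hk ω
    have hw0 := hpos 0 ω
    have hS := hSpos k (by omega) ω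
    have hwS := hw0leS k (by omega) ω
    have hind0 : 0 ≤ (E k).indicator (fun _ => 2*(k:ℝ)^2) ω :=
      Set.indicator_nonneg (fun _ _ => by positivity) ω
    have hfg : f k ω ≤ g ω + (E k).indicator (fun _ => 2*(k:ℝ)^2) ω := by
      have hB0 : 0 ≤ (k:ℝ) * w 0 ω / S k ω := by positivity
      have hAB : f k ω ≤ 2*(w 0 ω / μ)^2 + 2*((k:ℝ) * w 0 ω / S k ω)^2 := by
        simp only [hfdef]
        nlinarith [sq_nonneg (w 0 ω / μ + (k:ℝ) * w 0 ω / S k ω)]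
      by_cases hE : ω ∈ E k
      · have hBk : (k:ℝ) * w 0 ω / S k ω ≤ (k:ℝ) := by
          rw [div_le_iff₀ hS]
          exact mul_le_mul_of_nonneg_left hwS (by positivity)
        have hB2 : ((k:ℝ) * w 0 ω / S k ω)^2 ≤ (k:ℝ)^2 :=
          pow_le_pow_left₀ hB0 hBk 2
        rw [Set.indicator_of_mem hE]
        have h8 : 0 ≤ 8*(w 0 ω / a)^2 := by positivity
        simp only [hgdef]
        linarith
      · have hTb : a * ((k - 1 : ℕ) : ℝ) < T k ω := not_le.mp hE
        have hcast : ((k - 1 : ℕ) : ℝ) = (k:ℝ) - 1 := by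
          rw [Nat.cast_sub (by omega)]; simp
        have hk2 : (k:ℝ)/2 ≤ ((k - 1 : ℕ) : ℝ) := by
          rw [hcast]
          have : (2:ℝ) ≤ (k:ℝ) := by exact_mod_cast hk
          linarith
        have hSb : a * ((k:ℝ)/2) < S k ω := by
          have hsplit := hST k (by omega) ω
          have := mul_le_mul_of_nonneg_left hk2 hapos.le
          linarith
        have hkR : (0:ℝ) < (k:ℝ) := by
          have : 0 < k := by omega
          exact_mod_cast this
        have hBb : (k:ℝ) * w 0 ω / S k ω ≤ 2 * (w 0 ω / a) := by
          have step : (k:ℝ) * w 0 ω / S k ω ≤ (k:ℝ) * w 0 ω / (a * ((k:ℝ)/2)) :=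
            div_le_div_of_nonneg_left (by positivity) (by positivity) hSb.le
          have heq : (k:ℝ) * w 0 ω / (a * ((k:ℝ)/2)) = 2 * (w 0 ω / a) := by
            field_simp
          linarith
        have hB2 : ((k:ℝ) * w 0 ω / S k ω)^2 ≤ (2 * (w 0 ω / a))^2 :=
          pow_le_pow_left₀ hB0 hBb 2
        have hexp : (2 * (w 0 ω / a))^2 = 4 * (w 0 ω / a)^2 := by ring
        simp only [hgdef]
        linarith
    rcases le_total (f k ω) (g ω) with h | h
    · rw [min_eq_left h]; linarith
    · rw [min_eq_right h]; linarith
  -- integrability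
  have hmin_int : ∀ k, Integrable (fun ω => min (f k ω) (g ω)) := by
    intro k
    refine hg_int.mono' ((hfmeas k).min hgmeas).aestronglyMeasurable ?_
    refine Filter.Eventually.of_forall fun ω => ?_
    rw [Real.norm_eq_abs, abs_of_nonneg (le_min (hf_nonneg k ω) (hgnonneg ω))]
    exact min_le_right _ _
  have hind_int : ∀ k, Integrable ((E k).indicator (fun _ => 2*(k:ℝ)^2)) :=
    fun k => (integrable_const _).indicator (hEmeas k)
  have hf_int : ∀ k, 2 ≤ k → Integrable (f k) := by
    intro k hk
    refine (hg_int.add (hind_int k)).mono' (hfmeas k).aestronglyMeasurable ?_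
    refine Filter.Eventually.of_forall fun ω => ?_
    rw [Real.norm_eq_abs, abs_of_nonneg (hf_nonneg k ω)]
    calc f k ω ≤ min (f k ω) (g ω) + (E k).indicator (fun _ => 2*(k:ℝ)^2) ω := hptwise k hk ω
      _ ≤ g ω + (E k).indicator (fun _ => 2*(k:ℝ)^2) ω :=
          add_le_add_left (min_le_right _ _) _
  -- integral bound
  have hintbound : ∀ k, 2 ≤ k →
      (∫ ω, f k ω) ≤ (∫ ω, min (f k ω) (g ω)) + 2*(k:ℝ)^2 * ρ^(k-1) := by
    intro k hk
    have h1 : (∫ ω, f k ω) ≤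
        ∫ ω, (min (f k ω) (g ω) + (E k).indicator (fun _ => 2*(k:ℝ)^2) ω) :=
      integral_mono (hf_int k hk) ((hmin_int k).add (hind_int k)) (hptwise k hk)
    rw [integral_add (hmin_int k) (hind_int k)] at h1
    have h2 : (∫ ω, (E k).indicator (fun _ => 2*(k:ℝ)^2) ω)
        = (volume (E k)).toReal * (2*(k:ℝ)^2) := by
      rw [integral_indicator_const _ (hEmeas k)]; simp [smul_eq_mul, Measure.real]
    rw [h2] at h1
    have h4 : (volume (E k)).toReal * (2*(k:ℝ)^2) ≤ 2*(k:ℝ)^2 * ρ^(k-1) := by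
      rw [mul_comm]
      exact mul_le_mul_of_nonneg_left (hchernoff k) (by positivity)
    linarith
  -- DCT for the min part
  have hM : Tendsto (fun k => ∫ ω, min (f k ω) (g ω)) atTop (nhds 0) := by
    have hlim : ∀ᵐ ω, Tendsto (fun k => min (f k ω) (g ω)) atTop (nhds ((fun _ : Ω => (0:ℝ)) ω)) := by
      filter_upwards [hae] with ω hω
      have := hω.min (tendsto_const_nhds (x := g ω) (f := atTop))
      simpa [min_eq_left (hgnonneg ω)] using this
    have hbd : ∀ k, ∀ᵐ ω, ‖min (f k ω) (g ω)‖ ≤ g ω := by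
      intro k
      refine Filter.Eventually.of_forall fun ω => ?_
      rw [Real.norm_eq_abs, abs_of_nonneg (le_min (hf_nonneg k ω) (hgnonneg ω))]
      exact min_le_right _ _
    have := tendsto_integral_of_dominated_convergence g
      (fun k => ((hfmeas k).min hgmeas).aestronglyMeasurable) hg_int hbd hlim
    simpa using this
  -- geometric term tends to zero
  have hgeo : Tendsto (fun k : ℕ => 2*(k:ℝ)^2 * ρ^(k-1)) atTop (nhds 0) := by
    have h3 := (tendsto_pow_const_mul_const_pow_of_lt_one 2 hρpos.le hρlt).const_mul (2/ρ)
    rw [mul_zero] at h3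
    refine Tendsto.congr' ?_ h3
    filter_upwards [eventually_ge_atTop 1] with k hk
    have hpow : ρ^k = ρ^(k-1) * ρ := by
      rw [← pow_succ]; congr 1; omega
    rw [hpow]
    field_simp
  -- rewrite the goal
  have hgoaleq : (fun k : ℕ =>
      ∫ ω, (w 0 ω / μ - (k : ℝ) * w 0 ω / ∑ i ∈ Finset.range k, w i ω) ^ 2)
      = fun k => ∫ ω, f k ω := by
    funext k
    refine congrArg _ (funext fun ω => ?_)
    simp only [hfdef, hSdef]
  rw [hgoaleq]
  refine tendsto_of_tendsto_of_tendsto_of_le_of_le' tendsto_const_nhds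
    (by simpa using hM.add hgeo) ?_ ?_
  · exact Filter.Eventually.of_forall fun k => integral_nonneg fun ω => hf_nonneg k ω
  · filter_upwards [eventually_ge_atTop 2] with k hk
    exact hintbound k hk
end

section
/- There exists a function h : ℕ → [0,∞) with h(k) → 0 as k → ∞, depending only on the law of w₁, such that for every integer k ≥ 2 and every pair of functions g₁, g₂ : [0,∞) → ℝ where g_i is Lipschitz with constant G_i ≥ 1 and satisfies sup |g_i| ≤ 1 (i = 1, 2), one has | Cov( g₁(k·p₁^{(k)}), g₂(k·p₂^{(k)}) ) | ≤ max{G₁, G₂, G₁·G₂}·h(k). -/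
open MeasureTheory ProbabilityTheory Filter

private lemma int_of_bdd {Ω : Type*} [MeasureSpace Ω] [IsProbabilityMeasure (volume : Measure Ω)]
    {f : Ω → ℝ} (hf : AEStronglyMeasurable f volume) {C : ℝ} (h : ∀ ω, |f ω| ≤ C) :
    Integrable f :=
  (integrable_const C).mono' hf (Eventually.of_forall (by simpa [Real.norm_eq_abs] using h))

private lemma abs_int_le {Ω : Type*} [MeasureSpace Ω] (f : Ω → ℝ) :
    |∫ ω, f ω| ≤ ∫ ω, |f ω| := by
  simpa [Real.norm_eq_abs] using norm_integral_le_integral_norm (μ := volume) f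

private lemma int_abs_le_one {Ω : Type*} [MeasureSpace Ω]
    [IsProbabilityMeasure (volume : Measure Ω)] {f : Ω → ℝ}
    (hf : AEStronglyMeasurable f volume) (h : ∀ ω, |f ω| ≤ 1) : |∫ ω, f ω| ≤ 1 := by
  refine (abs_int_le f).trans ?_
  calc ∫ ω, |f ω| ≤ ∫ _ω, (1 : ℝ) := by
        exact integral_mono (int_of_bdd hf h).abs (integrable_const 1) fun ω => h ω
    _ = 1 := by simp

set_option maxHeartbeats 1000000 in
/-- for i.i.d. strictly positive `(w_i)` with finite second moment, there
exists `h : ℕ → [0,∞)` with `h(k) → 0` (depending only on the law of `w₁`) such that for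
every `k ≥ 2` and all `g₁, g₂ : [0,∞) → ℝ` that are Lipschitz with constants `G₁, G₂ ≥ 1`
and bounded by `1` in sup norm,
`|Cov(g₁(k·p₁^{(k)}), g₂(k·p₂^{(k)}))| ≤ max{G₁, G₂, G₁·G₂}·h(k)`,
where `p_j^{(k)} = w_j/(w₁ + … + w_k)` and `Cov(X,Y) = E[XY] − E[X]·E[Y]`. -/
theorem stmt16 {Ω : Type*} [MeasureSpace Ω] [IsProbabilityMeasure (volume : Measure Ω)]
    (w : ℕ → Ω → ℝ) (hmeas : ∀ i, Measurable (w i))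
    (hindep : iIndepFun w volume)
    (hident : ∀ i, IdentDistrib (w i) (w 0) volume volume)
    (hpos : ∀ i ω, 0 < w i ω)
    (hL2 : Integrable (fun ω => (w 0 ω) ^ 2)) :
    ∃ h : ℕ → ℝ, (∀ k, 0 ≤ h k) ∧ Tendsto h atTop (nhds 0) ∧
      ∀ k : ℕ, 2 ≤ k → ∀ g₁ g₂ : ℝ → ℝ, ∀ G₁ G₂ : ℝ, 1 ≤ G₁ → 1 ≤ G₂ →
        LipschitzOnWith (Real.toNNReal G₁) g₁ (Set.Ici 0) →
        LipschitzOnWith (Real.toNNReal G₂) g₂ (Set.Ici 0) →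
        (∀ y : ℝ, 0 ≤ y → |g₁ y| ≤ 1) → (∀ y : ℝ, 0 ≤ y → |g₂ y| ≤ 1) →
        |(∫ ω, g₁ ((k : ℝ) * w 0 ω / ∑ i ∈ Finset.range k, w i ω) *
              g₂ ((k : ℝ) * w 1 ω / ∑ i ∈ Finset.range k, w i ω)) -
            (∫ ω, g₁ ((k : ℝ) * w 0 ω / ∑ i ∈ Finset.range k, w i ω)) *
              (∫ ω, g₂ ((k : ℝ) * w 1 ω / ∑ i ∈ Finset.range k, w i ω))| ≤
          max (max G₁ G₂) (G₁ * G₂) * h k := by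
  have hw0int : Integrable (w 0) :=
    ((memLp_two_iff_integrable_sq (hmeas 0).aestronglyMeasurable).2 hL2).integrable one_le_two
  set μ0 : ℝ := ∫ ω, w 0 ω with hμ0
  have μ0pos : 0 < μ0 := by
    rw [hμ0, integral_pos_iff_support_of_nonneg (fun ω => (hpos 0 ω).le) hw0int]
    have : Function.support (w 0) = Set.univ := by
      ext ω; simp [Function.mem_support, (hpos 0 ω).ne']
    rw [this]; simp
  set S : ℕ → Ω → ℝ := fun k ω => ∑ i ∈ Finset.range k, w i ω with hS
  have hSmeas : ∀ k, Measurable (S k) := fun k => Finset.measurable_sum _ fun i _ => hmeas i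
  have hSpos : ∀ k ω, 1 ≤ k → 0 < S k ω := fun k ω hk =>
    Finset.sum_pos (fun i _ => hpos i ω) (Finset.nonempty_range_iff.mpr (by omega))
  set F : ℕ → ℕ → Ω → ℝ :=
    fun j k ω => min 2 |(k : ℝ) * w j ω / S k ω - w j ω / μ0| with hF
  have hFmeas : ∀ j k, Measurable (F j k) := fun j k =>
    measurable_const.min (((measurable_const.mul (hmeas j)).div (hSmeas k)).sub
      ((hmeas j).div_const μ0)).abs
  have hFnonneg : ∀ j k ω, 0 ≤ F j k ω := fun j k ω => le_min (by norm_num) (abs_nonneg _)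
  have hFle : ∀ j k ω, F j k ω ≤ 2 := fun j k ω => min_le_left _ _
  have hFint : ∀ j k, Integrable (F j k) := fun j k =>
    int_of_bdd (hFmeas j k).aestronglyMeasurable
      (C := 2) (fun ω => by rw [abs_of_nonneg (hFnonneg j k ω)]; exact hFle j k ω)
  set T : ℕ → ℕ → ℝ := fun j k => ∫ ω, F j k ω with hT
  have hTnonneg : ∀ j k, 0 ≤ T j k := fun j k => integral_nonneg fun ω => hFnonneg j k ω
  have hsl : ∀ᵐ ω, Tendsto (fun n : ℕ => S n ω / n) atTop (nhds μ0) := by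
    have := strong_law_ae_real w hw0int (fun i j hij => hindep.indepFun hij) hident
    simpa [hS] using this
  have hTtendsto : ∀ j, Tendsto (fun k => T j k) atTop (nhds 0) := by
    intro j
    have h0 : (0 : ℝ) = ∫ (_ : Ω), (0 : ℝ) := by simp
    rw [hT, h0]
    apply tendsto_integral_of_dominated_convergence (bound := fun _ => 2)
    · exact fun k => (hFmeas j k).aestronglyMeasurable
    · exact integrable_const 2
    · exact fun k => Eventually.of_forall fun ω => by
        rw [Real.norm_eq_abs, abs_of_nonneg (hFnonneg j k ω)]; exact hFle j k ω
    · filter_upwards [hsl] with ω hω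
      have h1 : Tendsto (fun k : ℕ => w j ω * (S k ω / k)⁻¹) atTop
          (nhds (w j ω * μ0⁻¹)) := tendsto_const_nhds.mul (hω.inv₀ μ0pos.ne')
      have h2 : Tendsto (fun k : ℕ => (k : ℝ) * w j ω / S k ω) atTop
          (nhds (w j ω / μ0)) := by
        rw [div_eq_mul_inv (w j ω) μ0]
        refine h1.congr' ?_
        filter_upwards [eventually_ge_atTop 1] with k hk
        have hk0 : (k : ℝ) ≠ 0 := Nat.cast_ne_zero.2 (by omega)
        have hs0 : S k ω ≠ 0 := (hSpos k ω hk).ne'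
        field_simp
      have h3 : Tendsto (fun k : ℕ => F j k ω) atTop (nhds (min 2 |w j ω / μ0 - w j ω / μ0|)) := by
        exact tendsto_const_nhds.min ((h2.sub tendsto_const_nhds).abs)
      simpa using h3
  refine ⟨fun k => 2 * T 0 k + 2 * T 1 k, fun k => by positivity, ?_, ?_⟩
  · have := ((hTtendsto 0).const_mul 2).add ((hTtendsto 1).const_mul 2)
    simpa using this
  intro k hk g₁ g₂ G₁ G₂ hG₁ hG₂ hlip₁ hlip₂ hb₁ hb₂
  have hG₁0 : (0:ℝ) ≤ G₁ := by linarith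
  have hG₂0 : (0:ℝ) ≤ G₂ := by linarith
  set t₁ : ℝ → ℝ := fun y => g₁ (max y 0) with ht₁
  set t₂ : ℝ → ℝ := fun y => g₂ (max y 0) with ht₂
  have hmem : ∀ y : ℝ, max y 0 ∈ Set.Ici (0:ℝ) := fun y => le_max_right y 0
  have ht₁c : Continuous t₁ :=
    hlip₁.continuousOn.comp_continuous (continuous_id.max continuous_const) hmem
  have ht₂c : Continuous t₂ :=
    hlip₂.continuousOn.comp_continuous (continuous_id.max continuous_const) hmem
  have ht₁b : ∀ y, |t₁ y| ≤ 1 := fun y => hb₁ _ (hmem y)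
  have ht₂b : ∀ y, |t₂ y| ≤ 1 := fun y => hb₂ _ (hmem y)
  have hlip : ∀ (g : ℝ → ℝ) (G : ℝ), 1 ≤ G → LipschitzOnWith (Real.toNNReal G) g (Set.Ici 0) →
      ∀ a b : ℝ, |g (max a 0) - g (max b 0)| ≤ G * |a - b| := by
    intro g G hG hl a b
    have h1 := hl.dist_le_mul _ (hmem a) _ (hmem b)
    rw [Real.dist_eq, Real.dist_eq, Real.coe_toNNReal G (by linarith)] at h1
    refine h1.trans ?_
    have h2 : |max a 0 - max b 0| ≤ |a - b| := abs_max_sub_max_le_abs a b 0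
    nlinarith [abs_nonneg (a - b)]
  set X : Ω → ℝ := fun ω => (k : ℝ) * w 0 ω / S k ω with hX
  set Y : Ω → ℝ := fun ω => (k : ℝ) * w 1 ω / S k ω with hY
  set X' : Ω → ℝ := fun ω => w 0 ω / μ0 with hX'
  set Y' : Ω → ℝ := fun ω => w 1 ω / μ0 with hY'
  have hXpos : ∀ ω, 0 < X ω := fun ω => by
    have := hSpos k ω (by omega)
    have hk0 : (0:ℝ) < (k:ℝ) := Nat.cast_pos.2 (by omega)
    exact div_pos (mul_pos hk0 (hpos 0 ω)) this
  have hYpos : ∀ ω, 0 < Y ω := fun ω => by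
    have := hSpos k ω (by omega)
    have hk0 : (0:ℝ) < (k:ℝ) := Nat.cast_pos.2 (by omega)
    exact div_pos (mul_pos hk0 (hpos 1 ω)) this
  set A : Ω → ℝ := fun ω => t₁ (X ω) with hA
  set B : Ω → ℝ := fun ω => t₂ (Y ω) with hB
  set A' : Ω → ℝ := fun ω => t₁ (X' ω) with hA'
  set B' : Ω → ℝ := fun ω => t₂ (Y' ω) with hB'
  have hXm : Measurable X := (measurable_const.mul (hmeas 0)).div (hSmeas k)
  have hYm : Measurable Y := (measurable_const.mul (hmeas 1)).div (hSmeas k)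
  have hAm : Measurable A := ht₁c.measurable.comp hXm
  have hBm : Measurable B := ht₂c.measurable.comp hYm
  have hA'm : Measurable A' := ht₁c.measurable.comp ((hmeas 0).div_const μ0)
  have hB'm : Measurable B' := ht₂c.measurable.comp ((hmeas 1).div_const μ0)
  have hAb : ∀ ω, |A ω| ≤ 1 := fun ω => ht₁b _
  have hBb : ∀ ω, |B ω| ≤ 1 := fun ω => ht₂b _
  have hA'b : ∀ ω, |A' ω| ≤ 1 := fun ω => ht₁b _
  have hB'b : ∀ ω, |B' ω| ≤ 1 := fun ω => ht₂b _
  have hAint : Integrable A := int_of_bdd hAm.aestronglyMeasurable hAb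
  have hBint : Integrable B := int_of_bdd hBm.aestronglyMeasurable hBb
  have hA'int : Integrable A' := int_of_bdd hA'm.aestronglyMeasurable hA'b
  have hB'int : Integrable B' := int_of_bdd hB'm.aestronglyMeasurable hB'b
  have hABint : Integrable (fun ω => A ω * B ω) :=
    int_of_bdd (hAm.mul hBm).aestronglyMeasurable (C := 1) fun ω => by
      rw [abs_mul]
      nlinarith [hAb ω, hBb ω, abs_nonneg (A ω), abs_nonneg (B ω)]
  have hA'B'int : Integrable (fun ω => A' ω * B' ω) :=
    int_of_bdd (hA'm.mul hB'm).aestronglyMeasurable (C := 1) fun ω => by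
      rw [abs_mul]
      nlinarith [hA'b ω, hB'b ω, abs_nonneg (A' ω), abs_nonneg (B' ω)]
  have hiv : IndepFun (w 0) (w 1) := hindep.indepFun (by norm_num)
  have hindAB : IndepFun A' B' := by
    have := hiv.comp (φ := fun y : ℝ => t₁ (y / μ0)) (ψ := fun y : ℝ => t₂ (y / μ0))
      (ht₁c.measurable.comp (measurable_id.div_const μ0))
      (ht₂c.measurable.comp (measurable_id.div_const μ0))
    exact this
  have hmul : ∫ ω, A' ω * B' ω = (∫ ω, A' ω) * ∫ ω, B' ω := by
    have := IndepFun.integral_mul_eq_mul_integral hindAB hA'int.1 hB'int.1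
    simpa using this
  have eA : ∀ ω, A ω = g₁ ((k : ℝ) * w 0 ω / ∑ i ∈ Finset.range k, w i ω) := fun ω => by
    rw [hA, ht₁]; simp only; rw [max_eq_left (hXpos ω).le]
  have eB : ∀ ω, B ω = g₂ ((k : ℝ) * w 1 ω / ∑ i ∈ Finset.range k, w i ω) := fun ω => by
    rw [hB, ht₂]; simp only; rw [max_eq_left (hYpos ω).le]
  simp only [← eA, ← eB]
  set d₁ : ℝ := ∫ ω, |A ω - A' ω| with hd₁
  set d₂ : ℝ := ∫ ω, |B ω - B' ω| with hd₂
  have hdiffint₁ : Integrable (fun ω => |A ω - A' ω|) := (hAint.sub hA'int).abs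
  have hdiffint₂ : Integrable (fun ω => |B ω - B' ω|) := (hBint.sub hB'int).abs
  have step1 : |(∫ ω, A ω * B ω) - ∫ ω, A' ω * B' ω| ≤ d₁ + d₂ := by
    rw [← integral_sub hABint hA'B'int]
    refine (abs_int_le _).trans ?_
    have hptwise : ∀ ω, |A ω * B ω - A' ω * B' ω| ≤ |A ω - A' ω| + |B ω - B' ω| := by
      intro ω
      have e : A ω * B ω - A' ω * B' ω = A ω * (B ω - B' ω) + B' ω * (A ω - A' ω) := by ring
      rw [e]
      refine (abs_add_le _ _).trans ?_
      rw [abs_mul, abs_mul]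
      nlinarith [hAb ω, hB'b ω, abs_nonneg (B ω - B' ω), abs_nonneg (A ω - A' ω)]
    calc ∫ ω, |A ω * B ω - A' ω * B' ω| ≤ ∫ ω, (|A ω - A' ω| + |B ω - B' ω|) :=
          integral_mono (hABint.sub hA'B'int).abs (hdiffint₁.add hdiffint₂) hptwise
      _ = d₁ + d₂ := integral_add hdiffint₁ hdiffint₂
  have step2 : |(∫ ω, A' ω) * (∫ ω, B' ω) - (∫ ω, A ω) * ∫ ω, B ω| ≤ d₁ + d₂ := by
    have hIA' : |∫ ω, A' ω| ≤ 1 := int_abs_le_one hA'm.aestronglyMeasurable hA'b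
    have hIB : |∫ ω, B ω| ≤ 1 := int_abs_le_one hBm.aestronglyMeasurable hBb
    have hdA : |(∫ ω, A' ω) - ∫ ω, A ω| ≤ d₁ := by
      rw [← integral_sub hA'int hAint]
      refine (abs_int_le _).trans (le_of_eq ?_)
      rw [hd₁]
      congr 1; funext ω; rw [abs_sub_comm]
    have hdB : |(∫ ω, B' ω) - ∫ ω, B ω| ≤ d₂ := by
      rw [← integral_sub hB'int hBint]
      refine (abs_int_le _).trans (le_of_eq ?_)
      rw [hd₂]
      congr 1; funext ω; rw [abs_sub_comm]
    have e : (∫ ω, A' ω) * (∫ ω, B' ω) - (∫ ω, A ω) * ∫ ω, B ω =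
        (∫ ω, A' ω) * ((∫ ω, B' ω) - ∫ ω, B ω) + (∫ ω, B ω) * ((∫ ω, A' ω) - ∫ ω, A ω) := by
      ring
    rw [e]
    refine (abs_add_le _ _).trans ?_
    rw [abs_mul, abs_mul]
    have h1 : |∫ ω, A' ω| * |(∫ ω, B' ω) - ∫ ω, B ω| ≤ 1 * |(∫ ω, B' ω) - ∫ ω, B ω| :=
      mul_le_mul_of_nonneg_right hIA' (abs_nonneg _)
    have h2 : |∫ ω, B ω| * |(∫ ω, A' ω) - ∫ ω, A ω| ≤ 1 * |(∫ ω, A' ω) - ∫ ω, A ω| :=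
      mul_le_mul_of_nonneg_right hIB (abs_nonneg _)
    linarith [hdA, hdB]
  have main : |(∫ ω, A ω * B ω) - (∫ ω, A ω) * ∫ ω, B ω| ≤ 2 * d₁ + 2 * d₂ := by
    have := abs_sub_le (∫ ω, A ω * B ω) (∫ ω, A' ω * B' ω) ((∫ ω, A ω) * ∫ ω, B ω)
    rw [hmul] at this step1
    linarith [step1, step2, this]
  have hd₁le : d₁ ≤ G₁ * T 0 k := by
    have hpt : ∀ ω, |A ω - A' ω| ≤ G₁ * F 0 k ω := by
      intro ω
      rcases le_total (2:ℝ) |X ω - X' ω| with h | h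
      · rw [hF]; simp only; rw [min_eq_left h]
        nlinarith [hAb ω, hA'b ω, abs_sub (A ω) (A' ω)]
      · rw [hF]; simp only; rw [min_eq_right h]
        exact hlip g₁ G₁ hG₁ hlip₁ (X ω) (X' ω)
    calc d₁ ≤ ∫ ω, G₁ * F 0 k ω :=
          integral_mono hdiffint₁ ((hFint 0 k).const_mul G₁) hpt
      _ = G₁ * T 0 k := integral_const_mul G₁ _
  have hd₂le : d₂ ≤ G₂ * T 1 k := by
    have hpt : ∀ ω, |B ω - B' ω| ≤ G₂ * F 1 k ω := by
      intro ω
      rcases le_total (2:ℝ) |Y ω - Y' ω| with h | h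
      · rw [hF]; simp only; rw [min_eq_left h]
        nlinarith [hBb ω, hB'b ω, abs_sub (B ω) (B' ω)]
      · rw [hF]; simp only; rw [min_eq_right h]
        exact hlip g₂ G₂ hG₂ hlip₂ (Y ω) (Y' ω)
    calc d₂ ≤ ∫ ω, G₂ * F 1 k ω :=
          integral_mono hdiffint₂ ((hFint 1 k).const_mul G₂) hpt
      _ = G₂ * T 1 k := integral_const_mul G₂ _
  have hG₁M : G₁ ≤ max (max G₁ G₂) (G₁ * G₂) := (le_max_left G₁ G₂).trans (le_max_left _ _)
  have hG₂M : G₂ ≤ max (max G₁ G₂) (G₁ * G₂) := (le_max_right G₁ G₂).trans (le_max_left _ _)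
  have hT0 := hTnonneg 0 k
  have hT1 := hTnonneg 1 k
  refine main.trans ?_
  nlinarith [hd₁le, hd₂le, mul_le_mul_of_nonneg_right hG₁M hT0,
    mul_le_mul_of_nonneg_right hG₂M hT1]
end
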